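/- arXiv:2110.07212 — 7 statements merged into one kernel-verified Lean document; each statement's English description precedes it below -/
import Mathlib

section
/- Let p > 2 be a real number and let v : ℝ → ℝ be a twice continuously differentiable nonnegative function, not identically zero, satisfying -v''(x) + v(x) = |v(x)|^(p-2)·v(x) for all x ∈ ℝ, with v and v' square-integrable on ℝ. Then there exists x₀ ∈ ℝ such that v(s) = (p/2)^(1/(p-2)) · (cosh((p-2)·(s - x₀)/2))^(-2/(p-2)) for all s ∈ ℝ. -/
open Real MeasureTheory Filter Topology

/-- If `|f'| ≤ K |f|` everywhere and `f a = 0`, then `f ≡ 0`. -/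
lemma gronwall_zero (f : ℝ → ℝ) (K : ℝ) (hf : Differentiable ℝ f)
    (hb : ∀ x, |deriv f x| ≤ K * |f x|) {a : ℝ} (ha : f a = 0) : ∀ x, f x = 0 := by
  have fwd : ∀ (g : ℝ → ℝ), Differentiable ℝ g → (∀ x, |deriv g x| ≤ K * |g x|) →
      ∀ (c : ℝ), g c = 0 → ∀ x, c ≤ x → g x = 0 := by
    intro g hg hgb c hc x hx
    have h := norm_le_gronwallBound_of_norm_deriv_right_le (f := g) (f' := deriv g)
      (δ := 0) (K := K) (ε := 0) (a := c) (b := x)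
      (hg.continuous.continuousOn)
      (fun t _ => (hg t).hasDerivAt.hasDerivWithinAt)
      (by simp [hc]) (fun t _ => by simpa using hgb t) x ⟨hx, le_rfl⟩
    rw [gronwallBound_ε0, zero_mul] at h
    simpa using le_antisymm h (abs_nonneg _)
  have h1 : ∀ x, a ≤ x → f x = 0 := fwd f hf hb a ha
  intro x
  rcases le_total a x with h | h
  · exact h1 x h
  · have hneg : Differentiable ℝ (fun y => f (-y)) := hf.comp (differentiable_neg)
    have hd : ∀ y, deriv (fun y => f (-y)) y = -(deriv f (-y)) := by
      intro y
      have := ((hf (-y)).hasDerivAt.comp y (hasDerivAt_neg y))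
      simpa [Function.comp_def] using this.deriv
    have := fwd (fun y => f (-y)) hneg (fun y => by rw [hd]; simpa using hb (-y))
      (-a) (by simpa using ha) (-x) (by linarith)
    simpa using this
lemma lim_zero_atTop (f : ℝ → ℝ) (hi : Integrable f) (h0 : ∀ x, 0 ≤ f x) {L : ℝ}
    (hl : Tendsto f atTop (𝓝 L)) : L = 0 := by
  by_contra hL
  have hL0 : 0 ≤ L := ge_of_tendsto' hl h0
  have hLpos : 0 < L := lt_of_le_of_ne hL0 (Ne.symm hL)
  obtain ⟨A, hA⟩ := (hl.eventually (eventually_gt_nhds (by linarith : L / 2 < L))).exists_forall_of_atTop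
  have hconst : Integrable (fun _ : ℝ => L / 2) (volume.restrict (Set.Ioi A)) := by
    refine Integrable.mono (hi.restrict (s := Set.Ioi A)) aestronglyMeasurable_const ?_
    refine (ae_restrict_iff' measurableSet_Ioi).mpr (ae_of_all _ fun x hx => ?_)
    rw [Real.norm_eq_abs, Real.norm_eq_abs, abs_of_nonneg (le_of_lt (by linarith [hLpos])),
      abs_of_nonneg (h0 x)]
    exact le_of_lt (hA x (le_of_lt hx))
  rcases integrable_const_iff.mp hconst with h | h
  · exact hL (by linarith)
  · have h := h.measure_univ_lt_top
    rw [Measure.restrict_apply_univ, Real.volume_Ioi] at h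
    exact (lt_irrefl _ h).elim

lemma lim_zero_atBot (f : ℝ → ℝ) (hi : Integrable f) (h0 : ∀ x, 0 ≤ f x) {L : ℝ}
    (hl : Tendsto f atBot (𝓝 L)) : L = 0 := by
  refine lim_zero_atTop (fun x => f (-x)) hi.comp_neg (fun x => h0 (-x)) ?_
  exact hl.comp tendsto_neg_atTop_atBot

set_option maxHeartbeats 2000000
theorem stmt3 (p : ℝ) (hp : 2 < p) (v : ℝ → ℝ)
    (hreg : ContDiff ℝ 2 v)
    (hnonneg : ∀ x, 0 ≤ v x)
    (hne : v ≠ 0)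
    (hode : ∀ x, -(deriv (deriv v) x) + v x = |v x| ^ (p - 2) * v x)
    (hv2 : Integrable (fun x => (v x) ^ 2))
    (hv'2 : Integrable (fun x => (deriv v x) ^ 2)) :
    ∃ x₀ : ℝ, ∀ s : ℝ,
      v s = (p / 2) ^ (1 / (p - 2)) *
        (Real.cosh ((p - 2) * (s - x₀) / 2)) ^ (-2 / (p - 2)) := by
  have hd1 : Differentiable ℝ v := hreg.differentiable (by norm_num)
  have hc2 : ContDiff ℝ 1 (deriv v) := ((contDiff_succ_iff_deriv (n := 1)).mp hreg).2.2
  have hd2 : Differentiable ℝ (deriv v) := hc2.differentiable one_ne_zero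
  have hcont2 : Continuous (deriv (deriv v)) := (contDiff_one_iff_deriv.mp hc2).2
  have hode' : ∀ x, deriv (deriv v) x = v x - (v x) ^ (p - 1) := by
    intro x
    have h := hode x
    rcases eq_or_lt_of_le (hnonneg x) with h0 | h0
    · rw [← h0] at h ⊢
      simp [Real.zero_rpow (show p - 1 ≠ 0 by linarith)] at h ⊢
      linarith
    · rw [abs_of_pos h0, ← Real.rpow_add_one (ne_of_gt h0)] at h
      have h2 : p - 2 + 1 = p - 1 := by ring
      rw [h2] at h
      linarith
  set E : ℝ → ℝ := fun x => (deriv v x) ^ 2 - (v x) ^ 2 + (2 / p) * (v x) ^ p with hE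
  have hEder : ∀ x, HasDerivAt E 0 x := by
    intro x
    have h1 : HasDerivAt (fun x => (deriv v x) ^ 2) (2 * deriv v x * deriv (deriv v) x) x := by
      simpa [mul_comm] using ((hd2 x).hasDerivAt.fun_pow 2)
    have h2 : HasDerivAt (fun x => (v x) ^ 2) (2 * v x * deriv v x) x := by
      simpa [mul_comm] using ((hd1 x).hasDerivAt.fun_pow 2)
    have h3 : HasDerivAt (fun x => (v x) ^ p) (p * (v x) ^ (p - 1) * deriv v x) x := by
      have := HasDerivAt.rpow_const (hd1 x).hasDerivAt (p := p) (Or.inr (by linarith))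
      convert this using 1; ring
    have := (h1.sub h2).add (h3.const_mul (2 / p))
    refine this.congr_deriv ?_
    rw [hode' x]
    field_simp
    ring
  have hEconst : ∀ x, E x = E 0 := by
    intro x
    exact is_const_of_deriv_eq_zero (fun y => (hEder y).differentiableAt)
      (fun y => (hEder y).deriv) x 0
  set g : ℝ → ℝ := fun x => 2 * v x * deriv v x with hgdef
  have hgcont : Continuous g := by
    exact (continuous_const.mul hd1.continuous).mul hd2.continuous
  have hg_int : Integrable g := by
    refine (hv2.add hv'2).mono hgcont.aestronglyMeasurable (ae_of_all _ fun x => ?_)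
    simp only [hgdef, Pi.add_apply, norm_mul, Real.norm_eq_abs, abs_two]
    rw [abs_of_nonneg (by positivity : (0:ℝ) ≤ v x ^ 2 + deriv v x ^ 2)]
    have := abs_nonneg (v x); have := abs_nonneg (deriv v x)
    have h2 := sq_abs (v x); have h3 := sq_abs (deriv v x)
    nlinarith [sq_nonneg (|v x| - |deriv v x|)]
  have hftc : ∀ x, (v x) ^ 2 = (v 0) ^ 2 + ∫ t in (0:ℝ)..x, g t := by
    intro x
    have := intervalIntegral.integral_eq_sub_of_hasDerivAt
      (f := fun t => (v t) ^ 2) (f' := g) (a := 0) (b := x)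
      (fun t _ => by simpa [hgdef, mul_comm] using ((hd1 t).hasDerivAt.fun_pow 2))
      (hgcont.intervalIntegrable 0 x)
    linarith [this]
  set M : ℝ := (v 0) ^ 2 + ∫ t, |g t| with hMdef
  have hbd : ∀ x, (v x) ^ 2 ≤ M := by
    intro x
    rw [hftc x]
    have h1 : |∫ t in (0:ℝ)..x, g t| ≤ ∫ t in Set.uIoc 0 x, |g t| := by
      simpa [Real.norm_eq_abs] using
        intervalIntegral.norm_integral_le_integral_norm_uIoc (f := g) (a := 0) (b := x) (μ := volume)
    have h2 : ∫ t in Set.uIoc 0 x, |g t| ≤ ∫ t, |g t| :=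
      setIntegral_le_integral hg_int.abs (ae_of_all _ fun t => abs_nonneg _)
    have := le_trans (le_abs_self _) (h1.trans h2)
    linarith
  have hM0 : 0 ≤ M := le_trans (sq_nonneg _) (hbd 0)
  set B : ℝ := Real.sqrt M with hBdef
  have hvB : ∀ x, v x ≤ B := by
    intro x
    have := hbd x
    nlinarith [Real.sq_sqrt hM0, Real.sqrt_nonneg M, hnonneg x]
  have hB0 : 0 ≤ B := Real.sqrt_nonneg M
  have hsplit : ∀ x, (v x) ^ p = (v x) ^ (p - 2) * (v x) ^ 2 := by
    intro x
    rcases eq_or_lt_of_le (hnonneg x) with h0 | h0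
    · rw [← h0]
      simp [Real.zero_rpow (show p ≠ 0 by linarith), Real.zero_rpow (show p - 2 ≠ 0 by linarith)]
    · rw [← Real.rpow_natCast (v x) 2, ← Real.rpow_add h0]
      norm_num
  have hvp_int : Integrable (fun x => (v x) ^ p) := by
    refine (hv2.const_mul (B ^ (p - 2))).mono
      ((hd1.continuous.rpow_const fun x => Or.inr (by linarith)).aestronglyMeasurable)
      (ae_of_all _ fun x => ?_)
    rw [Real.norm_eq_abs, Real.norm_eq_abs, abs_of_nonneg (Real.rpow_nonneg (hnonneg x) p),
      hsplit x]
    have h1 : (v x) ^ (p - 2) ≤ B ^ (p - 2) :=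
      Real.rpow_le_rpow (hnonneg x) (hvB x) (by linarith)
    calc (v x) ^ (p - 2) * (v x) ^ 2 ≤ B ^ (p - 2) * (v x) ^ 2 := by
          exact mul_le_mul_of_nonneg_right h1 (sq_nonneg _)
      _ ≤ |B ^ (p - 2) * (v x) ^ 2| := le_abs_self _
  have hEint : Integrable E := by
    rw [hE]
    exact (hv'2.sub hv2).add (hvp_int.const_mul (2 / p))
  have hE0 : E 0 = 0 := by
    have h1 : Integrable (fun _ : ℝ => E 0) := hEint.congr (ae_of_all _ fun x => hEconst x)
    rcases (integrable_const_iff).mp h1 with h | h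
    · exact h
    · exfalso; have h := h.measure_univ_lt_top; rw [Real.volume_univ] at h; exact (lt_irrefl _ h).elim
  have henergy : ∀ x, (deriv v x) ^ 2 = (v x) ^ 2 - (2 / p) * (v x) ^ p := by
    intro x
    have h1 := hEconst x
    rw [hE0] at h1
    rw [hE] at h1
    simp only at h1
    linarith
  -- |v'| ≤ |v|
  have hv'le : ∀ x, |deriv v x| ≤ |v x| := by
    intro x
    have h1 : (deriv v x) ^ 2 ≤ (v x) ^ 2 := by
      have := henergy x
      have h2 : 0 ≤ (2 / p) * (v x) ^ p :=
        mul_nonneg (by positivity) (Real.rpow_nonneg (hnonneg x) p)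
      linarith
    calc |deriv v x| = Real.sqrt ((deriv v x) ^ 2) := (Real.sqrt_sq_eq_abs _).symm
      _ ≤ Real.sqrt ((v x) ^ 2) := Real.sqrt_le_sqrt h1
      _ = |v x| := Real.sqrt_sq_eq_abs _
  -- positivity
  have hpos : ∀ x, 0 < v x := by
    by_contra hcon
    push_neg at hcon
    obtain ⟨a, ha⟩ := hcon
    have ha0 : v a = 0 := le_antisymm ha (hnonneg a)
    have hzero : ∀ x, (v x) ^ 2 = 0 := by
      refine gronwall_zero (fun x => (v x) ^ 2) 2 (fun x => ((hd1 x).pow 2)) (fun x => ?_)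
        (a := a) (by simp [ha0])
      have hder : deriv (fun x => (v x) ^ 2) x = 2 * v x * deriv v x := by
        simpa [mul_comm] using ((hd1 x).hasDerivAt.fun_pow 2).deriv
      rw [hder, abs_of_nonneg (sq_nonneg (v x) : (0:ℝ) ≤ (v x)^2)]
      calc |2 * v x * deriv v x| = 2 * |v x| * |deriv v x| := by
            rw [abs_mul, abs_mul, abs_two]
        _ ≤ 2 * |v x| * |v x| := by
            refine mul_le_mul_of_nonneg_left (hv'le x) (by positivity)
        _ = 2 * (v x) ^ 2 := by rw [← sq_abs]; ring
    exact hne (funext fun x => by have h1 := hzero x; have h2 := hnonneg x; simp only [Pi.zero_apply]; nlinarith)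
  -- decay at infinity
  have hlimT : Tendsto (fun x => (v x) ^ 2) atTop (𝓝 0) := by
    have h1 : Tendsto (fun x => (v 0) ^ 2 + ∫ t in (0:ℝ)..x, g t) atTop
        (𝓝 ((v 0) ^ 2 + ∫ t in Set.Ioi 0, g t)) :=
      (intervalIntegral_tendsto_integral_Ioi 0 hg_int.integrableOn tendsto_id).const_add _
    have h2 : Tendsto (fun x => (v x) ^ 2) atTop (𝓝 ((v 0) ^ 2 + ∫ t in Set.Ioi 0, g t)) :=
      h1.congr (fun x => (hftc x).symm)
    have h3 := lim_zero_atTop _ hv2 (fun x => sq_nonneg (v x)) h2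
    rwa [h3] at h2
  have hlimB : Tendsto (fun x => (v x) ^ 2) atBot (𝓝 0) := by
    have h1 : Tendsto (fun x => (v 0) ^ 2 + ∫ t in (0:ℝ)..x, g t) atBot
        (𝓝 ((v 0) ^ 2 + -∫ t in Set.Iic 0, g t)) := by
      have := intervalIntegral_tendsto_integral_Iic (0:ℝ) (f := g) hg_int.integrableOn tendsto_id
      have h2 : Tendsto (fun x : ℝ => ∫ t in x..(0:ℝ), g t) atBot (𝓝 (∫ t in Set.Iic 0, g t)) := this
      have h3 : Tendsto (fun x : ℝ => -∫ t in x..(0:ℝ), g t) atBot (𝓝 (-∫ t in Set.Iic 0, g t)) := h2.neg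
      have h4 : Tendsto (fun x : ℝ => ∫ t in (0:ℝ)..x, g t) atBot (𝓝 (-∫ t in Set.Iic 0, g t)) :=
        h3.congr (fun x => by rw [← intervalIntegral.integral_symm])
      exact h4.const_add _
    have h2 : Tendsto (fun x => (v x) ^ 2) atBot (𝓝 ((v 0) ^ 2 + -∫ t in Set.Iic 0, g t)) :=
      h1.congr (fun x => (hftc x).symm)
    have h3 := lim_zero_atBot _ hv2 (fun x => sq_nonneg (v x)) h2
    rwa [h3] at h2
  have hc : (0:ℝ) < (v 0) ^ 2 := by have := hpos 0; positivity
  obtain ⟨A₁, hA₁⟩ := (hlimT.eventually (eventually_lt_nhds hc)).exists_forall_of_atTop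
  obtain ⟨B₁, hB₁⟩ := (hlimB.eventually (eventually_lt_nhds hc)).exists_forall_of_atBot
  set a' : ℝ := min B₁ 0 with ha'
  set b' : ℝ := max A₁ 0 with hb'
  have h0mem : (0:ℝ) ∈ Set.Icc a' b' := ⟨min_le_right _ _, le_max_right _ _⟩
  obtain ⟨x0, hx0mem, hx0max⟩ := (isCompact_Icc (a := a') (b := b')).exists_isMaxOn
    ⟨0, h0mem⟩ hd1.continuous.continuousOn
  have hglobal : ∀ y, v y ≤ v x0 := by
    intro y
    by_cases hy : y ∈ Set.Icc a' b'
    · exact hx0max hy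
    · have hsmall : (v y) ^ 2 < (v 0) ^ 2 := by
        rcases not_and_or.mp (fun h => hy ⟨h.1, h.2⟩) with h | h
        · push_neg at h
          exact hB₁ y (by rw [ha'] at h; exact le_of_lt (lt_of_lt_of_le h (min_le_left _ _)))
        · push_neg at h
          exact hA₁ y (by rw [hb'] at h; exact le_of_lt (lt_of_le_of_lt (le_max_left _ _) h))
      have : v y < v 0 := by nlinarith [hnonneg y, hnonneg 0]
      exact le_of_lt (lt_of_lt_of_le this (hx0max h0mem))
  have hloc : IsLocalMax v x0 := by
    have : IsMaxOn v Set.univ x0 := fun y _ => hglobal y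
    exact this.isLocalMax (by simp)
  have hder0 : deriv v x0 = 0 := hloc.deriv_eq_zero
  -- value at the max
  have hval : (v x0) ^ (p - 2) = p / 2 := by
    have h1 := henergy x0
    rw [hder0, hsplit x0] at h1
    have h2 : (0:ℝ) < (v x0) ^ 2 := by have := hpos x0; positivity
    have h3 : (2 / p) * (v x0) ^ (p - 2) = 1 := by
      have hne2 : (v x0)^2 ≠ 0 := ne_of_gt h2
      field_simp at h1 ⊢
      nlinarith [h1]
    have hp0 : p ≠ 0 := by linarith
    field_simp at h3
    linarith
  have hvx0 : v x0 = (p / 2) ^ (1 / (p - 2)) := by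
    rw [← hval, ← Real.rpow_mul (hnonneg x0), mul_one_div,
      div_self (by linarith : p - 2 ≠ 0), Real.rpow_one]
  refine ⟨x0, ?_⟩
  have hp0 : (0:ℝ) < p := by linarith
  set α : ℝ := (p - 2) / 2 with hαdef
  have hα : 0 < α := by rw [hαdef]; linarith
  have hpα : p = 2 * α + 2 := by rw [hαdef]; ring
  set u : ℝ → ℝ := fun s => (v s) ^ (-α) with hudef
  set u1 : ℝ → ℝ := fun x => -α * (v x) ^ (-α - 1) * deriv v x with hu1def
  have hu1 : ∀ x, HasDerivAt u (u1 x) x := by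
    intro x
    have h := HasDerivAt.rpow_const (hd1 x).hasDerivAt (p := -α) (Or.inl (ne_of_gt (hpos x)))
    convert h using 1
    rw [hu1def]; ring
  have key : ∀ x,
      -α * (((-α - 1) * (v x) ^ (-α - 2) * deriv v x) * deriv v x
        + (v x) ^ (-α - 1) * deriv (deriv v) x) = α ^ 2 * u x := by
    intro x
    have hy : (0:ℝ) < v x := hpos x
    have e1 : (((-α - 1) * (v x) ^ (-α - 2) * deriv v x) * deriv v x)
        = (-α - 1) * (v x) ^ (-α - 2) * ((v x) ^ 2 - (2 / p) * (v x) ^ p) := by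
      rw [← henergy x]; ring
    rw [e1, hode' x]
    have m1 : (v x) ^ (-α - 2) * (v x) ^ (2:ℕ) = (v x) ^ (-α) := by
      rw [← Real.rpow_natCast (v x) 2, ← Real.rpow_add hy]; norm_num
    have m2 : (v x) ^ (-α - 2) * (v x) ^ p = (v x) ^ α := by
      rw [← Real.rpow_add hy]; congr 1; rw [hpα]; ring
    have m3 : (v x) ^ (-α - 1) * v x = (v x) ^ (-α) := by
      rw [← Real.rpow_add_one (ne_of_gt hy)]; congr 1; ring
    have m4 : (v x) ^ (-α - 1) * (v x) ^ (p - 1) = (v x) ^ α := by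
      rw [← Real.rpow_add hy]; congr 1; rw [hpα]; ring
    have expand : -α * ((-α - 1) * (v x) ^ (-α - 2) * ((v x) ^ 2 - (2 / p) * (v x) ^ p)
        + (v x) ^ (-α - 1) * (v x - (v x) ^ (p - 1)))
        = -α * ((-α - 1) * ((v x) ^ (-α - 2) * (v x) ^ (2:ℕ))
            - (-α - 1) * (2 / p) * ((v x) ^ (-α - 2) * (v x) ^ p)
            + ((v x) ^ (-α - 1) * v x) - ((v x) ^ (-α - 1) * (v x) ^ (p - 1))) := by
      ring
    rw [expand, m1, m2, m3, m4, hudef]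
    have hα1 : α + 1 ≠ 0 := by positivity
    rw [hpα]
    field_simp
    ring
  have hu2 : ∀ x, HasDerivAt u1 (α ^ 2 * u x) x := by
    intro x
    have h1 : HasDerivAt (fun y => (v y) ^ (-α - 1)) ((-α - 1) * (v x) ^ (-α - 2) * deriv v x) x := by
      have h := HasDerivAt.rpow_const (hd1 x).hasDerivAt (p := -α - 1) (Or.inl (ne_of_gt (hpos x)))
      have he : -α - 1 - 1 = -α - 2 := by ring
      rw [he] at h
      convert h using 1; ring
    have h2 : HasDerivAt (fun y => (v y) ^ (-α - 1) * deriv v y)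
        (((-α - 1) * (v x) ^ (-α - 2) * deriv v x) * deriv v x
          + (v x) ^ (-α - 1) * deriv (deriv v) x) x := h1.mul (hd2 x).hasDerivAt
    have h3 := h2.const_mul (-α)
    have h4 : HasDerivAt u1 (-α * (((-α - 1) * (v x) ^ (-α - 2) * deriv v x) * deriv v x
          + (v x) ^ (-α - 1) * deriv (deriv v) x)) x := by
      refine HasDerivAt.congr_of_eventuallyEq h3 ?_
      filter_upwards with y
      rw [hu1def]; ring
    rw [key x] at h4
    exact h4
  -- comparison function
  set c : ℝ := (2 / p) ^ ((1:ℝ)/2) with hcdef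
  set w : ℝ → ℝ := fun s => c * Real.cosh (α * (s - x0)) with hwdef
  set w1 : ℝ → ℝ := fun s => c * (α * Real.sinh (α * (s - x0))) with hw1def
  have hinner : ∀ x : ℝ, HasDerivAt (fun s => α * (s - x0)) α x := by
    intro x
    simpa using ((hasDerivAt_id x).sub_const x0).const_mul α
  have hw1 : ∀ x, HasDerivAt w (w1 x) x := by
    intro x
    have := ((hinner x).cosh).const_mul c
    refine this.congr_deriv ?_
    rw [hw1def]; ring
  have hw2 : ∀ x, HasDerivAt w1 (α ^ 2 * w x) x := by
    intro x
    have := (((hinner x).sinh).const_mul α).const_mul c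
    refine this.congr_deriv ?_
    rw [hwdef]; ring
  -- initial conditions
  have hc0 : 0 ≤ c := Real.rpow_nonneg (by positivity) _
  have hp2ne : p - 2 ≠ 0 := by linarith
  have hceq : c = (p / 2) ^ (-(1/2) : ℝ) := by
    rw [hcdef, Real.rpow_neg (by positivity : (0:ℝ) ≤ p / 2)]
    rw [show (2 / p) = (p / 2)⁻¹ by rw [inv_div]]
    rw [Real.inv_rpow (by positivity : (0:ℝ) ≤ p / 2)]
  have hux0 : u x0 = c := by
    show (v x0) ^ (-α) = c
    rw [hvx0, ← Real.rpow_mul (by positivity : (0:ℝ) ≤ p / 2), hceq]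
    congr 1
    rw [hαdef]
    field_simp
  have hwx0 : w x0 = c := by
    show c * Real.cosh (α * (x0 - x0)) = c
    simp
  have hu1x0 : u1 x0 = 0 := by
    show -α * (v x0) ^ (-α - 1) * deriv v x0 = 0
    rw [hder0]; ring
  have hw1x0 : w1 x0 = 0 := by
    show c * (α * Real.sinh (α * (x0 - x0))) = 0
    simp
  -- Gronwall uniqueness
  set G : ℝ → ℝ := fun x => (u x - w x) ^ 2 + (u1 x - w1 x) ^ 2 with hGdef
  have hg1 : ∀ x, HasDerivAt (fun s => u s - w s) (u1 x - w1 x) x :=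
    fun x => (hu1 x).sub (hw1 x)
  have hg2 : ∀ x, HasDerivAt (fun s => u1 s - w1 s) (α ^ 2 * (u x - w x)) x := by
    intro x
    have := (hu2 x).sub (hw2 x)
    refine this.congr_deriv ?_
    ring
  have hGder : ∀ x, HasDerivAt G
      ((1 + α ^ 2) * (2 * (u x - w x) * (u1 x - w1 x))) x := by
    intro x
    have h1 := ((hg1 x).pow 2).add ((hg2 x).pow 2)
    refine h1.congr_deriv ?_
    push_cast
    ring
  have hG0 : ∀ x, G x = 0 := by
    refine gronwall_zero G (1 + α ^ 2) (fun x => (hGder x).differentiableAt) (fun x => ?_)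
      (a := x0) (by rw [hGdef]; simp only; rw [hux0, hwx0, hu1x0, hw1x0]; ring)
    rw [(hGder x).deriv]
    have hGnn : (0:ℝ) ≤ G x := by rw [hGdef]; positivity
    rw [abs_of_nonneg hGnn, abs_mul, abs_of_nonneg (by positivity : (0:ℝ) ≤ 1 + α ^ 2)]
    refine mul_le_mul_of_nonneg_left ?_ (by positivity)
    rw [hGdef]
    simp only
    rw [abs_mul, abs_mul, abs_two]
    nlinarith [sq_nonneg (|u x - w x| - |u1 x - w1 x|), sq_abs (u x - w x),
      sq_abs (u1 x - w1 x), abs_nonneg (u x - w x), abs_nonneg (u1 x - w1 x)]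
  have huw : ∀ s, u s = w s := by
    intro s
    have h := hG0 s
    rw [hGdef] at h
    simp only at h
    have h2 : (u s - w s) ^ 2 = 0 := by nlinarith [sq_nonneg (u s - w s), sq_nonneg (u1 s - w1 s)]
    have := pow_eq_zero_iff (n := 2) (by norm_num) |>.mp h2
    linarith
  -- conversion back
  intro s
  have hcosh : (0:ℝ) < Real.cosh (α * (s - x0)) := Real.cosh_pos _
  have h1 : (u s) ^ (-α⁻¹) = v s := by
    show ((v s) ^ (-α)) ^ (-α⁻¹) = v s
    rw [← Real.rpow_mul (hnonneg s),
      show (-α) * (-α⁻¹) = 1 by field_simp, Real.rpow_one]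
  rw [← h1, huw s]
  show (c * Real.cosh (α * (s - x0))) ^ (-α⁻¹) = _
  rw [Real.mul_rpow hc0 (le_of_lt hcosh)]
  congr 1
  · rw [hceq, ← Real.rpow_mul (by positivity : (0:ℝ) ≤ p / 2)]
    congr 1
    rw [hαdef]
    field_simp
  · have harg : α * (s - x0) = (p - 2) * (s - x0) / 2 := by rw [hαdef]; ring
    have hexp : -α⁻¹ = -2 / (p - 2) := by rw [hαdef]; field_simp
    rw [harg, hexp]
end

section
/- Let p > 2 be a real number and define v̄ : ℝ → ℝ by v̄(s) = (p/2)^(1/(p-2)) · (cosh((p-2)·s/2))^(-2/(p-2)). Then ∫_ℝ v̄(s)^p ds = (p/2)^(2/(p-2)) · √π · Γ(2 + 2/(p-2)) / Γ(1/2 + p/(p-2)), where Γ denotes the Gamma function. -/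
open Real MeasureTheory

/-- Real Beta integral. -/
lemma real_beta_aux {u v : ℝ} (hu : 0 < u) (hv : 0 < v) :
    ∫ x in (0:ℝ)..1, x ^ (u - 1) * (1 - x) ^ (v - 1) =
      Real.Gamma u * Real.Gamma v / Real.Gamma (u + v) := by
  have key := Complex.Gamma_mul_Gamma_eq_betaIntegral
    (s := (u : ℂ)) (t := (v : ℂ)) (by simpa using hu) (by simpa using hv)
  have hbeta : Complex.betaIntegral (u : ℂ) (v : ℂ) =
      ((∫ x in (0:ℝ)..1, x ^ (u - 1) * (1 - x) ^ (v - 1) : ℝ) : ℂ) := by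
    rw [Complex.betaIntegral, ← intervalIntegral.integral_ofReal]
    refine intervalIntegral.integral_congr fun x hx => ?_
    rw [Set.uIcc_of_le (by norm_num : (0:ℝ) ≤ 1)] at hx
    have hx0 : (0:ℝ) ≤ x := hx.1
    have hx1 : (0:ℝ) ≤ 1 - x := by linarith [hx.2]
    push_cast
    rw [Complex.ofReal_cpow hx0, Complex.ofReal_cpow hx1]
    push_cast
    ring
  have hG : Real.Gamma (u + v) ≠ 0 := (Real.Gamma_pos_of_pos (by linarith)).ne'
  rw [hbeta] at key
  have key2 : Real.Gamma u * Real.Gamma v =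
      Real.Gamma (u + v) * ∫ x in (0:ℝ)..1, x ^ (u - 1) * (1 - x) ^ (v - 1) := by
    rw [← Complex.ofReal_add, Complex.Gamma_ofReal, Complex.Gamma_ofReal,
      Complex.Gamma_ofReal, ← Complex.ofReal_mul, ← Complex.ofReal_mul] at key
    exact_mod_cast key
  field_simp
  linarith [key2]

/-- Logistic substitution. -/
lemma beta_eq_cosh_aux (t : ℝ) :
    ∫ x in Set.Ioo (0:ℝ) 1, x ^ (t / 2 - 1) * (1 - x) ^ (t / 2 - 1) =
      ∫ s : ℝ, (2:ℝ) ^ (1 - t) * Real.cosh s ^ (-t) := by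
  have hpos : ∀ s : ℝ, 0 < 1 + Real.exp (-2 * s) := fun s => by positivity
  set f : ℝ → ℝ := fun s => (1 + Real.exp (-2 * s))⁻¹ with hf
  set f' : ℝ → ℝ := fun s => 2 * Real.exp (-2 * s) / (1 + Real.exp (-2 * s)) ^ 2 with hf'
  have hderiv : ∀ s ∈ Set.univ, HasDerivWithinAt f (f' s) Set.univ s := by
    intro s _
    have h1 : HasDerivAt (fun s : ℝ => -2 * s) (-2) s := by
      simpa using (hasDerivAt_id s).const_mul (-2)
    have h2 : HasDerivAt (fun s : ℝ => 1 + Real.exp (-2 * s))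
        (Real.exp (-2 * s) * (-2)) s := (h1.exp).const_add 1
    have h3 := h2.inv (hpos s).ne'
    have h4 : HasDerivAt f (f' s) s := by
      refine h3.congr_deriv ?_
      show _ = 2 * Real.exp (-2 * s) / (1 + Real.exp (-2 * s)) ^ 2
      ring
    exact h4.hasDerivWithinAt
  have hinj : Set.InjOn f Set.univ := by
    intro a _ b _ hab
    have h1 : 1 + Real.exp (-2 * a) = 1 + Real.exp (-2 * b) := by
      have := congrArg (·⁻¹) hab
      simpa [hf, inv_inv] using this
    have h2 : Real.exp (-2 * a) = Real.exp (-2 * b) := by linarith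
    have := Real.exp_injective h2
    linarith
  have himg : f '' Set.univ = Set.Ioo (0:ℝ) 1 := by
    rw [Set.image_univ]
    ext y
    simp only [Set.mem_range, Set.mem_Ioo]
    constructor
    · rintro ⟨s, rfl⟩
      refine ⟨inv_pos.2 (hpos s), ?_⟩
      have h1 : 1 < 1 + Real.exp (-2 * s) := by linarith [Real.exp_pos (-2 * s)]
      simpa [hf] using inv_lt_one_of_one_lt₀ h1
    · rintro ⟨hy0, hy1⟩
      refine ⟨-(Real.log (1 / y - 1)) / 2, ?_⟩
      have h1 : 0 < 1 / y - 1 := by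
        rw [sub_pos, lt_div_iff₀ hy0]; linarith
      have h2 : -2 * (-(Real.log (1 / y - 1)) / 2) = Real.log (1 / y - 1) := by ring
      simp only [hf, h2, Real.exp_log h1]
      field_simp
      ring
  have key := integral_image_eq_integral_abs_deriv_smul MeasurableSet.univ hderiv hinj
      (fun x => x ^ (t / 2 - 1) * (1 - x) ^ (t / 2 - 1))
  rw [himg] at key
  rw [key, Measure.restrict_univ]
  congr 1
  funext s
  have e1 : Real.exp s * Real.exp (-s) = 1 := by
    rw [← Real.exp_add]; simp
  have e2 : Real.exp (-s) * Real.exp (-s) = Real.exp (-2 * s) := by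
    rw [← Real.exp_add]; ring_nf
  have hc : 0 < Real.cosh s := by positivity
  have hd : 1 + Real.exp (-2 * s) = Real.exp (-s) * (2 * Real.cosh s) := by
    have : Real.exp (-s) * (2 * Real.cosh s) =
        Real.exp s * Real.exp (-s) + Real.exp (-s) * Real.exp (-s) := by
      rw [Real.cosh_eq]; ring
    rw [this, e1, e2]
  have hfs : f s = Real.exp s / (2 * Real.cosh s) := by
    simp only [hf, hd]
    rw [mul_inv, Real.exp_neg, inv_inv, ← div_eq_mul_inv]
  have h1fs : 1 - f s = Real.exp (-s) / (2 * Real.cosh s) := by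
    rw [hfs, eq_div_iff (by positivity : (2 : ℝ) * Real.cosh s ≠ 0)]
    have h2c : 2 * Real.cosh s = Real.exp s + Real.exp (-s) := by
      rw [Real.cosh_eq]; ring
    field_simp [h2c]
    linarith [h2c]
  have hfabs : |f' s| = (2 * Real.cosh s ^ 2)⁻¹ := by
    have h0 : 0 ≤ f' s := by
      simp only [hf']; positivity
    rw [abs_of_nonneg h0]
    simp only [hf', hd]
    rw [← e2, mul_pow]
    field_simp [Real.exp_ne_zero, hc.ne']
  rw [smul_eq_mul, hfabs, h1fs, hfs]
  have hb1 : (0:ℝ) ≤ Real.exp s / (2 * Real.cosh s) := by positivity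
  rw [← Real.mul_rpow hb1 (by positivity)]
  have hbase : Real.exp s / (2 * Real.cosh s) * (Real.exp (-s) / (2 * Real.cosh s)) =
      ((2 * Real.cosh s) ^ (2:ℕ))⁻¹ := by
    field_simp
    linear_combination e1
  rw [hbase]
  have h2c : (0:ℝ) < 2 * Real.cosh s := by positivity
  have hrw : (((2 * Real.cosh s) ^ (2:ℕ))⁻¹ : ℝ) = (2 * Real.cosh s) ^ (-2 : ℝ) := by
    rw [← Real.rpow_natCast (2 * Real.cosh s) 2, ← Real.rpow_neg h2c.le]
    norm_num
  rw [hrw, ← Real.rpow_mul h2c.le]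
  have hexp : (-2 : ℝ) * (t / 2 - 1) = 2 - t := by ring
  rw [hexp, Real.mul_rpow (by norm_num : (0:ℝ) ≤ 2) hc.le]
  have h2t : (2:ℝ) ^ (2 - t) = 2 * 2 ^ (1 - t) := by
    rw [show (2 - t : ℝ) = 1 + (1 - t) by ring, Real.rpow_add (by norm_num : (0:ℝ) < 2),
      Real.rpow_one]
  have hct : Real.cosh s ^ (2 - t) = Real.cosh s ^ (2:ℕ) * Real.cosh s ^ (-t) := by
    rw [show (2 - t : ℝ) = (2:ℕ) + (-t) by push_cast; ring, Real.rpow_add hc,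
      Real.rpow_natCast]
  rw [h2t, hct]
  have hcne : Real.cosh s ^ (2:ℕ) ≠ 0 := by positivity
  field_simp

lemma integral_cosh_rpow_aux {t : ℝ} (ht : 0 < t) :
    ∫ s : ℝ, Real.cosh s ^ (-t) =
      Real.sqrt π * Real.Gamma (t / 2) / Real.Gamma (t / 2 + 1 / 2) := by
  have h2 : 0 < t / 2 := by linarith
  have hG1 : 0 < Real.Gamma (t / 2) := Real.Gamma_pos_of_pos h2
  have hG2 : 0 < Real.Gamma (t / 2 + 1 / 2) := Real.Gamma_pos_of_pos (by linarith)
  have hGt : 0 < Real.Gamma t := Real.Gamma_pos_of_pos ht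
  have hbeta := real_beta_aux h2 h2
  rw [show t / 2 + t / 2 = t by ring] at hbeta
  have hIoo : (∫ x in Set.Ioo (0:ℝ) 1, x ^ (t / 2 - 1) * (1 - x) ^ (t / 2 - 1))
      = ∫ x in (0:ℝ)..1, x ^ (t / 2 - 1) * (1 - x) ^ (t / 2 - 1) := by
    rw [intervalIntegral.integral_of_le (by norm_num : (0:ℝ) ≤ 1),
      MeasureTheory.integral_Ioc_eq_integral_Ioo]
  have hc := beta_eq_cosh_aux t
  rw [hIoo, hbeta, MeasureTheory.integral_const_mul] at hc
  rw [div_eq_iff hGt.ne'] at hc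
  have hdup := Real.Gamma_mul_Gamma_add_half (t / 2)
  rw [show 2 * (t / 2) = t by ring] at hdup
  have key : Real.Gamma (t / 2) *
      ((∫ s : ℝ, Real.cosh s ^ (-t)) * Real.Gamma (t / 2 + 1 / 2) -
        Real.sqrt π * Real.Gamma (t / 2)) = 0 := by
    linear_combination (∫ s : ℝ, Real.cosh s ^ (-t)) * hdup - Real.sqrt π * hc
  rcases mul_eq_zero.mp key with h | h
  · exact absurd h hG1.ne'
  · rw [eq_div_iff hG2.ne']
    linarith [h]

/-- The soliton `v̄(s) = (p/2)^(1/(p-2)) · (cosh((p-2)·s/2))^(-2/(p-2))`. -/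
noncomputable def vbar (p : ℝ) (s : ℝ) : ℝ :=
  (p / 2) ^ (1 / (p - 2)) * (Real.cosh ((p - 2) * s / 2)) ^ (-2 / (p - 2))

theorem stmt5 (p : ℝ) (hp : 2 < p) :
    (∫ s : ℝ, (vbar p s) ^ p) =
      (p / 2) ^ (2 / (p - 2)) * Real.sqrt π * Real.Gamma (2 + 2 / (p - 2)) /
        Real.Gamma (1 / 2 + p / (p - 2)) := by
  have h2 : (0:ℝ) < p - 2 := by linarith
  have hp2 : (0:ℝ) < p / 2 := by linarith
  have ht : (0:ℝ) < 2 * p / (p - 2) := by positivity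
  have hpt : ∀ s : ℝ, (vbar p s) ^ p =
      (p / 2) ^ (p / (p - 2)) * Real.cosh ((p - 2) / 2 * s) ^ (-(2 * p / (p - 2))) := by
    intro s
    rw [vbar, show (p - 2) * s / 2 = (p - 2) / 2 * s by ring]
    have hch : (0:ℝ) < Real.cosh ((p - 2) / 2 * s) := by positivity
    rw [Real.mul_rpow (Real.rpow_nonneg hp2.le _) (Real.rpow_nonneg hch.le _),
      ← Real.rpow_mul hp2.le, ← Real.rpow_mul hch.le]
    rw [show 1 / (p - 2) * p = p / (p - 2) by ring,
      show -2 / (p - 2) * p = -(2 * p / (p - 2)) by ring]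
  have step1 : (∫ s : ℝ, (vbar p s) ^ p) = (p / 2) ^ (p / (p - 2)) *
      ∫ s : ℝ, Real.cosh ((p - 2) / 2 * s) ^ (-(2 * p / (p - 2))) := by
    simp_rw [hpt]
    rw [MeasureTheory.integral_const_mul]
  have step2 : (∫ s : ℝ, Real.cosh ((p - 2) / 2 * s) ^ (-(2 * p / (p - 2)))) =
      |((p - 2) / 2)⁻¹| • ∫ s : ℝ, Real.cosh s ^ (-(2 * p / (p - 2))) :=
    MeasureTheory.Measure.integral_comp_mul_left
      (fun x => Real.cosh x ^ (-(2 * p / (p - 2)))) ((p - 2) / 2)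
  have step3 := integral_cosh_rpow_aux ht
  rw [show 2 * p / (p - 2) / 2 = p / (p - 2) by ring] at step3
  rw [step1, step2, step3]
  have habs : |((p - 2) / 2)⁻¹| = 2 / (p - 2) := by
    rw [abs_of_pos (by positivity)]
    field_simp
  rw [habs, smul_eq_mul]
  have hGadd : Real.Gamma (2 + 2 / (p - 2)) = p / (p - 2) * Real.Gamma (p / (p - 2)) := by
    rw [show 2 + 2 / (p - 2) = p / (p - 2) + 1 by field_simp; try ring]
    exact Real.Gamma_add_one (by positivity)
  rw [hGadd, show 1 / 2 + p / (p - 2) = p / (p - 2) + 1 / 2 by ring]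
  have hrpow : (p / 2) ^ (p / (p - 2)) = (p / 2) ^ (2 / (p - 2)) * (p / 2) := by
    rw [show p / (p - 2) = 2 / (p - 2) + 1 by field_simp; try ring,
      Real.rpow_add hp2, Real.rpow_one]
  rw [hrpow]
  have hG2 : Real.Gamma (p / (p - 2) + 1 / 2) ≠ 0 :=
    (Real.Gamma_pos_of_pos (by positivity)).ne'
  field_simp
end

section
/- Let p > 2 be a real number and set I_{p,0} = (p/2)^(2/p) · (√π · Γ(2 + 2/(p-2)) / Γ(1/2 + p/(p-2)))^((p-2)/p). Then for every weakly differentiable function v : ℝ → ℝ such that v and its derivative v' are square-integrable on ℝ, one has I_{p,0} · (∫_ℝ |v(x)|^p dx)^(2/p) ≤ ∫_ℝ (v'(x)² + v(x)²) dx; that is, the best constant in the one-dimensional Gagliardo–Nirenberg–Sobolev inequality on ℝ is C_p(ℝ) = 1/I_{p,0}. -/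
open Real MeasureTheory intervalIntegral Set

lemma aux_small_le {h : ℝ → ℝ} (hi : Integrable h) (hpos : ∀ x, 0 ≤ h x)
    {ε : ℝ} (hε : 0 < ε) (R : ℝ) : ∃ y, y ≤ R ∧ h y < ε := by
  by_contra hcon
  push_neg at hcon
  have hconst : IntegrableOn (fun _ : ℝ => ε) (Iic R) := by
    refine Integrable.mono (hi.integrableOn (s := Iic R)) aestronglyMeasurable_const ?_
    refine (ae_restrict_iff' measurableSet_Iic).mpr (Filter.Eventually.of_forall ?_)
    intro y hy
    rw [Real.norm_eq_abs, Real.norm_eq_abs, abs_of_nonneg hε.le, abs_of_nonneg (hpos y)]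
    exact hcon y hy
  rw [IntegrableOn, integrable_const_iff] at hconst
  rcases hconst with h1 | h2
  · exact absurd h1 (ne_of_gt hε)
  · have h2 := h2.measure_univ_lt_top
    rw [Measure.restrict_apply_univ, Real.volume_Iic] at h2
    exact absurd h2 (by simp)

lemma aux_small_ge {h : ℝ → ℝ} (hi : Integrable h) (hpos : ∀ x, 0 ≤ h x)
    {ε : ℝ} (hε : 0 < ε) (R : ℝ) : ∃ y, R ≤ y ∧ h y < ε := by
  by_contra hcon
  push_neg at hcon
  have hconst : IntegrableOn (fun _ : ℝ => ε) (Ici R) := by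
    refine Integrable.mono (hi.integrableOn (s := Ici R)) aestronglyMeasurable_const ?_
    refine (ae_restrict_iff' measurableSet_Ici).mpr (Filter.Eventually.of_forall ?_)
    intro y hy
    rw [Real.norm_eq_abs, Real.norm_eq_abs, abs_of_nonneg hε.le, abs_of_nonneg (hpos y)]
    exact hcon y hy
  rw [IntegrableOn, integrable_const_iff] at hconst
  rcases hconst with h1 | h2
  · exact absurd h1 (ne_of_gt hε)
  · have h2 := h2.measure_univ_lt_top
    rw [Measure.restrict_apply_univ, Real.volume_Ici] at h2
    exact absurd h2 (by simp)

lemma aux_amgm (p A M B : ℝ) (hp : 2 < p) (hA : 0 ≤ A) (hM : 0 < M) (hB : 0 ≤ B) :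
    (p / 2) ^ (2 / p) * ((p / (p - 2)) * B) ^ ((p - 2) / p) * A ^ (2 / p) ≤
      A * M ^ (2 - p) + B * M ^ (2 : ℝ) := by
  have hp0 : (0:ℝ) < p := by linarith
  have hp2 : (0:ℝ) < p - 2 := by linarith
  have hw : 2 / p + (p - 2) / p = 1 := by field_simp; ring
  have h := Real.geom_mean_le_arith_mean2_weighted
    (by positivity : (0:ℝ) ≤ 2 / p) (by positivity : (0:ℝ) ≤ (p - 2) / p)
    (by positivity : (0:ℝ) ≤ (p / 2) * (A * M ^ (2 - p)))
    (by positivity : (0:ℝ) ≤ (p / (p - 2)) * (B * M ^ (2:ℝ))) hw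
  have e1 : 2 / p * (p / 2 * (A * M ^ (2 - p))) + (p - 2) / p * (p / (p - 2) * (B * M ^ (2:ℝ)))
      = A * M ^ (2 - p) + B * M ^ (2 : ℝ) := by
    field_simp
  rw [e1] at h
  refine le_trans (le_of_eq ?_) h
  have hMrp : (M ^ (2 - p)) ^ (2/p) * (M ^ (2:ℝ)) ^ ((p-2)/p) = 1 := by
    rw [← Real.rpow_mul hM.le, ← Real.rpow_mul hM.le, ← Real.rpow_add hM,
      show (2 - p) * (2/p) + 2 * ((p-2)/p) = 0 by ring, Real.rpow_zero]
  rw [Real.mul_rpow (by positivity) (by positivity),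
    Real.mul_rpow (by positivity) (by positivity),
    Real.mul_rpow hA (by positivity),
    Real.mul_rpow (by positivity) (by positivity),
    Real.mul_rpow hB (by positivity)]
  linear_combination (-((p/2)^(2/p) * (p/(p-2))^((p-2)/p) * A^(2/p) * B^((p-2)/p))) * hMrp

lemma aux_const (p : ℝ) (hp : 2 < p) :
    √π * Real.Gamma (2 + 2/(p-2)) / Real.Gamma (1/2 + p/(p-2)) =
      (p/(p-2)) * (4 * ((1/(p-2)) * (Real.Gamma (2/(p-2)) * Real.Gamma (3/2) /
        Real.Gamma (2/(p-2) + 3/2)))) := by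
  have hp2 : (0:ℝ) < p - 2 := by linarith
  set a : ℝ := 2/(p-2) with ha_def
  have ha : 0 < a := by positivity
  have h1 : (2:ℝ) + a = (a+1) + 1 := by ring
  have h2 : Real.Gamma (2 + a) = (a+1) * (a * Real.Gamma a) := by
    rw [h1, Real.Gamma_add_one (by linarith), show a + 1 = a + 1 from rfl]
    rw [show (a:ℝ) + 1 = a + 1 from rfl]
    congr 1
    rw [Real.Gamma_add_one (ne_of_gt ha)]
  have h3 : Real.Gamma (3/2 : ℝ) = (1/2) * √π := by
    rw [show (3/2 : ℝ) = 1/2 + 1 by norm_num, Real.Gamma_add_one (by norm_num),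
      Real.Gamma_one_half_eq]
  have hne : p - 2 ≠ 0 := ne_of_gt hp2
  have h4 : (1:ℝ)/2 + p/(p-2) = a + 3/2 := by rw [ha_def]; field_simp; ring
  have h5 : 0 < Real.Gamma (a + 3/2) := Real.Gamma_pos_of_pos (by linarith)
  have h6 : 0 < Real.Gamma a := Real.Gamma_pos_of_pos ha
  rw [h4, h2, h3]
  have haa : a = 2/(p-2) := ha_def
  field_simp
  rw [haa]
  field_simp
  ring

lemma aux_realBeta (u v : ℝ) (hu : 0 < u) (hv : 0 < v) :
    ∫ x in (0:ℝ)..1, x ^ (u-1) * (1-x) ^ (v-1) =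
      Real.Gamma u * Real.Gamma v / Real.Gamma (u+v) := by
  have key := Complex.Gamma_mul_Gamma_eq_betaIntegral
    (s := (u:ℂ)) (t := (v:ℂ)) (by simpa using hu) (by simpa using hv)
  have hB : Complex.betaIntegral (u:ℂ) (v:ℂ) =
      ((∫ x in (0:ℝ)..1, x ^ (u-1) * (1-x) ^ (v-1) : ℝ) : ℂ) := by
    rw [Complex.betaIntegral, ← intervalIntegral.integral_ofReal]
    refine intervalIntegral.integral_congr (fun x hx => ?_)
    rw [Set.uIcc_of_le (by norm_num : (0:ℝ) ≤ 1)] at hx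
    rw [Complex.ofReal_mul, Complex.ofReal_cpow hx.1,
      Complex.ofReal_cpow (by linarith [hx.2] : (0:ℝ) ≤ 1 - x)]
    push_cast
    ring
  rw [hB] at key
  have h0 : Real.Gamma (u+v) ≠ 0 := ne_of_gt (Real.Gamma_pos_of_pos (by linarith))
  have : ((Real.Gamma u * Real.Gamma v : ℝ) : ℂ) =
      ((Real.Gamma (u+v) * ∫ x in (0:ℝ)..1, x ^ (u-1) * (1-x) ^ (v-1) : ℝ) : ℂ) := by
    push_cast
    rw [← Complex.Gamma_ofReal, ← Complex.Gamma_ofReal, ← Complex.Gamma_ofReal] at *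
    convert key using 2
    push_cast
    ring
  have h2 := Complex.ofReal_inj.mp this
  field_simp
  linarith [h2]

lemma aux_c (p : ℝ) (hp : 2 < p) :
    ∫ u in (0:ℝ)..1, Real.sqrt (u^2 - u^p) =
      (1/(p-2)) * (Real.Gamma (2/(p-2)) * Real.Gamma (3/2) /
        Real.Gamma (2/(p-2) + 3/2)) := by
  have hp2 : (0:ℝ) < p - 2 := by linarith
  have hp0 : (0:ℝ) < p := by linarith
  set q : ℝ := 1/(p-2) with hq_def
  set a : ℝ := 2/(p-2) with ha_def
  have hq : 0 < q := by positivity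
  have ha : 0 < a := by positivity
  set g : ℝ → ℝ := fun u => Real.sqrt (u^2 - u^p) with hg_def
  set f : ℝ → ℝ := fun t => t ^ q with hf_def
  set F : ℝ → ℝ := fun t => q * t ^ (q - 1) with hF_def
  have hgc : Continuous g := by
    apply Real.continuous_sqrt.comp
    exact (continuous_pow 2).sub (continuous_id.rpow_const (fun x => Or.inr hp0.le))
  have hfc : Continuous f := continuous_id.rpow_const (fun x => Or.inr hq.le)
  have hg1 : ∀ t : ℝ, 0 < t → t ≤ 1 → |g (f t)| ≤ 1 := by
    intro t ht ht1
    have h0 : (0:ℝ) ≤ t ^ q := Real.rpow_nonneg ht.le q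
    have : g (f t) ≤ 1 := by
      have : Real.sqrt ((t^q)^2 - (t^q)^p) ≤ Real.sqrt ((t^q)^2) :=
        Real.sqrt_le_sqrt (sub_le_self _ (Real.rpow_nonneg h0 p))
      calc g (f t) ≤ Real.sqrt ((t^q)^2) := this
        _ = t ^ q := Real.sqrt_sq h0
        _ ≤ 1 := Real.rpow_le_one ht.le ht1 hq.le
    rw [abs_of_nonneg (Real.sqrt_nonneg _)]
    exact this
  have hmaps : ∀ t ∈ Icc (0:ℝ) 1, f t ∈ Icc (0:ℝ) 1 := by
    intro t ht
    exact ⟨Real.rpow_nonneg ht.1 q, Real.rpow_le_one ht.1 ht.2 hq.le⟩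
  have key : (∫ t in (0:ℝ)..1, F t • (g ∘ f) t) = ∫ u in (f 0)..(f 1), g u := by
    apply intervalIntegral.integral_comp_smul_deriv''' hfc.continuousOn
    · intro x hx
      rw [min_def, max_def] at hx
      norm_num at hx
      exact ((Real.hasDerivAt_rpow_const (Or.inl (ne_of_gt hx.1))).hasDerivWithinAt)
    · exact hgc.continuousOn
    · refine (hgc.integrableOn_Icc (a := 0) (b := 1)).mono_set ?_
      rw [Set.uIcc_of_le (by norm_num : (0:ℝ) ≤ 1)]
      rintro u ⟨t, ht, rfl⟩
      exact hmaps t ht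
    · rw [Set.uIcc_of_le (by norm_num : (0:ℝ) ≤ 1)]
      rw [integrableOn_Icc_iff_integrableOn_Ioc]
      have hdom : IntegrableOn (fun t : ℝ => q * t ^ (q - 1)) (Ioc (0:ℝ) 1) := by
        have := intervalIntegrable_rpow' (a := (0:ℝ)) (b := 1) (r := q - 1) (by linarith)
        rw [intervalIntegrable_iff_integrableOn_Ioc_of_le (by norm_num : (0:ℝ) ≤ 1)] at this
        exact this.const_mul q
      refine hdom.mono' ?_ ?_
      · refine ContinuousOn.aestronglyMeasurable ?_ measurableSet_Ioc
        refine ContinuousOn.smul (f := F) (g := g ∘ f) ?_ (hgc.comp_continuousOn hfc.continuousOn)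
        exact (continuousOn_id.rpow_const (fun x hx => Or.inl (ne_of_gt hx.1))).const_smul q
      · refine (ae_restrict_iff' measurableSet_Ioc).mpr (Filter.Eventually.of_forall ?_)
        intro t ht
        have h1 : 0 ≤ q * t ^ (q-1) := mul_nonneg hq.le (Real.rpow_nonneg ht.1.le _)
        calc ‖F t • (g ∘ f) t‖ = (q * t ^ (q-1)) * |g (f t)| := by
              simp only [smul_eq_mul, Real.norm_eq_abs, Function.comp_apply, hF_def]
              rw [abs_mul, abs_of_nonneg h1]
          _ ≤ (q * t ^ (q-1)) * 1 := by
              exact mul_le_mul_of_nonneg_left (hg1 t ht.1 ht.2) h1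
          _ = q * t ^ (q-1) := mul_one _
  have hf0 : f 0 = 0 := by simp [hf_def]; exact Real.zero_rpow (ne_of_gt hq)
  have hf1 : f 1 = 1 := by simp [hf_def]
  rw [hf0, hf1] at key
  have congr2 : (∫ t in (0:ℝ)..1, F t • (g ∘ f) t) =
      ∫ t in (0:ℝ)..1, q * (t ^ (a-1) * (1-t) ^ ((3:ℝ)/2-1)) := by
    apply intervalIntegral.integral_congr_ae
    refine Filter.Eventually.of_forall ?_
    intro t ht
    rw [Set.uIoc_of_le (by norm_num : (0:ℝ) ≤ 1)] at ht
    obtain ⟨ht0, ht1⟩ := ht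
    simp only [smul_eq_mul, Function.comp_apply, hF_def, hg_def, hf_def]
    have e1 : (t ^ q) ^ (2:ℕ) = t ^ (q*(2:ℝ)) := by
      rw [← Real.rpow_natCast (t^q) 2, ← Real.rpow_mul ht0.le]
      norm_num
    have e2 : (t ^ q) ^ p = t ^ (q*p) := (Real.rpow_mul ht0.le q p).symm
    have e3 : q*(2:ℝ) = a := by rw [hq_def, ha_def]; ring
    have e4 : q*p = a + 1 := by rw [hq_def, ha_def]; field_simp; ring
    have e5 : t ^ (a+1) = t^a * t := by rw [Real.rpow_add ht0, Real.rpow_one]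
    rw [e1, e2, e3, e4, e5]
    have e6 : t^a - t^a * t = t^a * (1-t) := by ring
    rw [e6, Real.sqrt_mul (Real.rpow_nonneg ht0.le a), Real.sqrt_eq_rpow (t^a),
      ← Real.rpow_mul ht0.le, Real.sqrt_eq_rpow (1-t)]
    have e7 : q * t ^ (q-1) * (t ^ (a*(1/2)) * (1-t) ^ ((1:ℝ)/2)) =
        q * ((t ^ (q-1) * t ^ (a*(1/2))) * (1-t) ^ ((1:ℝ)/2)) := by ring
    rw [e7, ← Real.rpow_add ht0]
    have e8 : q - 1 + a*(1/2) = a - 1 := by rw [hq_def, ha_def]; ring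
    have e9 : (3:ℝ)/2 - 1 = 1/2 := by norm_num
    rw [e8, e9]
  have hbeta := aux_realBeta a (3/2) ha (by norm_num)
  rw [congr2] at key
  rw [intervalIntegral.integral_const_mul, hbeta] at key
  rw [← key]

theorem stmt7 (p : ℝ) (hp : 2 < p) (v v' : ℝ → ℝ)
    (hv : ∀ x, HasDerivAt v (v' x) x)
    (hv2 : Integrable (fun x => (v x) ^ 2))
    (hv'2 : Integrable (fun x => (v' x) ^ 2)) :
    (p / 2) ^ (2 / p) *
        (Real.sqrt π * Real.Gamma (2 + 2 / (p - 2)) /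
          Real.Gamma (1 / 2 + p / (p - 2))) ^ ((p - 2) / p) *
        (∫ x : ℝ, |v x| ^ p) ^ (2 / p) ≤
      ∫ x : ℝ, ((v' x) ^ 2 + (v x) ^ 2) := by
  have hp0 : (0:ℝ) < p := by linarith
  have hp2 : (0:ℝ) < p - 2 := by linarith
  have hvc : Continuous v := continuous_iff_continuousAt.mpr fun x => (hv x).continuousAt
  have hv'm : Measurable v' := by
    have : v' = deriv v := funext fun x => ((hv x).deriv).symm
    rw [this]; exact measurable_deriv v
  have hRHSnn : 0 ≤ ∫ x : ℝ, ((v' x) ^ 2 + (v x) ^ 2) :=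
    integral_nonneg fun x => by positivity
  have hvv' : Integrable (fun x => 2 * v x * v' x) := by
    refine (hv'2.add hv2).mono' ?_ (Filter.Eventually.of_forall fun x => ?_)
    · exact ((hvc.aestronglyMeasurable.const_mul 2).mul hv'm.aestronglyMeasurable)
    · simp only [Pi.add_apply, Real.norm_eq_abs]
      have := sq_nonneg (|v x| - |v' x|)
      have h1 : |2 * v x * v' x| ≤ 2 * |v x| * |v' x| := by
        rw [abs_mul, abs_mul]; simp
      nlinarith [sq_abs (v x), sq_abs (v' x)]
  set Q := (∫ x, (v' x)^2) + ∫ x, (v x)^2 with hQ_def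
  have hRHS : ∫ x : ℝ, ((v' x) ^ 2 + (v x) ^ 2) = Q := integral_add hv'2 hv2
  have habs : Integrable (fun x => |2 * v x * v' x|) := hvv'.abs
  have hIabs : (∫ x, |2 * v x * v' x|) ≤ Q := by
    rw [hQ_def, ← integral_add hv'2 hv2]
    refine integral_mono habs (hv'2.add hv2) fun x => ?_
    have h1 : |2 * v x * v' x| ≤ 2 * |v x| * |v' x| := by
      rw [abs_mul, abs_mul]; simp
    nlinarith [sq_abs (v x), sq_abs (v' x), sq_nonneg (|v x| - |v' x|)]
  have hsq : ∀ t : ℝ, HasDerivAt (fun x => (v x)^2) (2 * v t * v' t) t := by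
    intro t
    have h2 : HasDerivAt (fun x => (v x)^2) (v' t * v t + v t * v' t) t := by
      simp only [pow_two]; exact (hv t).mul (hv t)
    convert h2 using 1
    ring
  have hbd : ∀ x, (v x)^2 ≤ Q := by
    intro x
    refine le_of_forall_pos_le_add fun ε hε => ?_
    obtain ⟨y, hy, hyε⟩ := aux_small_le hv2 (fun z => sq_nonneg (v z)) hε x
    have hftc : ∫ t in y..x, 2 * v t * v' t = (v x)^2 - (v y)^2 :=
      intervalIntegral.integral_eq_sub_of_hasDerivAt (fun t _ => hsq t)
        hvv'.intervalIntegrable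
    have h1 : |∫ t in y..x, 2 * v t * v' t| ≤ ∫ t in y..x, |2 * v t * v' t| :=
      intervalIntegral.abs_integral_le_integral_abs hy
    have h2 : (∫ t in y..x, |2 * v t * v' t|) ≤ ∫ t, |2 * v t * v' t| := by
      rw [intervalIntegral.integral_of_le hy]
      exact setIntegral_le_integral habs (Filter.Eventually.of_forall fun t => abs_nonneg _)
    have : (v x)^2 - (v y)^2 ≤ ∫ t, |2 * v t * v' t| := by
      rw [← hftc]; exact le_trans (le_abs_self _) (le_trans h1 h2)
    nlinarith
  set M := sSup (Set.range fun x => |v x|) with hM_def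
  have hbdd : BddAbove (Set.range fun x => |v x|) := by
    refine ⟨Real.sqrt Q, ?_⟩
    rintro r ⟨x, rfl⟩
    show |v x| ≤ Real.sqrt Q
    rw [(Real.sqrt_sq_eq_abs (v x)).symm]
    exact Real.sqrt_le_sqrt (hbd x)
  have hMb : ∀ x, |v x| ≤ M := fun x => le_csSup hbdd ⟨x, rfl⟩
  have hM0 : 0 ≤ M := le_trans (abs_nonneg _) (hMb 0)
  rcases eq_or_lt_of_le hM0 with hM0' | hMpos
  · -- M = 0 : v is identically zero
    have hz : ∀ x, v x = 0 := by
      intro x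
      have := hMb x
      rw [← hM0'] at this
      exact abs_eq_zero.mp (le_antisymm this (abs_nonneg _))
    have hA : (∫ x : ℝ, |v x| ^ p) = 0 := by
      have : (fun x : ℝ => |v x| ^ p) = fun _ => (0:ℝ) := funext fun x => by
        rw [hz, abs_zero, Real.zero_rpow (ne_of_gt hp0)]
      rw [this, MeasureTheory.integral_zero]
    rw [hA, Real.zero_rpow (by positivity : 2/p ≠ 0), mul_zero]
    exact hRHSnn
  -- main case : M > 0
  have hWpt : ∀ s : ℝ, |s| ≤ M → M^(2-p) * |s|^p ≤ s^2 := by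
    intro s hs
    rcases eq_or_ne s 0 with rfl | hs0
    · simp [Real.zero_rpow (ne_of_gt hp0)]
    · have habs0 : 0 < |s| := abs_pos.mpr hs0
      have e1 : |s|^p = |s|^(p-2) * s^2 := by
        rw [← sq_abs s, ← Real.rpow_natCast |s| 2, ← Real.rpow_add habs0]
        norm_num
      calc M^(2-p) * |s|^p = M^(2-p) * (|s|^(p-2) * s^2) := by rw [e1]
        _ ≤ M^(2-p) * (M^(p-2) * s^2) := by
            refine mul_le_mul_of_nonneg_left (mul_le_mul_of_nonneg_right
              (Real.rpow_le_rpow (abs_nonneg s) hs (le_of_lt hp2)) (sq_nonneg s))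
              (Real.rpow_nonneg hM0 _)
        _ = s^2 := by
            rw [← mul_assoc, ← Real.rpow_add hMpos]
            norm_num
  have hMM : M^(p-2) * M^(2-p) = 1 := by
    rw [← Real.rpow_add hMpos]; norm_num
  have hApt : ∀ x, |v x|^p ≤ M^(p-2) * (v x)^2 := by
    intro x
    have h := hWpt (v x) (hMb x)
    calc |v x|^p = (M^(p-2) * M^(2-p)) * |v x|^p := by rw [hMM, one_mul]
      _ = M^(p-2) * (M^(2-p) * |v x|^p) := by ring
      _ ≤ M^(p-2) * (v x)^2 := mul_le_mul_of_nonneg_left h (Real.rpow_nonneg hM0 _)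
  have hAint : Integrable (fun x => |v x|^p) := by
    refine (hv2.const_mul (M^(p-2))).mono' ?_ (Filter.Eventually.of_forall fun x => ?_)
    · exact (hvc.abs.rpow_const (fun x => Or.inr hp0.le)).aestronglyMeasurable
    · rw [Real.norm_eq_abs, abs_of_nonneg (Real.rpow_nonneg (abs_nonneg _) _)]
      exact hApt x
  set A := ∫ x, |v x|^p with hA_def
  have hA0 : 0 ≤ A := integral_nonneg fun x => Real.rpow_nonneg (abs_nonneg _) _
  set φ : ℝ → ℝ := fun s => Real.sqrt (s^2 - M^(2-p) * |s|^p) with hφ_def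
  have hφc : Continuous φ := by
    apply Real.continuous_sqrt.comp
    exact (continuous_pow 2).sub
      (continuous_const.mul (continuous_abs.rpow_const (fun x => Or.inr hp0.le)))
  have hφ0 : ∀ s, 0 ≤ φ s := fun s => Real.sqrt_nonneg _
  have hφle : ∀ s, φ s ≤ |s| := by
    intro s
    calc φ s ≤ Real.sqrt (s^2) := by
          refine Real.sqrt_le_sqrt (sub_le_self _ ?_)
          exact mul_nonneg (Real.rpow_nonneg hM0 _) (Real.rpow_nonneg (abs_nonneg _) _)
      _ = |s| := Real.sqrt_sq_eq_abs s
  have hφsq : ∀ s, |s| ≤ M → (φ s)^2 = s^2 - M^(2-p) * |s|^p := fun s hs =>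
    Real.sq_sqrt (sub_nonneg.mpr (hWpt s hs))
  set Ψ : ℝ → ℝ := fun t => ∫ s in (0:ℝ)..t, φ s with hΨ_def
  have hΨd : ∀ t, HasDerivAt Ψ (φ t) t := by
    intro t
    exact intervalIntegral.integral_hasDerivAt_right
      (Continuous.intervalIntegrable (μ := volume) hφc 0 t)
      (hφc.stronglyMeasurableAtFilter volume _)
      hφc.continuousAt
  have hΨ0 : Ψ 0 = 0 := intervalIntegral.integral_same
  have hΨadd : ∀ s t : ℝ, Ψ t - Ψ s = ∫ u in s..t, φ u := by
    intro s t
    have h := intervalIntegral.integral_add_adjacent_intervals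
      (Continuous.intervalIntegrable (μ := volume) hφc 0 s) (Continuous.intervalIntegrable (μ := volume) hφc s t)
    simp only [hΨ_def]
    linarith
  have hΨmono : Monotone Ψ := by
    intro s t hst
    have h1 := hΨadd s t
    have h2 : 0 ≤ ∫ u in s..t, φ u :=
      intervalIntegral.integral_nonneg hst (fun u _ => hφ0 u)
    linarith
  have hΨlip : ∀ a b : ℝ, 0 ≤ a → a ≤ b → Ψ b - Ψ a ≤ b * (b - a) := by
    intro a b ha hab
    rw [hΨadd a b]
    calc (∫ u in a..b, φ u) ≤ ∫ u in a..b, (fun _ => b) u := by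
          refine intervalIntegral.integral_mono_on hab (Continuous.intervalIntegrable (μ := volume) hφc a b)
            intervalIntegrable_const fun u hu => ?_
          calc φ u ≤ |u| := hφle u
            _ = u := abs_of_nonneg (le_trans ha hu.1)
            _ ≤ b := hu.2
      _ = b * (b - a) := by
          rw [intervalIntegral.integral_const, smul_eq_mul]; ring
  have hΨsq : ∀ t, 0 ≤ t → Ψ t ≤ t^2 := by
    intro t ht
    have h := hΨlip 0 t le_rfl ht
    rw [hΨ0] at h
    nlinarith
  have hφeven : ∀ s, φ (-s) = φ s := by
    intro s
    simp only [hφ_def, abs_neg, neg_sq]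
  have hΨodd : ∀ t, Ψ (-t) = - Ψ t := by
    intro t
    have h1 : (∫ s in (0:ℝ)..t, φ (-s)) = ∫ s in (0:ℝ)..t, φ s :=
      intervalIntegral.integral_congr fun s _ => hφeven s
    have h2 : (∫ s in (0:ℝ)..t, φ (-s)) = ∫ s in (-t)..(-(0:ℝ)), φ s :=
      intervalIntegral.integral_comp_neg φ
    have h3 : (∫ s in (-t)..(-(0:ℝ)), φ s) = ∫ s in (-t)..(0:ℝ), φ s := by norm_num
    have h4 : (∫ s in (-t)..(0:ℝ), φ s) = -(∫ s in (0:ℝ)..(-t), φ s) :=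
      intervalIntegral.integral_symm 0 (-t)
    simp only [hΨ_def]
    linarith [h1, h2.symm.trans h1, h3, h4]
  have hΨabs : ∀ t, |Ψ t| = Ψ |t| := by
    intro t
    rcases le_total 0 t with ht | ht
    · have h1 : 0 ≤ Ψ t := by have := hΨmono ht; rw [hΨ0] at this; exact this
      rw [abs_of_nonneg h1, abs_of_nonneg ht]
    · have h0 : 0 ≤ -t := by linarith
      have h1 : 0 ≤ Ψ (-t) := by have := hΨmono h0; rw [hΨ0] at this; exact this
      have h2 : Ψ t = -Ψ (-t) := by have := hΨodd t; linarith
      rw [abs_of_nonpos ht, h2, abs_neg, abs_of_nonneg h1]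
  set g : ℝ → ℝ := fun x => Ψ (v x) with hg_def
  have hg' : ∀ x, HasDerivAt g (φ (v x) * v' x) x := by
    intro x
    have := (hΨd (v x)).comp x (hv x)
    exact this
  have hg'i : Integrable (fun x => φ (v x) * v' x) := by
    refine (hv2.add hv'2).mono'
      (((hφc.comp hvc).aestronglyMeasurable).mul hv'm.aestronglyMeasurable)
      (Filter.Eventually.of_forall fun x => ?_)
    simp only [Pi.add_apply, Real.norm_eq_abs]
    have h1 : |φ (v x) * v' x| = φ (v x) * |v' x| := by
      rw [abs_mul, abs_of_nonneg (hφ0 _)]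
    have h2 : φ (v x) ≤ |v x| := hφle _
    nlinarith [sq_abs (v x), sq_abs (v' x), sq_nonneg (|v x| - |v' x|),
      abs_nonneg (v' x), hφ0 (v x)]
  have habs' : Integrable (fun x => |φ (v x) * v' x|) := hg'i.abs
  set T := ∫ x, |φ (v x) * v' x| with hT_def
  have hgΨ : ∀ x, |g x| = Ψ |v x| := fun x => hΨabs (v x)
  have htail1 : ∀ x, |g x| ≤ ∫ z in Iic x, |φ (v z) * v' z| := by
    intro x
    refine le_of_forall_pos_le_add fun ε hε => ?_
    obtain ⟨y, hy, hyε⟩ := aux_small_le hv2 (fun z => sq_nonneg (v z)) hε x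
    have hftc : ∫ t in y..x, φ (v t) * v' t = g x - g y :=
      intervalIntegral.integral_eq_sub_of_hasDerivAt (fun t _ => hg' t)
        hg'i.intervalIntegrable
    have h1 : |∫ t in y..x, φ (v t) * v' t| ≤ ∫ t in y..x, |φ (v t) * v' t| :=
      intervalIntegral.abs_integral_le_integral_abs hy
    have h2 : (∫ t in y..x, |φ (v t) * v' t|) ≤ ∫ z in Iic x, |φ (v z) * v' z| := by
      rw [intervalIntegral.integral_of_le hy]
      exact setIntegral_mono_set habs'.integrableOn
        (Filter.Eventually.of_forall fun z => abs_nonneg _)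
        (HasSubset.Subset.eventuallyLE Ioc_subset_Iic_self)
    have h3 : |g y| ≤ ε := by
      rw [hgΨ y]
      calc Ψ |v y| ≤ |v y|^2 := hΨsq _ (abs_nonneg _)
        _ = (v y)^2 := sq_abs _
        _ ≤ ε := hyε.le
    have h4 : |g x - g y| ≤ ∫ z in Iic x, |φ (v z) * v' z| := by
      rw [← hftc]; exact le_trans h1 h2
    calc |g x| = |g y + (g x - g y)| := by ring_nf
      _ ≤ |g y| + |g x - g y| := abs_add_le _ _
      _ ≤ (∫ z in Iic x, |φ (v z) * v' z|) + ε := by linarith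
  have htail2 : ∀ x, |g x| ≤ ∫ z in Ioi x, |φ (v z) * v' z| := by
    intro x
    refine le_of_forall_pos_le_add fun ε hε => ?_
    obtain ⟨y, hy, hyε⟩ := aux_small_ge hv2 (fun z => sq_nonneg (v z)) hε x
    have hftc : ∫ t in x..y, φ (v t) * v' t = g y - g x :=
      intervalIntegral.integral_eq_sub_of_hasDerivAt (fun t _ => hg' t)
        hg'i.intervalIntegrable
    have h1 : |∫ t in x..y, φ (v t) * v' t| ≤ ∫ t in x..y, |φ (v t) * v' t| :=
      intervalIntegral.abs_integral_le_integral_abs hy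
    have h2 : (∫ t in x..y, |φ (v t) * v' t|) ≤ ∫ z in Ioi x, |φ (v z) * v' z| := by
      rw [intervalIntegral.integral_of_le hy]
      exact setIntegral_mono_set habs'.integrableOn
        (Filter.Eventually.of_forall fun z => abs_nonneg _)
        (HasSubset.Subset.eventuallyLE Ioc_subset_Ioi_self)
    have h3 : |g y| ≤ ε := by
      rw [hgΨ y]
      calc Ψ |v y| ≤ |v y|^2 := hΨsq _ (abs_nonneg _)
        _ = (v y)^2 := sq_abs _
        _ ≤ ε := hyε.le
    have h4 : |g y - g x| ≤ ∫ z in Ioi x, |φ (v z) * v' z| := by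
      rw [← hftc]; exact le_trans h1 h2
    calc |g x| = |g y + (g x - g y)| := by ring_nf
      _ ≤ |g y| + |g x - g y| := abs_add_le _ _
      _ = |g y| + |g y - g x| := by rw [abs_sub_comm]
      _ ≤ (∫ z in Ioi x, |φ (v z) * v' z|) + ε := by linarith
  have h2T : ∀ x, 2 * |g x| ≤ T := by
    intro x
    have hsplit := integral_Iic_add_Ioi (b := x)
      habs'.integrableOn habs'.integrableOn
    rw [hT_def]
    linarith [htail1 x, htail2 x]
  have hΨM : 2 * Ψ M ≤ T := by
    refine le_of_forall_pos_le_add fun ε hε => ?_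
    have hδ : 0 < ε/(2*M) := by positivity
    obtain ⟨r, ⟨x, rfl⟩, hr⟩ := exists_lt_of_lt_csSup
      (Set.range_nonempty fun x => |v x|) (show M - ε/(2*M) < M by linarith)
    have h1 : Ψ M - Ψ |v x| ≤ M * (M - |v x|) := hΨlip |v x| M (abs_nonneg _) (hMb x)
    have h2 : M * (M - |v x|) ≤ M * (ε/(2*M)) :=
      mul_le_mul_of_nonneg_left (by linarith) hM0
    have h3 : M * (ε/(2*M)) = ε/2 := by field_simp
    have h4 := h2T x
    rw [hgΨ x] at h4
    linarith
  have hptw : ∀ x, 2 * |φ (v x) * v' x| ≤ (v' x)^2 + ((v x)^2 - M^(2-p) * |v x|^p) := by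
    intro x
    have h1 : |φ (v x) * v' x| = φ (v x) * |v' x| := by
      rw [abs_mul, abs_of_nonneg (hφ0 _)]
    have h2 := hφsq (v x) (hMb x)
    nlinarith [sq_nonneg (φ (v x) - |v' x|), sq_abs (v' x), hφ0 (v x), abs_nonneg (v' x)]
  have hWi : Integrable (fun x => (v x)^2 - M^(2-p) * |v x|^p) := hv2.sub (hAint.const_mul _)
  have h2T' : 2 * T ≤ (∫ x, (v' x)^2) + ((∫ x, (v x)^2) - M^(2-p) * A) := by
    have hle := integral_mono (habs'.const_mul 2) (hv'2.add hWi) (fun x => hptw x)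
    simp only [Pi.add_apply] at hle
    rw [MeasureTheory.integral_const_mul] at hle
    rw [integral_add hv'2 hWi, integral_sub hv2 (hAint.const_mul _), MeasureTheory.integral_const_mul] at hle
    rw [hT_def]
    linarith
  set c := ∫ u in (0:ℝ)..1, Real.sqrt (u^2 - u^p) with hc_def
  have hc0 : 0 ≤ c :=
    intervalIntegral.integral_nonneg (by norm_num) fun u _ => Real.sqrt_nonneg _
  have hscale : Ψ M = M^(2:ℝ) * c := by
    have hkey := intervalIntegral.integral_comp_smul_deriv
      (f := fun t => M * t) (f' := fun _ => M) (g := φ) (a := 0) (b := 1)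
      (fun t _ => by simpa using (hasDerivAt_id t).const_mul M)
      continuousOn_const hφc
    simp only [mul_zero, mul_one] at hkey
    have hcongr : (∫ t in (0:ℝ)..1, (fun _ => M) t • (φ ∘ fun t => M * t) t) =
        ∫ t in (0:ℝ)..1, M^(2:ℝ) * Real.sqrt (t^2 - t^p) := by
      refine intervalIntegral.integral_congr fun t ht => ?_
      rw [Set.uIcc_of_le (by norm_num : (0:ℝ) ≤ 1)] at ht
      simp only [smul_eq_mul, Function.comp_apply, hφ_def]
      have e1 : |M * t| = M * t := abs_of_nonneg (mul_nonneg hM0 ht.1)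
      have e2 : (M * t)^p = M^p * t^p := Real.mul_rpow hM0 ht.1
      have e3 : M^(2-p) * (M^p * t^p) = M^(2:ℝ) * t^p := by
        rw [← mul_assoc, ← Real.rpow_add hMpos]
        norm_num
      have e4 : (M * t)^2 = M^(2:ℝ) * t^2 := by
        rw [Real.rpow_two]; ring
      rw [e1, e2, e3, e4, ← mul_sub, Real.sqrt_mul (by positivity) _]
      have e5 : Real.sqrt (M^(2:ℝ)) = M := by
        rw [Real.rpow_two]; exact Real.sqrt_sq hM0
      rw [e5, Real.rpow_two]
      ring
    rw [hcongr, intervalIntegral.integral_const_mul] at hkey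
    simp only [hΨ_def, hc_def]
    rw [← hkey]
  have hmain : A * M^(2-p) + (4*c) * M^(2:ℝ) ≤ Q := by
    have h5 : 4 * Ψ M ≤ 2 * T := by linarith
    rw [hscale] at h5
    rw [hQ_def]
    linarith [h2T']
  rw [hRHS]
  have hIc := aux_const p hp
  have hcc := aux_c p hp
  rw [← hc_def] at hcc
  have hrw : √π * Real.Gamma (2 + 2/(p-2)) / Real.Gamma (1/2 + p/(p-2)) =
      (p/(p-2)) * (4*c) := by rw [hIc, hcc]
  calc (p / 2) ^ (2 / p) * (√π * Real.Gamma (2 + 2 / (p - 2)) /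
          Real.Gamma (1 / 2 + p / (p - 2))) ^ ((p - 2) / p) * A ^ (2 / p)
      = (p / 2) ^ (2 / p) * ((p/(p-2)) * (4*c)) ^ ((p - 2) / p) * A ^ (2 / p) := by
        rw [hrw]
    _ ≤ A * M^(2-p) + (4*c) * M^(2:ℝ) :=
        aux_amgm p A M (4*c) hp hA0 hMpos (by positivity)
    _ ≤ Q := hmain
end

section
/- Let p > 2 be a real number. There is no function v : [0, ∞) → ℝ that is continuous on [0, ∞), twice continuously differentiable on (0, ∞), nonnegative, not identically zero, satisfies v(0) = 0 and -v''(x) + v(x) = |v(x)|^(p-2)·v(x) for all x > 0, and has v and v' square-integrable on (0, ∞). -/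
open Real MeasureTheory

theorem stmt9 (p : ℝ) (hp : 2 < p) :
    ¬ ∃ v v' v'' : ℝ → ℝ,
      ContinuousOn v (Set.Ici 0) ∧
      (∀ x ∈ Set.Ioi (0 : ℝ), HasDerivAt v (v' x) x) ∧
      (∀ x ∈ Set.Ioi (0 : ℝ), HasDerivAt v' (v'' x) x) ∧
      ContinuousOn v'' (Set.Ioi 0) ∧
      (∀ x ∈ Set.Ici (0 : ℝ), 0 ≤ v x) ∧
      (∃ x ∈ Set.Ici (0 : ℝ), v x ≠ 0) ∧
      v 0 = 0 ∧
      (∀ x ∈ Set.Ioi (0 : ℝ), -(v'' x) + v x = |v x| ^ (p - 2) * v x) ∧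
      IntegrableOn (fun x => (v x) ^ 2) (Set.Ioi 0) ∧
      IntegrableOn (fun x => (v' x) ^ 2) (Set.Ioi 0) := by
  rintro ⟨v, v', v'', hvc, hd1, hd2, hc'', hvnn, ⟨x0, hx0mem, hx0⟩, hv0, hode, hint2, hint2'⟩
  have hp0 : (0:ℝ) < p := by linarith
  have hp1 : (1:ℝ) ≤ p := by linarith
  have hnn : ∀ x ∈ Set.Ioi (0:ℝ), 0 ≤ v x := fun x hx => hvnn x (Set.mem_Ici.mpr (le_of_lt hx))
  -- rewrite the ODE using nonnegativity
  have hode' : ∀ x ∈ Set.Ioi (0:ℝ), v'' x = v x - (v x) ^ (p-2) * v x := by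
    intro x hx
    have h := hode x hx
    rw [abs_of_nonneg (hnn x hx)] at h
    linarith
  -- the energy
  set E : ℝ → ℝ := fun x => (v' x)^2/2 - (v x)^2/2 + (v x)^p / p with hE
  have hEd : ∀ x ∈ Set.Ioi (0:ℝ), HasDerivAt E 0 x := by
    intro x hx
    have h1 : HasDerivAt (fun y => (v' y)^2/2) (v' x * v'' x) x := by
      have h := ((hd2 x hx).pow 2).div_const 2
      refine h.congr_deriv ?_; push_cast; ring
    have h2 : HasDerivAt (fun y => (v y)^2/2) (v x * v' x) x := by
      have h := ((hd1 x hx).pow 2).div_const 2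
      refine h.congr_deriv ?_; push_cast; ring
    have h3 : HasDerivAt (fun y => (v y)^p / p) ((v x)^(p-1) * v' x) x := by
      have hr : HasDerivAt (fun y : ℝ => y ^ p) (p * (v x) ^ (p-1)) (v x) :=
        Real.hasDerivAt_rpow_const (Or.inr hp1)
      have h := (hr.comp x (hd1 x hx)).div_const p
      refine h.congr_deriv ?_
      field_simp
    have h := (h1.sub h2).add h3
    refine h.congr_deriv ?_
    rw [hode' x hx]
    rcases eq_or_lt_of_le (hnn x hx) with h0 | h0
    · rw [← h0]
      rw [Real.zero_rpow (by linarith : p - 1 ≠ 0)]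
      ring
    · have hpows : (v x)^(p-1) = (v x)^(p-2) * v x := by
        have := Real.rpow_add_one (ne_of_gt h0) (p-2)
        rw [show p - 2 + 1 = p - 1 by ring] at this
        rw [this]
      rw [hpows]; ring
  -- E is constant on Ioi 0
  have hEconst : ∀ x ∈ Set.Ioi (0:ℝ), ∀ y ∈ Set.Ioi (0:ℝ), E x = E y := by
    have key : ∀ a b : ℝ, 0 < a → a < b → E a = E b := by
      intro a b ha hab
      obtain ⟨c, _, hc0⟩ := exists_hasDerivAt_eq_slope E (fun _ => 0) hab
        (fun x hx => ((hEd x (lt_of_lt_of_le ha hx.1)).continuousAt).continuousWithinAt)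
        (fun x hx => hEd x (lt_trans ha hx.1))
      have hba : b - a ≠ 0 := by linarith
      rcases div_eq_zero_iff.mp hc0.symm with h | h
      · linarith
      · exact absurd h hba
    intro x hx y hy
    rcases lt_trichotomy x y with h | h | h
    · exact key x y hx h
    · rw [h]
    · exact (key y x hy h).symm
  -- measurability facts
  have h1sub : Set.Ioi (1:ℝ) ⊆ Set.Ioi 0 := Set.Ioi_subset_Ioi (by norm_num)
  have hvcont : ContinuousOn v (Set.Ioi 1) :=
    hvc.mono (fun x hx => Set.mem_Ici.mpr (le_of_lt (lt_trans one_pos hx)))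
  have hv'cont : ContinuousOn v' (Set.Ioi 1) := fun x hx =>
    ((hd2 x (h1sub hx)).continuousAt).continuousWithinAt
  -- integrability of v*v' on Ioi 1
  have hsq1 : IntegrableOn (fun x => (v x)^2) (Set.Ioi 1) := hint2.mono_set h1sub
  have hsq1' : IntegrableOn (fun x => (v' x)^2) (Set.Ioi 1) := hint2'.mono_set h1sub
  have hmul : IntegrableOn (fun x => v x * v' x) (Set.Ioi 1) := by
    apply Integrable.mono' ((hsq1.add hsq1').div_const 2)
    · exact (hvcont.mul hv'cont).aestronglyMeasurable measurableSet_Ioi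
    · filter_upwards with x
      simp only [Pi.add_apply]
      rw [Real.norm_eq_abs, abs_mul]
      nlinarith [sq_nonneg (|v x| - |v' x|), sq_abs (v x), sq_abs (v' x),
        abs_nonneg (v x), abs_nonneg (v' x)]
  -- boundedness of v on Ici 1 via FTC
  set M : ℝ := (v 1)^2 + ∫ x in Set.Ioi 1, |2 * (v x * v' x)| with hM
  have hmul2 : IntegrableOn (fun x => 2 * (v x * v' x)) (Set.Ioi 1) := hmul.const_mul 2
  have habs : IntegrableOn (fun x => |2 * (v x * v' x)|) (Set.Ioi 1) := hmul2.abs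
  have hM0 : 0 ≤ M := by
    have : 0 ≤ ∫ x in Set.Ioi 1, |2 * (v x * v' x)| :=
      integral_nonneg (fun x => abs_nonneg _)
    nlinarith [sq_nonneg (v 1)]
  have hvle : ∀ x ∈ Set.Ici (1:ℝ), v x ≤ Real.sqrt M := by
    intro x hx
    have hx1 : (1:ℝ) ≤ x := hx
    have hftc : ∫ y in (1:ℝ)..x, 2 * (v y * v' y) = (v x)^2 - (v 1)^2 := by
      apply intervalIntegral.integral_eq_sub_of_hasDerivAt
      · intro y hy
        rw [Set.uIcc_of_le hx1] at hy
        have hy0 : y ∈ Set.Ioi (0:ℝ) := lt_of_lt_of_le one_pos hy.1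
        have h := (hd1 y hy0).pow 2
        refine h.congr_deriv ?_; push_cast; ring
      · rw [intervalIntegrable_iff]
        exact hmul2.mono_set (fun y hy => by
          rw [Set.uIoc_of_le hx1] at hy; exact hy.1)
    have h2 : ∫ y in (1:ℝ)..x, 2 * (v y * v' y) ≤ ∫ y in Set.Ioi 1, |2 * (v y * v' y)| := by
      rw [intervalIntegral.integral_of_le hx1]
      calc ∫ y in Set.Ioc 1 x, 2 * (v y * v' y)
          ≤ ∫ y in Set.Ioc 1 x, |2 * (v y * v' y)| := by
            apply setIntegral_mono (hmul2.mono_set Set.Ioc_subset_Ioi_self)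
              (habs.mono_set Set.Ioc_subset_Ioi_self)
            exact fun y => le_abs_self _
        _ ≤ ∫ y in Set.Ioi 1, |2 * (v y * v' y)| := by
            apply setIntegral_mono_set habs
            · filter_upwards with y using abs_nonneg _
            · exact Filter.Eventually.of_forall (fun y hy => hy.1)
    rw [Real.le_sqrt (hvnn x (Set.mem_Ici.mpr (le_trans (by norm_num) hx1))) hM0]
    rw [hM]
    linarith
  -- integrability of v^p on Ioi 1
  set B : ℝ := Real.sqrt M with hB
  have hBnn : 0 ≤ B := Real.sqrt_nonneg _
  have hvp_int : IntegrableOn (fun x => (v x)^p) (Set.Ioi 1) := by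
    apply Integrable.mono' (hsq1.const_mul (B^(p-2)))
    · apply ContinuousOn.aestronglyMeasurable _ measurableSet_Ioi
      exact hvcont.rpow_const (fun x hx => Or.inr (by linarith))
    · filter_upwards [ae_restrict_mem measurableSet_Ioi] with x hx
      have hv1 : 0 ≤ v x := hnn x (h1sub hx)
      have hv2 : v x ≤ B := hvle x (Set.mem_Ici.mpr (le_of_lt hx))
      rw [Real.norm_eq_abs, abs_of_nonneg (Real.rpow_nonneg hv1 p)]
      rcases eq_or_lt_of_le hv1 with h0 | h0
      · rw [← h0, Real.zero_rpow (ne_of_gt hp0)]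
        positivity
      · have h2 : (v x)^(2:ℕ) = (v x)^((2:ℕ):ℝ) := (Real.rpow_natCast _ 2).symm
        calc (v x)^p = (v x)^(p-2) * (v x)^2 := by
              rw [h2, ← Real.rpow_add h0]
              norm_num
          _ ≤ B^(p-2) * (v x)^2 :=
              mul_le_mul_of_nonneg_right
                (Real.rpow_le_rpow hv1 hv2 (by linarith)) (sq_nonneg _)
  -- E is integrable on Ioi 1
  have hEint : IntegrableOn E (Set.Ioi 1) := by
    have h1 := hsq1'.div_const 2
    have h2 := hsq1.div_const 2
    have h3 := hvp_int.div_const p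
    exact (h1.sub h2).add h3
  -- hence the constant value is 0
  have hE1 : E 1 = 0 := by
    have hcon : IntegrableOn (fun _ : ℝ => E 1) (Set.Ioi (1:ℝ)) := by
      apply hEint.congr_fun _ measurableSet_Ioi
      exact fun x hx => hEconst x (h1sub hx) 1 (by norm_num)
    rcases (integrableOn_const_iff (C := E 1)).mp hcon with h | h
    · exact enorm_eq_zero.mp h
    · rw [Real.volume_Ioi] at h
      exact absurd h (lt_irrefl _)
  have hE0 : ∀ x ∈ Set.Ioi (0:ℝ), E x = 0 := fun x hx =>
    (hEconst x hx 1 (by norm_num)).trans hE1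
  -- v' ≤ v on Ioi 0
  have hv'le : ∀ x ∈ Set.Ioi (0:ℝ), v' x ≤ v x := by
    intro x hx
    have h0 := hE0 x hx
    have hpp : 0 ≤ (v x)^p / p := div_nonneg (Real.rpow_nonneg (hnn x hx) p) hp0.le
    have hsq : (v' x)^2 ≤ (v x)^2 := by
      simp only [hE] at h0; linarith
    calc v' x ≤ |v' x| := le_abs_self _
      _ ≤ |v x| := by
          rw [← Real.sqrt_sq_eq_abs, ← Real.sqrt_sq_eq_abs]
          exact Real.sqrt_le_sqrt hsq
      _ = v x := abs_of_nonneg (hnn x hx)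
  -- Gronwall: g = exp(-x) * v x is antitone on Ici 0
  have hgder : ∀ x ∈ Set.Ioi (0:ℝ), HasDerivAt (fun y => Real.exp (-y) * v y)
      (-Real.exp (-x) * v x + Real.exp (-x) * v' x) x := by
    intro x hx
    have he : HasDerivAt (fun y : ℝ => Real.exp (-y)) (-Real.exp (-x)) x := by
      have h := (Real.hasDerivAt_exp (-x)).comp x (hasDerivAt_neg x)
      refine h.congr_deriv ?_; ring
    exact he.mul (hd1 x hx)
  have hg : AntitoneOn (fun x => Real.exp (-x) * v x) (Set.Ici 0) := by
    apply antitoneOn_of_deriv_nonpos (convex_Ici 0)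
    · exact ((Real.continuous_exp.comp continuous_neg).continuousOn).mul hvc
    · rw [interior_Ici]
      exact fun x hx => ((hgder x hx).differentiableAt).differentiableWithinAt
    · rw [interior_Ici]
      intro x hx
      rw [(hgder x hx).deriv]
      have h1 := hv'le x hx
      have h2 : 0 < Real.exp (-x) := Real.exp_pos _
      nlinarith
  -- conclude v ≡ 0
  apply hx0
  have h1 : Real.exp (-x0) * v x0 ≤ Real.exp (-(0:ℝ)) * v 0 :=
    hg (Set.self_mem_Ici) hx0mem hx0mem
  rw [hv0, mul_zero] at h1
  have h2 := hvnn x0 hx0mem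
  have h3 : 0 < Real.exp (-x0) := Real.exp_pos _
  nlinarith
end

section
/- Let p > 2 be a real number and let d ≠ 0 be a real number. Then the solution v of the initial value problem v''(x) = v(x) - |v(x)|^(p-2)·v(x), v(0) = 0, v'(0) = d, is defined on all of ℝ and is periodic: there exists T > 0 such that v(x + T) = v(x) for all x ∈ ℝ. -/
open Real MeasureTheory Set Filter Topology

noncomputable section

/-- the nonlinearity -/
def nl (p u : ℝ) : ℝ := |u| ^ (p - 2) * u

lemma abs_rpow_eq_sq (u q : ℝ) : |u| ^ q = (u ^ 2) ^ (q / 2) := by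
  rw [show u ^ 2 = |u| ^ 2 by rw [sq_abs], ← Real.rpow_natCast |u| 2,
    ← Real.rpow_mul (abs_nonneg u)]
  norm_num
  rw [mul_div_cancel₀]
  norm_num

lemma cont_abs_rpow {q : ℝ} (hq : 0 < q) : Continuous fun u : ℝ => |u| ^ q := by
  have : (fun u : ℝ => |u| ^ q) = fun u : ℝ => (u ^ 2) ^ (q / 2) := by
    funext u; exact abs_rpow_eq_sq u q
  rw [this]
  rw [continuous_iff_continuousAt]
  intro x
  exact (Real.continuousAt_rpow_const _ _ (Or.inr (by positivity))).comp
    (continuous_pow 2).continuousAt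

lemma hasDerivAt_nl {p : ℝ} (hp : 2 < p) (u : ℝ) :
    HasDerivAt (nl p) ((p - 1) * |u| ^ (p - 2)) u := by
  rcases eq_or_ne u 0 with rfl | hu
  · -- at 0
    have h0 : (p - 1) * |(0:ℝ)| ^ (p - 2) = 0 := by
      rw [abs_zero, Real.zero_rpow (by linarith)]; ring
    rw [h0]
    rw [hasDerivAt_iff_tendsto_slope]
    have : Tendsto (fun t : ℝ => |t| ^ (p - 2)) (𝓝[≠] 0) (𝓝 0) := by
      have := Tendsto.mono_left ((cont_abs_rpow (q := p - 2) (by linarith)).tendsto 0)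
        (nhdsWithin_le_nhds (s := ({0}ᶜ : Set ℝ)))
      simpa [Real.zero_rpow (show p - 2 ≠ 0 by linarith)] using this
    refine this.congr' ?_
    filter_upwards [self_mem_nhdsWithin] with t ht
    have ht' : (t:ℝ) ≠ 0 := ht
    simp [slope, nl, Real.zero_rpow (show p - 2 ≠ 0 by linarith)]
    field_simp
  · -- away from 0
    have hu2 : u ^ 2 ≠ 0 := pow_ne_zero 2 hu
    have hu2' : (0:ℝ) < u ^ 2 := by positivity
    have hpow : HasDerivAt (fun t : ℝ => t ^ 2) ((2:ℕ) * u ^ (2-1)) u := hasDerivAt_pow 2 u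
    have hr : HasDerivAt (fun s : ℝ => s ^ ((p - 2) / 2))
        (((p - 2) / 2) * (u ^ 2) ^ ((p - 2) / 2 - 1)) (u ^ 2) :=
      Real.hasDerivAt_rpow_const (Or.inl hu2)
    have h1 : HasDerivAt (fun t : ℝ => (t ^ 2) ^ ((p - 2) / 2))
        (((2:ℕ) * u ^ (2-1)) * ((p - 2) / 2) * (u ^ 2) ^ ((p - 2) / 2 - 1)) u :=
      HasDerivAt.rpow_const hpow (Or.inl hu2)
    have h2 : HasDerivAt (fun t : ℝ => (t ^ 2) ^ ((p - 2) / 2) * id t) _ u := h1.mul (hasDerivAt_id u)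
    have heq : (fun t : ℝ => (t ^ 2) ^ ((p - 2) / 2) * id t) = nl p := by
      funext t; rw [nl, abs_rpow_eq_sq]; rfl
    rw [heq] at h2
    convert h2 using 1
    have key : (u ^ 2) ^ ((p - 2) / 2 - 1) * u ^ 2 = (u ^ 2) ^ ((p - 2) / 2) := by
      nth_rewrite 2 [show (p-2)/2 = ((p-2)/2 - 1) + 1 by ring]
      rw [Real.rpow_add_one hu2]
    have habs : |u| ^ (p - 2) = (u ^ 2) ^ ((p - 2)/2) := abs_rpow_eq_sq u (p-2)
    rw [habs, ← key]
    simp only [id]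
    ring

/-- |u|^p = nl p u * u -/
lemma abs_rpow_eq_nl_mul {p : ℝ} (hp : 2 < p) (u : ℝ) : |u| ^ p = nl p u * u := by
  rcases eq_or_ne u 0 with rfl | hu
  · simp [nl, Real.zero_rpow (show p ≠ 0 by linarith)]
  · rw [nl, mul_assoc, show u * u = |u| ^ (2:ℝ) by rw [Real.rpow_two, sq_abs, pow_two],
      ← Real.rpow_add (abs_pos.mpr hu)]
    norm_num

lemma hasDerivAt_absp {p : ℝ} (hp : 2 < p) (u : ℝ) :
    HasDerivAt (fun t : ℝ => |t| ^ p) (p * nl p u) u := by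
  have h : HasDerivAt (fun t : ℝ => nl p t * id t) _ u := (hasDerivAt_nl hp u).mul (hasDerivAt_id u)
  have heq : (fun t : ℝ => nl p t * id t) = fun t : ℝ => |t| ^ p := by
    funext t; rw [abs_rpow_eq_nl_mul hp]; rfl
  rw [heq] at h
  convert h using 1
  simp only [id, nl]
  ring

lemma contDiff_nl {p : ℝ} (hp : 2 < p) : ContDiff ℝ 1 (nl p) := by
  rw [contDiff_one_iff_deriv]
  constructor
  · exact fun u => (hasDerivAt_nl hp u).differentiableAt
  · have : deriv (nl p) = fun u => (p - 1) * |u| ^ (p - 2) := by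
      funext u; exact (hasDerivAt_nl hp u).deriv
    rw [this]
    exact continuous_const.mul (cont_abs_rpow (by linarith))


/-- the vector field on ℝ × ℝ -/
def fld (p : ℝ) (z : ℝ × ℝ) : ℝ × ℝ := (z.2, z.1 - nl p z.1)

/-- the energy -/
def en (p : ℝ) (z : ℝ × ℝ) : ℝ := z.2 ^ 2 - z.1 ^ 2 + (2 / p) * |z.1| ^ p

lemma contDiff_fld {p : ℝ} (hp : 2 < p) : ContDiff ℝ 1 (fld p) :=
  ContDiff.prodMk contDiff_snd (contDiff_fst.sub ((contDiff_nl hp).comp contDiff_fst))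

lemma continuous_en {p : ℝ} (hp : 2 < p) : Continuous (en p) := by
  unfold en
  exact ((continuous_snd.pow 2).sub (continuous_fst.pow 2)).add
    (continuous_const.mul ((cont_abs_rpow (show (0:ℝ) < p by linarith)).comp continuous_fst))

/-- |u|^p = |u|^(p-2) * u^2 -/
lemma abs_rpow_split {p : ℝ} (hp : 2 < p) (u : ℝ) : |u| ^ p = |u| ^ (p - 2) * u ^ 2 := by
  rcases eq_or_ne u 0 with rfl | hu
  · simp [Real.zero_rpow (show p ≠ 0 by linarith)]
  · rw [show u ^ 2 = |u| ^ (2:ℝ) by rw [Real.rpow_two, sq_abs],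
      ← Real.rpow_add (abs_pos.mpr hu)]
    norm_num

/-- bound for the energy level set -/
lemma level_bound {p : ℝ} (hp : 2 < p) (d : ℝ) :
    ∃ R : ℝ, |d| ≤ R ∧ 0 < R ∧ ∀ z : ℝ × ℝ, en p z = d ^ 2 → ‖z‖ ≤ R := by
  set M : ℝ := max (max 1 (p ^ (1 / (p - 2)))) |d| with hM
  have hM1 : (1:ℝ) ≤ M := le_trans (le_max_left _ _) (le_max_left _ _)
  have hM0 : (0:ℝ) < M := by linarith
  have hd0 : (0:ℝ) ≤ |d| := abs_nonneg d
  have hdM : |d| ≤ M := le_max_right _ _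
  refine ⟨|d| + M, by linarith, by linarith, ?_⟩
  intro z hz
  have hu : |z.1| ≤ M := by
    by_contra hcon
    push_neg at hcon
    have h1 : (1:ℝ) < |z.1| := lt_of_le_of_lt hM1 hcon
    have hp2 : p ≤ |z.1| ^ (p - 2) := by
      have hple : p ^ (1 / (p - 2)) ≤ |z.1| :=
        le_of_lt (lt_of_le_of_lt (le_trans (le_max_right _ _) (le_max_left _ _)) hcon)
      calc p = (p ^ (1 / (p - 2))) ^ (p - 2) := by
              rw [← Real.rpow_mul (show (0:ℝ) ≤ p by linarith), one_div,
                inv_mul_cancel₀ (show p - 2 ≠ 0 by linarith), Real.rpow_one]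
        _ ≤ |z.1| ^ (p - 2) := Real.rpow_le_rpow (by positivity) hple (by linarith)
    have key : 2 * z.1 ^ 2 ≤ (2 / p) * |z.1| ^ p := by
      rw [abs_rpow_split hp]
      have h2 : 2 ≤ (2 / p) * |z.1| ^ (p - 2) := by
        rw [div_mul_eq_mul_div, le_div_iff₀ (by linarith)]
        nlinarith
      nlinarith [sq_nonneg z.1]
    have hz2 : (0:ℝ) ≤ z.2 ^ 2 := sq_nonneg _
    -- en z = d^2 gives z.1^2 ≤ d^2
    have : z.1 ^ 2 ≤ d ^ 2 := by
      unfold en at hz; nlinarith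
    have h5 : |z.1| ≤ |d| := by
      rw [← sq_abs, ← sq_abs d] at this
      nlinarith [abs_nonneg z.1, abs_nonneg d]
    exact hcon.not_ge (le_trans h5 (le_max_right _ _))
  have hw : |z.2| ≤ |d| + M := by
    have h1 : (0:ℝ) ≤ (2 / p) * |z.1| ^ p := by positivity
    have h2 : z.2 ^ 2 ≤ d ^ 2 + M ^ 2 := by
      unfold en at hz
      nlinarith [sq_abs z.1, abs_nonneg z.1]
    have h3 : z.2 ^ 2 ≤ (|d| + M) ^ 2 := by nlinarith [sq_abs d, abs_nonneg d, sq_abs z.2]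
    rw [← sq_abs z.2] at h3
    nlinarith [abs_nonneg z.2, hd0, hM0]
  rw [Prod.norm_def]
  simp only [Real.norm_eq_abs]
  exact max_le (le_trans hu (by linarith [abs_nonneg d])) hw


/-- energy is conserved along solutions (pointwise derivative) -/
lemma hasDerivAt_energy {p : ℝ} (hp : 2 < p) {v v' : ℝ → ℝ} {x : ℝ}
    (hv : HasDerivAt v (v' x) x) (hv' : HasDerivAt v' (v x - nl p (v x)) x) :
    HasDerivAt (fun t => v' t ^ 2 - v t ^ 2 + (2 / p) * |v t| ^ p) 0 x := by
  have h1 : HasDerivAt (fun t => v' t ^ 2) (2 * v' x * (v x - nl p (v x))) x := by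
    simpa [mul_comm, mul_assoc, mul_left_comm, Function.comp_def] using
      ((hasDerivAt_pow 2 (v' x)).comp x hv')
  have h2 : HasDerivAt (fun t => v t ^ 2) (2 * v x * v' x) x := by
    simpa [mul_comm, mul_assoc, mul_left_comm, Function.comp_def] using ((hasDerivAt_pow 2 (v x)).comp x hv)
  have h3 : HasDerivAt (fun t => |v t| ^ p) (p * nl p (v x) * v' x) x :=
    (hasDerivAt_absp hp (v x)).comp x hv
  have h : HasDerivAt (fun t => v' t ^ 2 - v t ^ 2 + (2 / p) * |v t| ^ p) _ x :=
    ((h1.sub h2).add (h3.const_mul (2 / p)))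
  convert h using 1
  field_simp [nl]
  ring

/-- constancy from zero derivative on an open interval -/
lemma const_of_hasDerivAt_zero_Ioo {f : ℝ → ℝ} {a b : ℝ}
    (h : ∀ x ∈ Ioo a b, HasDerivAt f 0 x) {s t : ℝ}
    (hs : s ∈ Ioo a b) (ht : t ∈ Ioo a b) : f s = f t := by
  wlog hst : s ≤ t generalizing s t
  · exact (this ht hs (by linarith)).symm
  have hsub : Icc s t ⊆ Ioo a b := fun x hx => ⟨lt_of_lt_of_le hs.1 hx.1, lt_of_le_of_lt hx.2 ht.2⟩
  have := constant_of_has_deriv_right_zero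
    (f := f) (a := s) (b := t)
    (fun x hx => (h x (hsub hx)).continuousAt.continuousWithinAt)
    (fun x hx => (h x (hsub (Ico_subset_Icc_self hx))).hasDerivWithinAt)
  exact (this t ⟨hst, le_rfl⟩).symm

/-- global uniqueness for C¹ autonomous fields -/
lemma ode_uniq {F : ℝ × ℝ → ℝ × ℝ} (hF : ContDiff ℝ 1 F) {γ σ : ℝ → ℝ × ℝ}
    (hγ : ∀ t, HasDerivAt γ (F (γ t)) t) (hσ : ∀ t, HasDerivAt σ (F (σ t)) t)
    {t₀ : ℝ} (h0 : γ t₀ = σ t₀) : ∀ t, γ t = σ t := by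
  have hγc : Continuous γ := continuous_iff_continuousAt.mpr fun t => (hγ t).continuousAt
  have hσc : Continuous σ := continuous_iff_continuousAt.mpr fun t => (hσ t).continuousAt
  set A : Set ℝ := {t | γ t = σ t} with hA
  have hclosed : IsClosed A := isClosed_eq hγc hσc
  have hopen : IsOpen A := by
    rw [isOpen_iff_mem_nhds]
    intro t₁ ht₁
    obtain ⟨K, s, hs, hlip⟩ := (hF.contDiffAt (x := γ t₁)).exists_lipschitzOnWith
    obtain ⟨r, hr, hball⟩ := Metric.mem_nhds_iff.mp hs
    have hγn : ∀ᶠ t in 𝓝 t₁, γ t ∈ Metric.ball (γ t₁) r :=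
      hγc.continuousAt (Metric.ball_mem_nhds _ hr)
    have hσn : ∀ᶠ t in 𝓝 t₁, σ t ∈ Metric.ball (γ t₁) r := by
      have : σ t₁ ∈ Metric.ball (γ t₁) r := by rw [← ht₁]; exact Metric.mem_ball_self hr
      exact hσc.continuousAt (Metric.isOpen_ball.mem_nhds this)
    obtain ⟨ε, hε, hband⟩ := Metric.eventually_nhds_iff_ball.mp (hγn.and hσn)
    have heq : EqOn γ σ (Ioo (t₁ - ε) (t₁ + ε)) := by
      apply ODE_solution_unique_of_mem_Ioo
        (v := fun _ z => F z) (s := fun _ => Metric.ball (γ t₁) r)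
        (K := K) (fun _ _ => hlip.mono hball)
        (by rw [mem_Ioo]; constructor <;> linarith)
        (fun t ht => ⟨hγ t, (hband t (by rw [Real.ball_eq_Ioo]; exact ht)).1⟩)
        (fun t ht => ⟨hσ t, (hband t (by rw [Real.ball_eq_Ioo]; exact ht)).2⟩)
        ht₁
    have : Ioo (t₁ - ε) (t₁ + ε) ⊆ A := fun t ht => heq ht
    exact Filter.mem_of_superset (Ioo_mem_nhds (by linarith) (by linarith)) this
  have : A = univ := by
    rcases isClopen_iff.mp ⟨hclosed, hopen⟩ with h | h
    · exact absurd (h ▸ h0 : (t₀:ℝ) ∈ (∅ : Set ℝ)) (by simp)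
    · exact h
  intro t
  have : t ∈ A := this ▸ mem_univ t
  exact this


section GlobalExist

open Manifold

variable {E : Type*} [NormedAddCommGroup E] [NormedSpace ℝ E]

lemma hasMFDerivAt_iff_hasDerivAt' {γ : ℝ → E} {t : ℝ} {c : E} :
    HasMFDerivAt 𝓘(ℝ, ℝ) 𝓘(ℝ, E) γ t ((1 : ℝ →L[ℝ] ℝ).smulRight c) ↔ HasDerivAt γ c t := by
  rw [hasDerivAt_iff_hasFDerivAt]
  exact hasMFDerivAt_iff_hasFDerivAt

lemma contMDiff_section_of_contDiff {V : E → E} (hV : ContDiff ℝ 1 V) :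
    ContMDiff 𝓘(ℝ, E) 𝓘(ℝ, E).tangent 1
      (fun x => (⟨x, V x⟩ : TangentBundle 𝓘(ℝ, E) E)) := by
  intro x₀
  refine (Bundle.contMDiffAt_section x₀).mpr ?_
  have : (fun x => (trivializationAt E (TangentSpace 𝓘(ℝ, E)) x₀ ⟨x, V x⟩).2) = V := by
    funext x
    rw [TangentBundle.trivializationAt_apply]
    simp [chartAt_self_eq]
  rw [this]
  exact hV.contDiffAt.contMDiffAt

variable [CompleteSpace E]

/-- local solutions of uniform lifespan for bounded Lipschitz fields -/
lemma exists_local_curve {V : E → E} {L : NNReal} (hlip : LipschitzWith L V)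
    {C : ℝ} (hC : 0 < C) (hbd : ∀ z, ‖V z‖ ≤ C) (z₀ : E) :
    ∃ γ : ℝ → E, γ 0 = z₀ ∧ ∀ t ∈ Ioo (-(C⁻¹)) C⁻¹, HasDerivAt γ (V (γ t)) t := by
  have hpl : IsPicardLindelof (fun _ : ℝ => V)
      (⟨0, by constructor <;> simp [le_of_lt, inv_pos.mpr hC]⟩ : Icc (-(C⁻¹)) C⁻¹) z₀ 1 0
      ⟨C, hC.le⟩ L :=
    { lipschitzOnWith := fun _ _ => hlip.lipschitzOnWith
      continuousOn := fun _ _ => continuousOn_const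
      norm_le := fun _ _ x _ => hbd x
      mul_max_le := by
        show C * max (C⁻¹ - 0) (0 - -C⁻¹) ≤ ((1:NNReal):ℝ) - ((0:NNReal):ℝ)
        rw [sub_zero, zero_sub, neg_neg, max_self, mul_inv_cancel₀ (ne_of_gt hC)]
        simp }
  obtain ⟨f, hf0, hf⟩ := hpl.exists_eq_forall_mem_Icc_hasDerivWithinAt₀
  exact ⟨f, hf0, fun t ht => (hf t (Ioo_subset_Icc_self ht)).hasDerivAt
    (Icc_mem_nhds ht.1 ht.2)⟩

/-- global existence for C¹ bounded Lipschitz fields -/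
lemma exists_global_solution {V : E → E} (hV : ContDiff ℝ 1 V) {L : NNReal}
    (hlip : LipschitzWith L V) {C : ℝ} (hC : 0 < C) (hbd : ∀ z, ‖V z‖ ≤ C) (z₀ : E) :
    ∃ γ : ℝ → E, γ 0 = z₀ ∧ ∀ t, HasDerivAt γ (V (γ t)) t := by
  set Vt : (x : E) → TangentSpace 𝓘(ℝ, E) x := V with hVt
  have hsec : ContMDiff 𝓘(ℝ, E) 𝓘(ℝ, E).tangent 1
      (fun x => (⟨x, Vt x⟩ : TangentBundle 𝓘(ℝ, E) E)) := contMDiff_section_of_contDiff hV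
  have h : ∀ x : E, ∃ γ : ℝ → E, γ 0 = x ∧
      IsMIntegralCurveOn γ Vt (Ioo (-(C⁻¹)) C⁻¹) := by
    intro x
    obtain ⟨γ, h0, hγ⟩ := exists_local_curve hlip hC hbd x
    exact ⟨γ, h0, fun t ht => (hasMFDerivAt_iff_hasDerivAt'.mpr (hγ t ht)).hasMFDerivWithinAt⟩
  obtain ⟨γ, h0, hγ⟩ := exists_isMIntegralCurve_of_isMIntegralCurveOn hsec
    (inv_pos.mpr hC) h z₀
  exact ⟨γ, h0, fun t => hasMFDerivAt_iff_hasDerivAt'.mp (hγ t)⟩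

end GlobalExist


lemma lipschitz_of_c1_cs {h : ℝ → ℝ} (hh : ContDiff ℝ 1 h) (hsupp : HasCompactSupport h) :
    ∃ L : NNReal, LipschitzWith L h := by
  obtain ⟨hdiff, hcont⟩ := contDiff_one_iff_deriv.mp hh
  obtain ⟨K, hK⟩ := (hsupp.deriv).exists_bound_of_continuous hcont
  refine ⟨K.toNNReal, lipschitzWith_of_nnnorm_deriv_le hdiff fun x => ?_⟩
  rw [← NNReal.coe_le_coe, coe_nnnorm, Real.coe_toNNReal']
  exact (hK x).trans (le_max_left _ _)

lemma hasDerivAt_fst' {γ : ℝ → ℝ × ℝ} {c : ℝ × ℝ} {t : ℝ} (h : HasDerivAt γ c t) :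
    HasDerivAt (fun s => (γ s).1) c.1 t := by
  simpa [Function.comp_def] using (ContinuousLinearMap.fst ℝ ℝ ℝ).hasFDerivAt.comp_hasDerivAt t h

lemma hasDerivAt_snd' {γ : ℝ → ℝ × ℝ} {c : ℝ × ℝ} {t : ℝ} (h : HasDerivAt γ c t) :
    HasDerivAt (fun s => (γ s).2) c.2 t := by
  simpa [Function.comp_def] using (ContinuousLinearMap.snd ℝ ℝ ℝ).hasFDerivAt.comp_hasDerivAt t h

/-- main existence result -/
lemma exists_solution_main {p : ℝ} (hp : 2 < p) (d : ℝ) :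
    ∃ v v' : ℝ → ℝ, (∀ x, HasDerivAt v (v' x) x) ∧
      (∀ x, HasDerivAt v' (v x - nl p (v x)) x) ∧ v 0 = 0 ∧ v' 0 = d := by
  obtain ⟨R, hdR, hR0, hlev⟩ := level_bound hp d
  set B : ContDiffBump (0:ℝ) := ⟨R+1, R+2, by linarith, by linarith⟩ with hB
  set g : ℝ → ℝ := fun u => u - nl p u with hg
  set h₁ : ℝ → ℝ := fun u => B u * u with hh₁
  set h₂ : ℝ → ℝ := fun u => B u * g u with hh₂
  have hgc : ContDiff ℝ 1 g := contDiff_id.sub (contDiff_nl hp)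
  have hBc : ContDiff ℝ 1 (⇑B) := B.contDiff
  have hc₁ : ContDiff ℝ 1 h₁ := hBc.mul contDiff_id
  have hc₂ : ContDiff ℝ 1 h₂ := hBc.mul hgc
  have hzero : ∀ u : ℝ, (R+2) < |u| → B u = 0 := by
    intro u hu
    apply B.zero_of_le_dist
    simp only [Real.dist_eq, sub_zero]
    calc (B.rOut : ℝ) = R + 2 := rfl
      _ ≤ |u| := le_of_lt hu
  have hone : ∀ u : ℝ, |u| ≤ R + 1 → B u = 1 := by
    intro u hu
    apply B.one_of_mem_closedBall
    simpa [Metric.mem_closedBall, Real.dist_eq] using hu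
  have hcs : ∀ h : ℝ → ℝ, (∀ u, (R+2) < |u| → h u = 0) → HasCompactSupport h := by
    intro h hh
    apply HasCompactSupport.intro (isCompact_closedBall (0:ℝ) (R+2))
    intro x hx
    apply hh
    simpa [Metric.mem_closedBall, Real.dist_eq] using hx
  obtain ⟨L₁, hL₁⟩ := lipschitz_of_c1_cs hc₁ (hcs h₁ fun u hu => by simp [hh₁, hzero u hu])
  obtain ⟨L₂, hL₂⟩ := lipschitz_of_c1_cs hc₂ (hcs h₂ fun u hu => by simp [hh₂, hzero u hu])
  set Ft : ℝ × ℝ → ℝ × ℝ := fun z => (h₁ z.2, h₂ z.1) with hFt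
  have hFtc : ContDiff ℝ 1 Ft := (hc₁.comp contDiff_snd).prodMk (hc₂.comp contDiff_fst)
  have hFtl : LipschitzWith (max (L₁ * 1) (L₂ * 1)) Ft :=
    (hL₁.comp LipschitzWith.prod_snd).prodMk (hL₂.comp LipschitzWith.prod_fst)
  -- bound
  have hBle : ∀ u : ℝ, B u ≤ 1 := fun u => B.le_one
  set C : ℝ := (R+2) + (R+2) ^ (p-2) * (R+2) with hC
  have hCR : R + 2 ≤ C := by
    have : (0:ℝ) ≤ (R+2) ^ (p-2) * (R+2) := by positivity
    linarith
  have hC0 : 0 < C := by linarith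
  have hb₁ : ∀ u : ℝ, |h₁ u| ≤ C := by
    intro u
    rcases le_or_gt |u| (R+2) with h | h
    · calc |h₁ u| = B u * |u| := by
            rw [hh₁]; simp [abs_mul, abs_of_nonneg (B.nonneg (x := u))]
        _ ≤ 1 * (R+2) := mul_le_mul (hBle u) h (abs_nonneg u) zero_le_one
        _ ≤ C := by linarith
    · simp [hh₁, hzero u h, hC0.le]
  have hb₂ : ∀ u : ℝ, |h₂ u| ≤ C := by
    intro u
    rcases le_or_gt |u| (R+2) with h | h
    · have hgu : |g u| ≤ C := by
        have h1 : |nl p u| ≤ (R+2) ^ (p-2) * (R+2) := by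
          rw [nl, abs_mul, abs_of_nonneg (Real.rpow_nonneg (abs_nonneg u) _)]
          exact mul_le_mul (Real.rpow_le_rpow (abs_nonneg u) h (by linarith)) h
            (abs_nonneg u) (by positivity)
        calc |g u| ≤ |u| + |nl p u| := by rw [hg]; exact (abs_sub _ _)
          _ ≤ (R+2) + (R+2) ^ (p-2) * (R+2) := add_le_add h h1
      calc |h₂ u| = B u * |g u| := by
            rw [hh₂]; simp [abs_mul, abs_of_nonneg (B.nonneg (x := u))]
        _ ≤ 1 * C := mul_le_mul (hBle u) hgu (abs_nonneg _) zero_le_one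
        _ = C := one_mul C
    · simp [hh₂, hzero u h, hC0.le]
  have hbd : ∀ z : ℝ × ℝ, ‖Ft z‖ ≤ C := by
    intro z
    rw [hFt, Prod.norm_def]
    simp only [Real.norm_eq_abs]
    exact max_le (hb₁ z.2) (hb₂ z.1)
  obtain ⟨γ, hγ0, hγ⟩ := exists_global_solution hFtc hFtl hC0 hbd ((0:ℝ), d)
  have hγc : Continuous γ := continuous_iff_continuousAt.mpr fun t => (hγ t).continuousAt
  have hagree : ∀ z : ℝ × ℝ, ‖z‖ ≤ R + 1 → Ft z = fld p z := by
    intro z hz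
    rw [Prod.norm_def] at hz
    simp only [Real.norm_eq_abs] at hz
    have hz1 : |z.1| ≤ R + 1 := le_trans (le_max_left _ _) hz
    have hz2 : |z.2| ≤ R + 1 := le_trans (le_max_right _ _) hz
    rw [hFt, fld]
    simp [hh₁, hh₂, hone _ hz1, hone _ hz2, hg]
  set A : Set ℝ := {t | en p (γ t) = d ^ 2} with hA
  have hAclosed : IsClosed A := isClosed_eq ((continuous_en hp).comp hγc) continuous_const
  have h0A : (0:ℝ) ∈ A := by
    simp only [hA, Set.mem_setOf_eq, hγ0, en]
    simp [Real.zero_rpow (show p ≠ 0 by linarith)]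
  have hAopen : IsOpen A := by
    rw [isOpen_iff_mem_nhds]
    intro t₁ ht₁
    have hRt : ‖γ t₁‖ ≤ R := hlev _ ht₁
    have hev : ∀ᶠ t in 𝓝 t₁, ‖γ t‖ < R + 1 :=
      hγc.norm.continuousAt (Iio_mem_nhds (by linarith))
    obtain ⟨δ, hδ, hball⟩ := Metric.eventually_nhds_iff_ball.mp hev
    have hIoo : ∀ t ∈ Ioo (t₁ - δ) (t₁ + δ), HasDerivAt (fun s => en p (γ s)) 0 t := by
      intro t ht
      have htb : ‖γ t‖ < R + 1 := hball t (by rw [Real.ball_eq_Ioo]; exact ht)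
      have hder := hγ t
      rw [hagree _ htb.le] at hder
      exact hasDerivAt_energy hp (hasDerivAt_fst' hder) (hasDerivAt_snd' hder)
    have hsub : Ioo (t₁ - δ) (t₁ + δ) ⊆ A := by
      intro t ht
      have heq := const_of_hasDerivAt_zero_Ioo hIoo ht
        (⟨by linarith, by linarith⟩ : t₁ ∈ Ioo (t₁ - δ) (t₁ + δ))
      have := ht₁
      rw [hA, Set.mem_setOf_eq] at this ⊢
      rw [heq]
      exact this
    exact Filter.mem_of_superset (Ioo_mem_nhds (by linarith) (by linarith)) hsub
  have hAuniv : A = univ := by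
    rcases isClopen_iff.mp ⟨hAclosed, hAopen⟩ with h | h
    · exact absurd (h ▸ h0A) (by simp)
    · exact h
  have hbound : ∀ t, ‖γ t‖ ≤ R := fun t => hlev _ (by
    have : t ∈ A := hAuniv ▸ Set.mem_univ t
    rwa [hA, Set.mem_setOf_eq] at this)
  have hODE : ∀ t, HasDerivAt γ (fld p (γ t)) t := by
    intro t
    have := hγ t
    rwa [hagree _ (le_trans (hbound t) (by linarith))] at this
  refine ⟨fun t => (γ t).1, fun t => (γ t).2, ?_, ?_, ?_, ?_⟩
  · exact fun x => hasDerivAt_fst' (hODE x)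
  · exact fun x => hasDerivAt_snd' (hODE x)
  · show (γ 0).1 = 0; rw [hγ0]
  · show (γ 0).2 = d; rw [hγ0]


lemma nl_odd {p : ℝ} (u : ℝ) : nl p (-u) = -(nl p u) := by
  simp [nl, abs_neg]

/-- if f' ≥ c > 0 eventually and f is bounded above, contradiction -/
lemma deriv_ge_unbounded {f f' : ℝ → ℝ} (hf : ∀ x, HasDerivAt f (f' x) x)
    {c T B : ℝ} (hc : 0 < c) (hge : ∀ x ≥ T, c ≤ f' x) (hbd : ∀ x ≥ T, f x ≤ B) :
    False := by
  set φ : ℝ → ℝ := fun x => f x - c * x with hφdef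
  have hφ : ∀ x, HasDerivAt φ (f' x - c) x := by
    intro x
    have h1 : HasDerivAt (fun x : ℝ => c * x) c x := by
      simpa using (hasDerivAt_id x).const_mul c
    exact (hf x).sub h1
  have hmono : MonotoneOn φ (Ici T) := by
    apply monotoneOn_of_deriv_nonneg (convex_Ici T)
    · exact Continuous.continuousOn (by
        exact continuous_iff_continuousAt.mpr fun x => (hφ x).continuousAt)
    · intro x hx
      exact (hφ x).differentiableAt.differentiableWithinAt
    · intro x hx
      rw [interior_Ici] at hx
      rw [(hφ x).deriv]
      linarith [hge x (le_of_lt hx)]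
  have hfT : f T ≤ B := hbd T le_rfl
  have key : ∀ x, T ≤ x → f T + c * (x - T) ≤ f x := by
    intro x hx
    have h1 : φ T ≤ φ x := hmono self_mem_Ici hx hx
    simp only [hφdef] at h1
    nlinarith
  have hA : 0 < (B + 1 - f T) / c := div_pos (by linarith) hc
  have h2 := key (T + (B + 1 - f T) / c) (by linarith)
  have h3 := hbd (T + (B + 1 - f T) / c) (by linarith)
  have h4 : c * ((T + (B + 1 - f T) / c) - T) = B + 1 - f T := by field_simp; ring
  linarith

/-- derivative of t ↦ g (c - t) -/
lemma hasDerivAt_comp_const_sub {g : ℝ → ℝ} {g' : ℝ → ℝ}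
    (hg : ∀ x, HasDerivAt g (g' x) x) (c t : ℝ) :
    HasDerivAt (fun s => g (c - s)) (-(g' (c - t))) t := by
  have h1 : HasDerivAt (fun s : ℝ => c - s) (-1) t := by
    simpa using (hasDerivAt_id t).const_sub c
  simpa [Function.comp_def] using (hg (c - t)).comp t h1

lemma hasDerivAt_comp_neg {g : ℝ → ℝ} {g' : ℝ → ℝ}
    (hg : ∀ x, HasDerivAt g (g' x) x) (t : ℝ) :
    HasDerivAt (fun s => g (-s)) (-(g' (-t))) t := by
  simpa using hasDerivAt_comp_const_sub hg 0 t

/-- the key lemma : for d > 0 any global solution is periodic -/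
lemma periodic_pos {p : ℝ} (hp : 2 < p) {d : ℝ} (hd : 0 < d) {v v' : ℝ → ℝ}
    (hv : ∀ x, HasDerivAt v (v' x) x)
    (hv' : ∀ x, HasDerivAt v' (v x - nl p (v x)) x)
    (h0 : v 0 = 0) (h0' : v' 0 = d) :
    ∃ T > 0, ∀ x, v (x + T) = v x := by
  have hvc : Continuous v := continuous_iff_continuousAt.mpr fun x => (hv x).continuousAt
  have hv'c : Continuous v' := continuous_iff_continuousAt.mpr fun x => (hv' x).continuousAt
  -- energy conservation
  set Ef : ℝ → ℝ := fun t => v' t ^ 2 - v t ^ 2 + (2 / p) * |v t| ^ p with hEf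
  have hE : ∀ t, Ef t = d ^ 2 := by
    have hdiff : Differentiable ℝ Ef :=
      fun t => (hasDerivAt_energy hp (hv t) (hv' t)).differentiableAt
    have hconst := is_const_of_deriv_eq_zero hdiff
      (fun t => (hasDerivAt_energy hp (hv t) (hv' t)).deriv)
    intro t
    calc Ef t = Ef 0 := hconst t 0
      _ = d ^ 2 := by
        simp [hEf, h0, h0', Real.zero_rpow (show p ≠ 0 by linarith)]
  obtain ⟨R, hdR, hR0, hlev⟩ := level_bound hp d
  have hbound : ∀ t, |v t| ≤ R ∧ |v' t| ≤ R := by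
    intro t
    have := hlev (v t, v' t) (hE t)
    rw [Prod.norm_def] at this
    simp only [Real.norm_eq_abs] at this
    exact ⟨le_trans (le_max_left _ _) this, le_trans (le_max_right _ _) this⟩
  -- there is a positive zero of v'
  have hzero : ∃ x₀ > 0, v' x₀ = 0 := by
    by_contra hno
    push_neg at hno
    -- v' is positive on [0, ∞)
    have hpos : ∀ x, 0 ≤ x → 0 < v' x := by
      intro x hx
      rcases eq_or_lt_of_le hx with rfl | hx'
      · rw [h0']; exact hd
      rcases lt_trichotomy (v' x) 0 with hlt | heq | hgt
      · have h01 : (0:ℝ) ∈ Ioo (v' x) (v' 0) := by rw [h0']; exact ⟨hlt, hd⟩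
        obtain ⟨c, hc, hvc0⟩ := intermediate_value_Ioo' (le_of_lt hx') hv'c.continuousOn h01
        exact absurd hvc0 (hno c hc.1)
      · exact absurd heq (hno x hx')
      · exact hgt
    -- v is strictly monotone on [0, ∞)
    have hsm : StrictMonoOn v (Ici 0) := by
      apply strictMonoOn_of_deriv_pos (convex_Ici 0) hvc.continuousOn
      intro x hx
      rw [interior_Ici] at hx
      rw [(hv x).deriv]
      exact hpos x (le_of_lt hx)
    -- limit of v at infinity
    set f : ℝ → ℝ := fun t => v (max t 0) with hf
    have hmono : Monotone f := by
      intro a b hab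
      exact hsm.monotoneOn (le_max_right a 0) (le_max_right b 0)
        (max_le_max hab le_rfl)
    have hbddf : BddAbove (Set.range f) := by
      refine ⟨R, ?_⟩
      rintro y ⟨t, rfl⟩
      exact le_trans (le_abs_self _) (hbound _).1
    set L : ℝ := ⨆ t, f t with hL
    have hftend : Tendsto f atTop (𝓝 L) := tendsto_atTop_ciSup hmono hbddf
    have hvtend : Tendsto v atTop (𝓝 L) := by
      apply hftend.congr'
      filter_upwards [eventually_ge_atTop (0:ℝ)] with t ht
      rw [hf]; simp [max_eq_left ht]
    have hv1L : v 1 ≤ L := by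
      have : f 1 ≤ L := le_ciSup hbddf 1
      simpa [hf] using this
    have hL0 : 0 < L := by
      have : v 0 < v 1 := hsm self_mem_Ici (by norm_num) (by norm_num)
      rw [h0] at this
      linarith
    -- the limiting square of v'
    set ψ : ℝ → ℝ := fun c => d ^ 2 + c ^ 2 - (2 / p) * |c| ^ p with hψdef
    have hψcont : Continuous ψ := by
      apply Continuous.sub (continuous_const.add (continuous_pow 2))
      exact continuous_const.mul (cont_abs_rpow (show (0:ℝ) < p by linarith))
    have hψv : ∀ t, v' t ^ 2 = ψ (v t) := by
      intro t
      have := hE t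
      rw [hEf] at this
      rw [hψdef]
      dsimp only
      linarith
    have hψtend : Tendsto (fun t => ψ (v t)) atTop (𝓝 (ψ L)) :=
      (hψcont.continuousAt).tendsto.comp hvtend
    have hsqtend : Tendsto (fun t => v' t ^ 2) atTop (𝓝 (ψ L)) := by
      apply hψtend.congr
      intro t
      rw [hψv t]
    have hψL0 : 0 ≤ ψ L :=
      ge_of_tendsto hsqtend (Eventually.of_forall fun t => sq_nonneg _)
    have hv'tend : Tendsto v' atTop (𝓝 (Real.sqrt (ψ L))) := by
      have h1 : Tendsto (fun t => Real.sqrt (ψ (v t))) atTop (𝓝 (Real.sqrt (ψ L))) :=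
        (Real.continuous_sqrt.continuousAt).tendsto.comp hψtend
      apply h1.congr'
      filter_upwards [eventually_ge_atTop (0:ℝ)] with t ht
      rw [← hψv t, Real.sqrt_sq_eq_abs, abs_of_pos (hpos t ht)]
    -- the limit of v' must be 0
    have hsqrt0 : Real.sqrt (ψ L) = 0 := by
      by_contra hne
      have hl : 0 < Real.sqrt (ψ L) := lt_of_le_of_ne (Real.sqrt_nonneg _) (Ne.symm hne)
      obtain ⟨T, hT⟩ := (hv'tend.eventually (eventually_ge_nhds
        (show Real.sqrt (ψ L) / 2 < Real.sqrt (ψ L) by linarith))).exists_forall_of_atTop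
      exact deriv_ge_unbounded hv (by linarith : 0 < Real.sqrt (ψ L) / 2) hT
        (fun x _ => le_trans (le_abs_self _) (hbound x).1)
    have hψL : ψ L = 0 := by
      rwa [Real.sqrt_eq_zero hψL0] at hsqrt0
    rw [hsqrt0] at hv'tend
    -- the limiting acceleration is nonzero
    set m : ℝ := L - nl p L with hm
    have hmne : m ≠ 0 := by
      intro hmeq
      have hL1 : L = 1 := by
        have h1 : nl p L = L := by rw [hm] at hmeq; linarith
        have h2 : |L| ^ (p - 2) = 1 := by
          rw [nl] at h1
          have h4 : (|L| ^ (p - 2) - 1) * L = 0 := by linear_combination h1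
          rcases mul_eq_zero.mp h4 with h | h
          · linarith
          · exact absurd h (ne_of_gt hL0)
        rw [abs_of_pos hL0] at h2
        have h3 : (L ^ (p - 2)) ^ ((p - 2)⁻¹) = L := by
          rw [← Real.rpow_mul (le_of_lt hL0),
            mul_inv_cancel₀ (show p - 2 ≠ 0 by linarith), Real.rpow_one]
        rw [h2, Real.one_rpow] at h3
        exact h3.symm
      rw [hψdef] at hψL
      dsimp only at hψL
      rw [hL1] at hψL
      have : (2:ℝ) / p < 1 := by
        rw [div_lt_one (by linarith)]; linarith
      simp [Real.one_rpow] at hψL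
      nlinarith
    have hmtend : Tendsto (fun t => v t - nl p (v t)) atTop (𝓝 m) := by
      have hcont : Continuous (fun u => u - nl p u) :=
        continuous_id.sub (contDiff_nl hp).continuous
      exact (hcont.continuousAt).tendsto.comp hvtend
    rcases lt_or_gt_of_ne hmne with hmneg | hmpos
    · -- m < 0 : -v' would become unbounded
      have hnegtend : Tendsto (fun t => -(v t - nl p (v t))) atTop (𝓝 (-m)) := hmtend.neg
      obtain ⟨T, hT⟩ := (hnegtend.eventually (eventually_ge_nhds
        (show -m / 2 < -m by linarith))).exists_forall_of_atTop
      have hder : ∀ x, HasDerivAt (fun t => -(v' t)) (-(v x - nl p (v x))) x :=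
        fun x => (hv' x).neg
      exact deriv_ge_unbounded hder (show (0:ℝ) < -m / 2 by linarith)
        (T := max T 0) (B := 0)
        (fun x hx => hT x (le_trans (le_max_left T 0) hx))
        (fun x hx => by
          have := hpos x (le_trans (le_max_right T 0) hx)
          linarith)
    · -- m > 0 : v' would become unbounded
      obtain ⟨T, hT⟩ := (hmtend.eventually (eventually_ge_nhds
        (show m / 2 < m by linarith))).exists_forall_of_atTop
      exact deriv_ge_unbounded hv' (show (0:ℝ) < m / 2 by linarith) hT
        (fun x _ => le_trans (le_abs_self _) (hbound x).2)
  obtain ⟨x₀, hx₀pos, hx₀⟩ := hzero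
  -- the solution as a curve
  set γ : ℝ → ℝ × ℝ := fun t => (v t, v' t) with hγdef
  have hγ : ∀ t, HasDerivAt γ (fld p (γ t)) t := fun t => (hv t).prodMk (hv' t)
  -- the odd reflection is also a solution
  set σ : ℝ → ℝ × ℝ := fun t => (-(v (-t)), v' (-t)) with hσdef
  have hσ : ∀ t, HasDerivAt σ (fld p (σ t)) t := by
    intro t
    have hσ1 : HasDerivAt (fun s => -(v (-s))) (v' (-t)) t := by
      simpa [Pi.neg_def] using (hasDerivAt_comp_neg hv t).neg
    have hσ2 : HasDerivAt (fun s => v' (-s)) (-(v (-t) - nl p (v (-t)))) t :=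
      hasDerivAt_comp_neg hv' t
    have hval : fld p (σ t) = (v' (-t), -(v (-t) - nl p (v (-t)))) := by
      rw [fld, hσdef]
      dsimp only
      rw [nl_odd]
      ring_nf
    rw [hval]
    exact hσ1.prodMk hσ2
  have hodd : ∀ t, γ t = σ t := by
    apply ode_uniq (contDiff_fld hp) hγ hσ (t₀ := 0)
    show (v 0, v' 0) = (-(v (-0)), v' (-0))
    simp [h0]
  -- the reflection about x₀ is also a solution
  set τ : ℝ → ℝ × ℝ := fun t => (v (2 * x₀ - t), -(v' (2 * x₀ - t))) with hτdef
  have hτ : ∀ t, HasDerivAt τ (fld p (τ t)) t := by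
    intro t
    have hτ1 : HasDerivAt (fun s => v (2 * x₀ - s)) (-(v' (2 * x₀ - t))) t :=
      hasDerivAt_comp_const_sub hv (2 * x₀) t
    have hτ2 : HasDerivAt (fun s => -(v' (2 * x₀ - s)))
        (v (2 * x₀ - t) - nl p (v (2 * x₀ - t))) t := by
      simpa [Pi.neg_def] using (hasDerivAt_comp_const_sub hv' (2 * x₀) t).neg
    exact hτ1.prodMk hτ2
  have hrefl : ∀ t, γ t = τ t := by
    apply ode_uniq (contDiff_fld hp) hγ hτ (t₀ := x₀)
    show (v x₀, v' x₀) = (v (2 * x₀ - x₀), -(v' (2 * x₀ - x₀)))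
    have h2 : 2 * x₀ - x₀ = x₀ := by ring
    rw [h2, hx₀]
    norm_num
  have hv_odd : ∀ s, v s = -(v (-s)) := fun s => congrArg Prod.fst (hodd s)
  have hv_refl : ∀ s, v s = v (2 * x₀ - s) := fun s => congrArg Prod.fst (hrefl s)
  refine ⟨4 * x₀, by linarith, ?_⟩
  intro x
  calc v (x + 4 * x₀) = v (2 * x₀ - (x + 4 * x₀)) := hv_refl _
    _ = v (-(x + 2 * x₀)) := by ring_nf
    _ = -(v (x + 2 * x₀)) := by
        have := hv_odd (x + 2 * x₀)
        linarith
    _ = -(v (2 * x₀ - (x + 2 * x₀))) := by rw [← hv_refl]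
    _ = -(v (-x)) := by ring_nf
    _ = v x := (hv_odd x).symm


lemma periodic_any {p : ℝ} (hp : 2 < p) {d : ℝ} (hd : d ≠ 0) {v v' : ℝ → ℝ}
    (hv : ∀ x, HasDerivAt v (v' x) x)
    (hv' : ∀ x, HasDerivAt v' (v x - nl p (v x)) x)
    (h0 : v 0 = 0) (h0' : v' 0 = d) :
    ∃ T > 0, ∀ x, v (x + T) = v x := by
  rcases hd.lt_or_gt with hneg | hpos
  · -- d < 0 : apply to the negated solution
    set w : ℝ → ℝ := fun t => -(v t) with hw
    set w' : ℝ → ℝ := fun t => -(v' t) with hw'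
    have hwv : ∀ x, HasDerivAt w (w' x) x := fun x => (hv x).neg
    have hwv' : ∀ x, HasDerivAt w' (w x - nl p (w x)) x := by
      intro x
      have h1 := (hv' x).neg
      have h2 : -(v x - nl p (v x)) = w x - nl p (w x) := by
        rw [hw]
        dsimp only
        rw [show -(v x) = -(v x) from rfl, nl_odd]
        ring
      rwa [h2] at h1
    obtain ⟨T, hT, hper⟩ := periodic_pos hp (show 0 < -d by linarith) hwv hwv'
      (by rw [hw]; dsimp only; rw [h0, neg_zero])
      (by rw [hw']; dsimp only; rw [h0'])
    refine ⟨T, hT, fun x => ?_⟩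
    have := hper x
    rw [hw] at this
    dsimp only at this
    linarith
  · exact periodic_pos hp hpos hv hv' h0 h0'

theorem stmt10 (p : ℝ) (hp : 2 < p) (d : ℝ) (hd : d ≠ 0) :
    (∃ v v' : ℝ → ℝ,
      (∀ x, HasDerivAt v (v' x) x) ∧
      (∀ x, HasDerivAt v' (v x - |v x| ^ (p - 2) * v x) x) ∧
      v 0 = 0 ∧ v' 0 = d) ∧
    (∀ v v' : ℝ → ℝ,
      (∀ x, HasDerivAt v (v' x) x) →
      (∀ x, HasDerivAt v' (v x - |v x| ^ (p - 2) * v x) x) →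
      v 0 = 0 → v' 0 = d →
      ∃ T > 0, ∀ x, v (x + T) = v x) := by
  constructor
  · obtain ⟨v, v', h1, h2, h3, h4⟩ := exists_solution_main hp d
    exact ⟨v, v', h1, fun x => by simpa [nl] using h2 x, h3, h4⟩
  · intro v v' h1 h2 h3 h4
    exact periodic_any hp hd h1 (fun x => by simpa [nl] using h2 x) h3 h4

end
end

section
/- Let p > 2 be a real number. The infimum of the Gagliardo–Nirenberg quotient F(v) = (∫_ℝ (v'² + v²) dx) / (∫_ℝ |v|^p dx)^(2/p) over all nonzero weakly differentiable v : ℝ → ℝ with v and v' square-integrable and v(x) = 0 for all x ≤ 0, equals the infimum of F over all nonzero weakly differentiable v : ℝ → ℝ with v and v' square-integrable. In other words, the best constants satisfy C_p(ℝ₊) = C_p(ℝ). -/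
open Real MeasureTheory Filter Topology

noncomputable def cutf : ℝ → ℝ := Real.smoothTransition

lemma cutf_hasDerivAt (x : ℝ) : HasDerivAt cutf (deriv cutf x) x :=
  ((Real.smoothTransition.contDiff (n := 1)).differentiable (by norm_num)).differentiableAt.hasDerivAt

lemma cutf_deriv_cont : Continuous (deriv cutf) :=
  ((Real.smoothTransition.contDiff (n := 1)).continuous_deriv le_rfl)

lemma cutf_deriv_zero_of_nonpos {x : ℝ} (hx : x ≤ 0) : deriv cutf x = 0 := by
  have h1 : Set.EqOn (deriv cutf) 0 (Set.Iio 0) := by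
    intro y hy
    have : deriv cutf y = deriv (fun _ : ℝ => (0:ℝ)) y := by
      apply Filter.EventuallyEq.deriv_eq
      filter_upwards [Iio_mem_nhds hy] with z hz
      exact Real.smoothTransition.zero_of_nonpos (le_of_lt hz)
    simpa using this
  have h2 : Set.EqOn (deriv cutf) 0 (closure (Set.Iio 0)) :=
    h1.closure cutf_deriv_cont continuous_const
  have := h2 (by rwa [closure_Iio] : x ∈ closure (Set.Iio (0:ℝ)))
  simpa using this

lemma cutf_deriv_zero_of_one_le {x : ℝ} (hx : 1 ≤ x) : deriv cutf x = 0 := by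
  have h1 : Set.EqOn (deriv cutf) 0 (Set.Ioi 1) := by
    intro y hy
    have : deriv cutf y = deriv (fun _ : ℝ => (1:ℝ)) y := by
      apply Filter.EventuallyEq.deriv_eq
      filter_upwards [Ioi_mem_nhds hy] with z hz
      exact Real.smoothTransition.one_of_one_le (le_of_lt hz)
    simpa using this
  have h2 : Set.EqOn (deriv cutf) 0 (closure (Set.Ioi 1)) :=
    h1.closure cutf_deriv_cont continuous_const
  have := h2 (by rwa [closure_Ioi] : x ∈ closure (Set.Ioi (1:ℝ)))
  simpa using this

lemma cutf_deriv_bound : ∃ C : ℝ, 0 ≤ C ∧ ∀ x, |deriv cutf x| ≤ C := by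
  obtain ⟨C, hC⟩ := (isCompact_Icc (a := (0:ℝ)) (b := 1)).exists_bound_of_continuousOn
    cutf_deriv_cont.continuousOn
  refine ⟨max C 0, le_max_right _ _, fun x => ?_⟩
  rcases le_or_gt x 0 with h | h
  · simp [cutf_deriv_zero_of_nonpos h]
  rcases le_or_gt 1 x with h' | h'
  · simp [cutf_deriv_zero_of_one_le h']
  · have := hC x ⟨le_of_lt h, le_of_lt h'⟩
    rw [Real.norm_eq_abs] at this
    exact le_trans this (le_max_left _ _)

lemma cutf_zero {x : ℝ} (hx : x ≤ 0) : cutf x = 0 :=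
  Real.smoothTransition.zero_of_nonpos hx

lemma cutf_nonneg (x : ℝ) : 0 ≤ cutf x := Real.smoothTransition.nonneg x

lemma cutf_le_one (x : ℝ) : cutf x ≤ 1 := Real.smoothTransition.le_one x

lemma cutf_one {x : ℝ} (hx : 1 ≤ x) : cutf x = 1 := Real.smoothTransition.one_of_one_le hx

lemma cutf_cont : Continuous cutf := Real.smoothTransition.continuous


-- boundedness of H^1 functions
lemma aux_bound (v v' : ℝ → ℝ) (hv : ∀ x, HasDerivAt v (v' x) x)
    (h2 : Integrable (fun x => (v x) ^ 2)) (h2' : Integrable (fun x => (v' x) ^ 2)) :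
    ∃ M : ℝ, 0 ≤ M ∧ ∀ x, (v x) ^ 2 ≤ M := by
  have hcont : Continuous v := by
    rw [continuous_iff_continuousAt]; exact fun x => (hv x).continuousAt
  have hv'meas : Measurable v' := by
    have : v' = deriv v := funext fun x => ((hv x).deriv).symm
    rw [this]; exact measurable_deriv v
  have hint : Integrable (fun x => 2 * v x * v' x) := by
    refine (h2.add h2').mono' ?_ ?_
    · exact ((continuous_const.mul hcont).aestronglyMeasurable.mul
        hv'meas.aestronglyMeasurable)
    · refine Eventually.of_forall fun x => ?_
      rw [Real.norm_eq_abs]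
      simp only [Pi.add_apply]
      refine abs_le.2 ⟨by nlinarith [sq_nonneg (v x + v' x)], by nlinarith [sq_nonneg (v x - v' x)]⟩
  have hftc : ∀ x : ℝ, v x ^ 2 - v 0 ^ 2 = ∫ t in (0:ℝ)..x, 2 * v t * v' t := by
    intro x
    rw [intervalIntegral.integral_eq_sub_of_hasDerivAt (fun t _ => ?_)
      (hint.intervalIntegrable)]
    have := (hv t).fun_pow 2
    exact this.congr_deriv (by push_cast; ring)
  refine ⟨v 0 ^ 2 + ∫ x, |2 * v x * v' x|, by positivity, fun x => ?_⟩
  have h1 : v x ^ 2 = v 0 ^ 2 + ∫ t in (0:ℝ)..x, 2 * v t * v' t := by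
    rw [← hftc x]; ring
  rw [h1]
  have h2 : |∫ t in (0:ℝ)..x, 2 * v t * v' t| ≤ ∫ x, |2 * v x * v' x| := by
    calc |∫ t in (0:ℝ)..x, 2 * v t * v' t| ≤ ∫ t in Set.uIoc (0:ℝ) x, |2 * v t * v' t| := by
          simpa only [Real.norm_eq_abs] using
            intervalIntegral.norm_integral_le_integral_norm_uIoc
              (f := fun t => 2 * v t * v' t) (a := (0:ℝ)) (b := x) (μ := volume)
      _ ≤ ∫ x, |2 * v x * v' x| :=
          setIntegral_le_integral hint.abs (Eventually.of_forall fun t => abs_nonneg _)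
  have := abs_le.1 h2
  linarith [this.2]


lemma aux_lp (p : ℝ) (hp : 2 < p) (v : ℝ → ℝ) (hc : Continuous v)
    (h2 : Integrable (fun x => (v x) ^ 2)) (M : ℝ) (hM : ∀ x, (v x) ^ 2 ≤ M) :
    Integrable (fun x => |v x| ^ p) := by
  set B : ℝ := max 1 (Real.sqrt M) with hB
  have hB1 : (1:ℝ) ≤ B := le_max_left _ _
  have hvB : ∀ x, |v x| ≤ B := by
    intro x
    have : |v x| = Real.sqrt ((v x) ^ 2) := (Real.sqrt_sq_eq_abs _).symm
    rw [this]
    exact le_trans (Real.sqrt_le_sqrt (hM x)) (le_max_right _ _)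
  have key : ∀ x, |v x| ^ p ≤ B ^ (p - 2) * (v x) ^ 2 := by
    intro x
    rcases eq_or_ne (v x) 0 with h | h
    · rw [h]
      simp only [abs_zero, Real.zero_rpow (by positivity : p ≠ 0)]
      positivity
    · have hpos : 0 < |v x| := abs_pos.2 h
      have e1 : |v x| ^ p = |v x| ^ (p - 2) * |v x| ^ (2:ℝ) := by
        rw [← Real.rpow_add hpos]; ring_nf
      have e2 : |v x| ^ (2:ℝ) = (v x) ^ 2 := by
        rw [show (2:ℝ) = ((2:ℕ):ℝ) by norm_num, Real.rpow_natCast, sq_abs]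
      rw [e1, e2]
      have : |v x| ^ (p - 2) ≤ B ^ (p - 2) :=
        Real.rpow_le_rpow (abs_nonneg _) (hvB x) (by linarith)
      have h2 : (0:ℝ) ≤ (v x) ^ 2 := sq_nonneg _
      exact mul_le_mul_of_nonneg_right this h2
  refine (h2.const_mul (B ^ (p - 2))).mono' ?_ ?_
  · exact (hc.abs.rpow_const fun x => Or.inr (by linarith)).aestronglyMeasurable
  · refine Eventually.of_forall fun x => ?_
    rw [Real.norm_eq_abs, abs_of_nonneg (Real.rpow_nonneg (abs_nonneg _) _)]
    exact key x

lemma aux_pos (p : ℝ) (hp : 2 < p) (v : ℝ → ℝ) (hc : Continuous v) (hv : v ≠ 0)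
    (hint : Integrable (fun x => |v x| ^ p)) : 0 < ∫ x, |v x| ^ p := by
  rw [integral_pos_iff_support_of_nonneg (fun x => Real.rpow_nonneg (abs_nonneg _) _) hint]
  obtain ⟨x0, hx0⟩ : ∃ x, v x ≠ 0 := by
    by_contra h; push_neg at h; exact hv (funext h)
  have hcont : Continuous (fun x => |v x| ^ p) :=
    hc.abs.rpow_const fun x => Or.inr (by linarith)
  have hopen : IsOpen (Function.support fun x => |v x| ^ p) := by
    have : (Function.support fun x => |v x| ^ p) = (fun x => |v x| ^ p) ⁻¹' {0}ᶜ := rfl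
    rw [this]
    exact hcont.isOpen_preimage _ (isOpen_compl_singleton)
  refine hopen.measure_pos volume ⟨x0, ?_⟩
  simp only [Function.mem_support]
  positivity


noncomputable def v0 : ℝ → ℝ := fun x => cutf x * cutf (2 - x)
noncomputable def v0' : ℝ → ℝ :=
  fun x => deriv cutf x * cutf (2 - x) + cutf x * -deriv cutf (2 - x)

lemma v0_hasDerivAt (x : ℝ) : HasDerivAt v0 (v0' x) x := by
  have h1 : HasDerivAt (fun x : ℝ => cutf (2 - x)) (-deriv cutf (2 - x)) x := by
    have := (cutf_hasDerivAt (2 - x)).comp x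
      ((hasDerivAt_id x).const_sub 2)
    simpa [Function.comp_def] using this
  exact (cutf_hasDerivAt x).mul h1



lemma v0_zero {x : ℝ} (hx : x ∉ Set.Icc (0:ℝ) 2) : v0 x = 0 := by
  simp only [Set.mem_Icc, not_and_or, not_le] at hx
  rcases hx with h | h
  · simp [v0, cutf_zero (le_of_lt h)]
  · simp [v0, cutf_zero (by linarith : 2 - x ≤ 0)]

lemma v0'_zero {x : ℝ} (hx : x ∉ Set.Icc (0:ℝ) 2) : v0' x = 0 := by
  simp only [Set.mem_Icc, not_and_or, not_le] at hx
  rcases hx with h | h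
  · simp [v0', cutf_deriv_zero_of_nonpos (le_of_lt h), cutf_zero (le_of_lt h)]
  · simp [v0', cutf_deriv_zero_of_nonpos (by linarith : 2 - x ≤ 0),
      cutf_zero (by linarith : 2 - x ≤ 0)]

lemma v0_sq_integrable : Integrable (fun x => (v0 x) ^ 2) := by
  refine Continuous.integrable_of_hasCompactSupport ?_ ?_
  · exact ((cutf_cont.mul (cutf_cont.comp (continuous_const.sub continuous_id))).pow 2)
  · refine HasCompactSupport.intro (isCompact_Icc (a := (0:ℝ)) (b := 2)) fun x hx => ?_
    simp [v0_zero hx]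

lemma v0'_sq_integrable : Integrable (fun x => (v0' x) ^ 2) := by
  refine Continuous.integrable_of_hasCompactSupport ?_ ?_
  · have : Continuous v0' :=
      (cutf_deriv_cont.mul (cutf_cont.comp (continuous_const.sub continuous_id))).add
        (cutf_cont.mul ((cutf_deriv_cont.comp (continuous_const.sub continuous_id)).neg))
    exact this.pow 2
  · refine HasCompactSupport.intro (isCompact_Icc (a := (0:ℝ)) (b := 2)) fun x hx => ?_
    simp [v0'_zero hx]

lemma v0_ne : v0 ≠ 0 := by
  intro h
  have : v0 1 = 0 := by rw [h]; rfl
  rw [v0] at this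
  simp only [show (2:ℝ) - 1 = 1 by norm_num] at this
  rw [show cutf 1 = 1 from Real.smoothTransition.one] at this
  norm_num at this

lemma v0_nonpos {x : ℝ} (hx : x ≤ 0) : v0 x = 0 := by
  simp [v0, Real.smoothTransition.zero_of_nonpos hx, cutf]



noncomputable def S1 (p : ℝ) : Set ℝ := {c : ℝ | ∃ v v' : ℝ → ℝ,
    (∀ x, HasDerivAt v (v' x) x) ∧
    Integrable (fun x => (v x) ^ 2) ∧ Integrable (fun x => (v' x) ^ 2) ∧
    v ≠ 0 ∧ (∀ x ≤ (0 : ℝ), v x = 0) ∧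
    c = (∫ x : ℝ, ((v' x) ^ 2 + (v x) ^ 2)) / (∫ x : ℝ, |v x| ^ p) ^ (2 / p)}

lemma S1_bddBelow (p : ℝ) : BddBelow (S1 p) := by
  refine ⟨0, fun c hc => ?_⟩
  obtain ⟨v, v', _, _, _, _, _, rfl⟩ := hc
  apply div_nonneg
  · exact integral_nonneg fun x => by positivity
  · exact Real.rpow_nonneg (integral_nonneg fun x => Real.rpow_nonneg (abs_nonneg _) _) _

lemma key (p : ℝ) (hp : 2 < p) (v v' : ℝ → ℝ)
    (hv : ∀ x, HasDerivAt v (v' x) x)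
    (h2 : Integrable (fun x => (v x) ^ 2)) (h2' : Integrable (fun x => (v' x) ^ 2))
    (hvne : v ≠ 0) :
    sInf (S1 p) ≤ (∫ x : ℝ, ((v' x) ^ 2 + (v x) ^ 2)) / (∫ x : ℝ, |v x| ^ p) ^ (2 / p) := by
  have hcont : Continuous v := by
    rw [continuous_iff_continuousAt]; exact fun x => (hv x).continuousAt
  have hv'meas : Measurable v' := by
    have : v' = deriv v := funext fun x => ((hv x).deriv).symm
    rw [this]; exact measurable_deriv v
  obtain ⟨M, hM0, hM⟩ := aux_bound v v' hv h2 h2'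
  have hLp : Integrable (fun x => |v x| ^ p) := aux_lp p hp v hcont h2 M hM
  have hI : 0 < ∫ x, |v x| ^ p := aux_pos p hp v hcont hvne hLp
  obtain ⟨C, hC0, hC⟩ := cutf_deriv_bound
  set w : ℕ → ℝ → ℝ := fun n x => v (x - n) * cutf x with hw
  set w' : ℕ → ℝ → ℝ := fun n x => v' (x - n) * cutf x + v (x - n) * deriv cutf x with hw'
  have hwderiv : ∀ n x, HasDerivAt (w n) (w' n x) x := by
    intro n x
    have h1 : HasDerivAt (fun y : ℝ => v (y - n)) (v' (x - n)) x := by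
      simpa [Function.comp_def] using (hv (x - n)).comp x ((hasDerivAt_id x).sub_const (n : ℝ))
    exact h1.mul (cutf_hasDerivAt x)
  -- translated integrabilities
  have hv2n : ∀ n : ℕ, Integrable (fun x => (v (x - (n:ℝ))) ^ 2) :=
    fun n => h2.comp_sub_right (n : ℝ)
  have hv'2n : ∀ n : ℕ, Integrable (fun x => (v' (x - (n:ℝ))) ^ 2) :=
    fun n => h2'.comp_sub_right (n : ℝ)
  have hwcont : ∀ n : ℕ, Continuous (w n) :=
    fun n => (hcont.comp (continuous_id.sub continuous_const)).mul cutf_cont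
  have hw'meas : ∀ n : ℕ, AEStronglyMeasurable (w' n) volume := by
    intro n
    have m1 : Measurable fun x : ℝ => v' (x - (n:ℝ)) :=
      hv'meas.comp (measurable_id.sub measurable_const)
    exact ((m1.aestronglyMeasurable.mul cutf_cont.aestronglyMeasurable).add
      (((hcont.comp (continuous_id.sub continuous_const)).mul
        cutf_deriv_cont).aestronglyMeasurable))
  have hwint : ∀ n : ℕ, Integrable (fun x => (w n x) ^ 2) := by
    intro n
    refine (hv2n n).mono' (((hwcont n).pow 2).aestronglyMeasurable) ?_
    refine Eventually.of_forall fun x => ?_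
    rw [Real.norm_eq_abs, abs_of_nonneg (sq_nonneg _)]
    have h1 := cutf_nonneg x; have h2 := cutf_le_one x
    have : (w n x) ^ 2 = (v (x - n)) ^ 2 * (cutf x) ^ 2 := by rw [hw]; ring
    rw [this]
    nlinarith [mul_nonneg (sq_nonneg (v (x - (n:ℝ)))) (by nlinarith : (0:ℝ) ≤ 1 - cutf x ^ 2)]
  have hw'int : ∀ n : ℕ, Integrable (fun x => (w' n x) ^ 2) := by
    intro n
    refine (((hv'2n n).const_mul 2).add (((hv2n n).const_mul (2 * C ^ 2)))).mono'
      (by simpa [sq, Pi.mul_def] using (hw'meas n).mul (hw'meas n)) ?_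
    refine Eventually.of_forall fun x => ?_
    rw [Real.norm_eq_abs, abs_of_nonneg (sq_nonneg _)]
    simp only [hw', Pi.add_apply]
    have hc1 : (0:ℝ) ≤ 1 - cutf x ^ 2 := by nlinarith [cutf_nonneg x, cutf_le_one x]
    have hd2 : (deriv cutf x) ^ 2 ≤ C ^ 2 := by
      nlinarith [hC x, abs_nonneg (deriv cutf x), sq_abs (deriv cutf x)]
    nlinarith [sq_nonneg (v' (x - (n:ℝ)) * cutf x - v (x - (n:ℝ)) * deriv cutf x),
      mul_nonneg (sq_nonneg (v' (x - (n:ℝ)))) hc1,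
      mul_nonneg (sq_nonneg (v (x - (n:ℝ)))) (by linarith : (0:ℝ) ≤ C ^ 2 - (deriv cutf x) ^ 2)]
  -- change of variables
  have hchg2 : ∀ n : ℕ, ∫ x, (w n x) ^ 2 = ∫ y, (v y * cutf (y + (n:ℝ))) ^ 2 := by
    intro n
    rw [← integral_sub_right_eq_self (fun y => (v y * cutf (y + (n:ℝ))) ^ 2) (n:ℝ)]
    congr 1; funext x; simp [hw]
  have hchgp : ∀ n : ℕ, ∫ x, |w n x| ^ p = ∫ y, |v y * cutf (y + (n:ℝ))| ^ p := by
    intro n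
    rw [← integral_sub_right_eq_self (fun y => |v y * cutf (y + (n:ℝ))| ^ p) (n:ℝ)]
    congr 1; funext x; simp [hw]
  have hchg' : ∀ n : ℕ, ∫ x, (w' n x) ^ 2
      = ∫ y, (v' y * cutf (y + (n:ℝ)) + v y * deriv cutf (y + (n:ℝ))) ^ 2 := by
    intro n
    rw [← integral_sub_right_eq_self
      (fun y => (v' y * cutf (y + (n:ℝ)) + v y * deriv cutf (y + (n:ℝ))) ^ 2) (n:ℝ)]
    congr 1; funext x; simp [hw']
  have hcutfn : ∀ y : ℝ, ∀ᶠ n : ℕ in atTop, cutf (y + (n:ℝ)) = 1 ∧ deriv cutf (y + (n:ℝ)) = 0 := by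
    intro y
    obtain ⟨N, hN⟩ := exists_nat_ge (1 - y)
    filter_upwards [eventually_ge_atTop N] with n hn
    have hyn : (1:ℝ) ≤ y + n := by
      have : (N:ℝ) ≤ n := Nat.cast_le.2 hn
      linarith
    exact ⟨cutf_one hyn, cutf_deriv_zero_of_one_le hyn⟩
  have h4 : Tendsto (fun n : ℕ => ∫ x, (w n x) ^ 2) atTop (𝓝 (∫ x, (v x) ^ 2)) := by
    simp only [hchg2]
    refine tendsto_integral_of_dominated_convergence (fun x => (v x) ^ 2)
      (fun n => ((hcont.mul (cutf_cont.comp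
        (continuous_id.add continuous_const))).pow 2).aestronglyMeasurable)
      h2 (fun n => ?_) ?_
    · refine Eventually.of_forall fun y => ?_
      rw [Real.norm_eq_abs, abs_of_nonneg (sq_nonneg _)]
      show (v y * cutf (y + (n:ℝ))) ^ 2 ≤ v y ^ 2
      nlinarith [mul_nonneg (sq_nonneg (v y))
        (by nlinarith [cutf_nonneg (y + (n:ℝ)), cutf_le_one (y + (n:ℝ))] :
          (0:ℝ) ≤ 1 - cutf (y + (n:ℝ)) ^ 2)]
    · refine Eventually.of_forall fun y => ?_
      refine tendsto_const_nhds.congr' ?_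
      filter_upwards [hcutfn y] with n hn
      rw [hn.1]; ring
  have h5 : Tendsto (fun n : ℕ => ∫ x, |w n x| ^ p) atTop (𝓝 (∫ x, |v x| ^ p)) := by
    simp only [hchgp]
    refine tendsto_integral_of_dominated_convergence (fun x => |v x| ^ p)
      (fun n => (((hcont.mul (cutf_cont.comp
        (continuous_id.add continuous_const))).abs.rpow_const
        (fun x => Or.inr (by linarith))).aestronglyMeasurable))
      hLp (fun n => ?_) ?_
    · refine Eventually.of_forall fun y => ?_
      rw [Real.norm_eq_abs, abs_of_nonneg (Real.rpow_nonneg (abs_nonneg _) _)]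
      show |v y * cutf (y + (n:ℝ))| ^ p ≤ |v y| ^ p
      refine Real.rpow_le_rpow (abs_nonneg _) ?_ (by linarith)
      rw [abs_mul]
      calc |v y| * |cutf (y + (n:ℝ))| ≤ |v y| * 1 := by
            refine mul_le_mul_of_nonneg_left ?_ (abs_nonneg _)
            rw [abs_of_nonneg (cutf_nonneg _)]; exact cutf_le_one _
        _ = |v y| := mul_one _
    · refine Eventually.of_forall fun y => ?_
      refine tendsto_const_nhds.congr' ?_
      filter_upwards [hcutfn y] with n hn
      rw [hn.1, mul_one]
  have h6 : Tendsto (fun n : ℕ => ∫ x, (w' n x) ^ 2) atTop (𝓝 (∫ x, (v' x) ^ 2)) := by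
    simp only [hchg']
    refine tendsto_integral_of_dominated_convergence
      (fun x => 2 * (v' x) ^ 2 + 2 * C ^ 2 * (v x) ^ 2)
      (fun n => ?_) ((h2'.const_mul 2).add (h2.const_mul (2 * C ^ 2))) (fun n => ?_) ?_
    · have m1 : AEStronglyMeasurable
          (fun y => v' y * cutf (y + (n:ℝ)) + v y * deriv cutf (y + (n:ℝ))) volume :=
        (hv'meas.aestronglyMeasurable.mul (cutf_cont.comp
          (continuous_id.add continuous_const)).aestronglyMeasurable).add
          ((hcont.mul (cutf_deriv_cont.comp
            (continuous_id.add continuous_const))).aestronglyMeasurable)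
      simpa [sq, Pi.mul_def] using m1.mul m1
    · refine Eventually.of_forall fun y => ?_
      rw [Real.norm_eq_abs, abs_of_nonneg (sq_nonneg _)]
      show (v' y * cutf (y + (n:ℝ)) + v y * deriv cutf (y + (n:ℝ))) ^ 2
        ≤ 2 * (v' y) ^ 2 + 2 * C ^ 2 * (v y) ^ 2
      have hc1 : (0:ℝ) ≤ 1 - cutf (y + (n:ℝ)) ^ 2 := by
        nlinarith [cutf_nonneg (y + (n:ℝ)), cutf_le_one (y + (n:ℝ))]
      have hd2 : (deriv cutf (y + (n:ℝ))) ^ 2 ≤ C ^ 2 := by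
        nlinarith [hC (y + (n:ℝ)), abs_nonneg (deriv cutf (y + (n:ℝ))),
          sq_abs (deriv cutf (y + (n:ℝ)))]
      nlinarith [sq_nonneg (v' y * cutf (y + (n:ℝ)) - v y * deriv cutf (y + (n:ℝ))),
        mul_nonneg (sq_nonneg (v' y)) hc1,
        mul_nonneg (sq_nonneg (v y))
          (by linarith : (0:ℝ) ≤ C ^ 2 - (deriv cutf (y + (n:ℝ))) ^ 2)]
    · refine Eventually.of_forall fun y => ?_
      refine tendsto_const_nhds.congr' ?_
      filter_upwards [hcutfn y] with n hn
      rw [hn.1, hn.2]; ring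
  -- combine
  have hnum : Tendsto (fun n : ℕ => ∫ x, ((w' n x) ^ 2 + (w n x) ^ 2)) atTop
      (𝓝 (∫ x, ((v' x) ^ 2 + (v x) ^ 2))) := by
    have e1 : ∀ n : ℕ, ∫ x, ((w' n x) ^ 2 + (w n x) ^ 2)
        = (∫ x, (w' n x) ^ 2) + ∫ x, (w n x) ^ 2 :=
      fun n => integral_add (hw'int n) (hwint n)
    have e2 : ∫ x, ((v' x) ^ 2 + (v x) ^ 2) = (∫ x, (v' x) ^ 2) + ∫ x, (v x) ^ 2 :=
      integral_add h2' h2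
    simp only [e1, e2]
    exact h6.add h4
  have hden : Tendsto (fun n : ℕ => (∫ x, |w n x| ^ p) ^ (2 / p)) atTop
      (𝓝 ((∫ x, |v x| ^ p) ^ (2 / p))) :=
    h5.rpow_const (Or.inr (by positivity))
  have hc : Tendsto (fun n : ℕ =>
      (∫ x, ((w' n x) ^ 2 + (w n x) ^ 2)) / (∫ x, |w n x| ^ p) ^ (2 / p)) atTop
      (𝓝 ((∫ x : ℝ, ((v' x) ^ 2 + (v x) ^ 2)) / (∫ x : ℝ, |v x| ^ p) ^ (2 / p))) :=
    hnum.div hden (ne_of_gt (Real.rpow_pos_of_pos hI _))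
  refine ge_of_tendsto hc ?_
  have hev : ∀ᶠ n : ℕ in atTop, 0 < ∫ x, |w n x| ^ p :=
    h5.eventually (eventually_gt_nhds hI)
  filter_upwards [hev] with n hn
  refine csInf_le (S1_bddBelow p) ?_
  refine ⟨w n, w' n, hwderiv n, hwint n, hw'int n, ?_, ?_, rfl⟩
  · intro h
    rw [show (fun x => |w n x| ^ p) = fun _ => (0:ℝ) from funext fun x => by
      rw [h]; simp [Real.zero_rpow (by positivity : p ≠ 0)]] at hn
    simp at hn
  · intro x hx
    simp [hw, cutf_zero hx]


noncomputable def S2 (p : ℝ) : Set ℝ := {c : ℝ | ∃ v v' : ℝ → ℝ,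
    (∀ x, HasDerivAt v (v' x) x) ∧
    Integrable (fun x => (v x) ^ 2) ∧ Integrable (fun x => (v' x) ^ 2) ∧
    v ≠ 0 ∧
    c = (∫ x : ℝ, ((v' x) ^ 2 + (v x) ^ 2)) / (∫ x : ℝ, |v x| ^ p) ^ (2 / p)}

lemma S1_nonempty (p : ℝ) : (S1 p).Nonempty :=
  ⟨_, v0, v0', v0_hasDerivAt, v0_sq_integrable, v0'_sq_integrable, v0_ne,
    fun _ hx => v0_nonpos hx, rfl⟩

lemma S1_subset_S2 (p : ℝ) : S1 p ⊆ S2 p := by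
  rintro c ⟨v, v', h1, h2, h3, h4, _, h6⟩
  exact ⟨v, v', h1, h2, h3, h4, h6⟩

lemma S2_bddBelow (p : ℝ) : BddBelow (S2 p) := by
  refine ⟨0, fun c hc => ?_⟩
  obtain ⟨v, v', _, _, _, _, rfl⟩ := hc
  apply div_nonneg
  · exact integral_nonneg fun x => by positivity
  · exact Real.rpow_nonneg (integral_nonneg fun x => Real.rpow_nonneg (abs_nonneg _) _) _

theorem stmt11 (p : ℝ) (hp : 2 < p) :
    sInf {c : ℝ | ∃ v v' : ℝ → ℝ,
        (∀ x, HasDerivAt v (v' x) x) ∧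
        Integrable (fun x => (v x) ^ 2) ∧ Integrable (fun x => (v' x) ^ 2) ∧
        v ≠ 0 ∧ (∀ x ≤ (0 : ℝ), v x = 0) ∧
        c = (∫ x : ℝ, ((v' x) ^ 2 + (v x) ^ 2)) / (∫ x : ℝ, |v x| ^ p) ^ (2 / p)} =
      sInf {c : ℝ | ∃ v v' : ℝ → ℝ,
        (∀ x, HasDerivAt v (v' x) x) ∧
        Integrable (fun x => (v x) ^ 2) ∧ Integrable (fun x => (v' x) ^ 2) ∧
        v ≠ 0 ∧
        c = (∫ x : ℝ, ((v' x) ^ 2 + (v x) ^ 2)) / (∫ x : ℝ, |v x| ^ p) ^ (2 / p)} := by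
  show sInf (S1 p) = sInf (S2 p)
  apply le_antisymm
  · refine le_csInf ((S1_nonempty p).mono (S1_subset_S2 p)) ?_
    rintro c ⟨v, v', hv, h2, h2', hvne, rfl⟩
    exact key p hp v v' hv h2 h2' hvne
  · exact csInf_le_csInf (S2_bddBelow p) (S1_nonempty p) (S1_subset_S2 p)
end

section
/- Let p > 2 be a real number, let ℓ > 0, and suppose u is a nonzero nonnegative minimizer of the Gagliardo–Nirenberg quotient F over H¹₀(0, ℓ): F(u) ≤ F(v) for all nonzero v ∈ H¹₀(0, ℓ). Then there exists λ > 0 such that w = λ·u is a weak solution of -w'' + w = |w|^(p-2)·w on (0, ℓ) with w(0) = w(ℓ) = 0, i.e. ∫_0^ℓ (w'·φ' + w·φ) dx = ∫_0^ℓ |w|^(p-2)·w·φ dx for every smooth compactly supported φ on (0, ℓ); and moreover the infimum of F equals ‖w‖_{L^p(0,ℓ)}^(p-2). -/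
open Real MeasureTheory

lemma my_integrableOn_of_bdd {ℓ : ℝ} {f : ℝ → ℝ}
    (hm : AEStronglyMeasurable f (volume.restrict (Set.Ioo 0 ℓ))) {C : ℝ}
    (hC : ∀ x ∈ Set.Ioo 0 ℓ, |f x| ≤ C) : IntegrableOn f (Set.Ioo 0 ℓ) := by
  haveI : IsFiniteMeasure (volume.restrict (Set.Ioo 0 ℓ)) :=
    ⟨by rw [Measure.restrict_apply_univ]; exact measure_Ioo_lt_top⟩
  exact (memLp_top_of_bound hm C (by
    filter_upwards [ae_restrict_mem measurableSet_Ioo] with x hx using hC x hx)).integrable le_top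

lemma my_integral_pos_aux {ℓ : ℝ} {f : ℝ → ℝ} (hf : ContinuousOn f (Set.Ioo 0 ℓ))
    (hnn : ∀ x ∈ Set.Ioo 0 ℓ, 0 ≤ f x) {x0 : ℝ} (hx0 : x0 ∈ Set.Ioo 0 ℓ) (hpos : 0 < f x0)
    (hint : IntegrableOn f (Set.Ioo 0 ℓ)) : 0 < ∫ x in Set.Ioo 0 ℓ, f x := by
  rw [setIntegral_pos_iff_support_of_nonneg_ae (by
    filter_upwards [ae_restrict_mem measurableSet_Ioo] with x hx using hnn x hx) hint]
  have hca : ContinuousAt f x0 := hf.continuousAt (isOpen_Ioo.mem_nhds hx0)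
  have hev : ∀ᶠ y in nhds x0, 0 < f y := hca (Ioi_mem_nhds hpos)
  obtain ⟨U, hUsub, hUopen, hxU⟩ := eventually_nhds_iff.mp hev
  have hs : U ∩ Set.Ioo 0 ℓ ⊆ Function.support f ∩ Set.Ioo 0 ℓ :=
    fun y hy => ⟨(hUsub y hy.1).ne', hy.2⟩
  exact lt_of_lt_of_le ((hUopen.inter isOpen_Ioo).measure_pos volume ⟨x0, hxU, hx0⟩)
    (measure_mono hs)

theorem stmt14 (p : ℝ) (hp : 2 < p) (ℓ : ℝ) (hℓ : 0 < ℓ) (u u' : ℝ → ℝ)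
    (hu_cont : ContinuousOn u (Set.Icc 0 ℓ))
    (hu_deriv : ∀ x ∈ Set.Ioo 0 ℓ, HasDerivAt u (u' x) x)
    (hu2 : IntegrableOn (fun x => (u x) ^ 2) (Set.Ioo 0 ℓ))
    (hu'2 : IntegrableOn (fun x => (u' x) ^ 2) (Set.Ioo 0 ℓ))
    (hu0 : u 0 = 0) (huℓ : u ℓ = 0)
    (hune : ∃ x ∈ Set.Ioo 0 ℓ, u x ≠ 0)
    (hunonneg : ∀ x ∈ Set.Icc 0 ℓ, 0 ≤ u x)
    (hmin : ∀ v v' : ℝ → ℝ,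
      ContinuousOn v (Set.Icc 0 ℓ) →
      (∀ x ∈ Set.Ioo 0 ℓ, HasDerivAt v (v' x) x) →
      IntegrableOn (fun x => (v x) ^ 2) (Set.Ioo 0 ℓ) →
      IntegrableOn (fun x => (v' x) ^ 2) (Set.Ioo 0 ℓ) →
      v 0 = 0 → v ℓ = 0 → (∃ x ∈ Set.Ioo 0 ℓ, v x ≠ 0) →
      (∫ x in Set.Ioo 0 ℓ, ((u' x) ^ 2 + (u x) ^ 2)) /
          (∫ x in Set.Ioo 0 ℓ, |u x| ^ p) ^ (2 / p) ≤
        (∫ x in Set.Ioo 0 ℓ, ((v' x) ^ 2 + (v x) ^ 2)) /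
          (∫ x in Set.Ioo 0 ℓ, |v x| ^ p) ^ (2 / p)) :
    ∃ lam : ℝ, 0 < lam ∧
      (∀ φ : ℝ → ℝ, ContDiff ℝ (⊤ : ℕ∞) φ → HasCompactSupport φ →
        tsupport φ ⊆ Set.Ioo 0 ℓ →
        (∫ x in Set.Ioo 0 ℓ, (lam * u' x * deriv φ x + lam * u x * φ x)) =
          ∫ x in Set.Ioo 0 ℓ, |lam * u x| ^ (p - 2) * (lam * u x) * φ x) ∧
      sInf {c : ℝ | ∃ v v' : ℝ → ℝ,
          ContinuousOn v (Set.Icc 0 ℓ) ∧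
          (∀ x ∈ Set.Ioo 0 ℓ, HasDerivAt v (v' x) x) ∧
          IntegrableOn (fun x => (v x) ^ 2) (Set.Ioo 0 ℓ) ∧
          IntegrableOn (fun x => (v' x) ^ 2) (Set.Ioo 0 ℓ) ∧
          v 0 = 0 ∧ v ℓ = 0 ∧ (∃ x ∈ Set.Ioo 0 ℓ, v x ≠ 0) ∧
          c = (∫ x in Set.Ioo 0 ℓ, ((v' x) ^ 2 + (v x) ^ 2)) /
                (∫ x in Set.Ioo 0 ℓ, |v x| ^ p) ^ (2 / p)} =
        (∫ x in Set.Ioo 0 ℓ, |lam * u x| ^ p) ^ ((p - 2) / p) := by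
  obtain ⟨x1, hx1, hux1⟩ := hune
  have hIoo : Set.Ioo 0 ℓ ⊆ Set.Icc 0 ℓ := Set.Ioo_subset_Icc_self
  have hux1' : 0 < u x1 := lt_of_le_of_ne (hunonneg x1 (hIoo hx1)) (Ne.symm hux1)
  have hp0 : (0:ℝ) < p := by linarith
  have hp2 : (0:ℝ) < p - 2 := by linarith
  haveI : IsFiniteMeasure (volume.restrict (Set.Ioo 0 ℓ)) :=
    ⟨by rw [Measure.restrict_apply_univ]; exact measure_Ioo_lt_top⟩
  obtain ⟨M, hM⟩ := isCompact_Icc.exists_bound_of_continuousOn hu_cont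
  have hM' : ∀ x ∈ Set.Ioo 0 ℓ, |u x| ≤ M := fun x hx => hM x (hIoo hx)
  have hM0 : 0 ≤ M := le_trans (norm_nonneg _) (hM 0 (Set.left_mem_Icc.2 hℓ.le))
  have hmu : AEStronglyMeasurable u (volume.restrict (Set.Ioo 0 ℓ)) :=
    (hu_cont.mono hIoo).aestronglyMeasurable measurableSet_Ioo
  have hmu' : AEStronglyMeasurable u' (volume.restrict (Set.Ioo 0 ℓ)) := by
    refine (measurable_deriv u).aestronglyMeasurable.congr ?_
    filter_upwards [ae_restrict_mem measurableSet_Ioo] with x hx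
    exact (hu_deriv x hx).deriv
  have hu'int : IntegrableOn u' (Set.Ioo 0 ℓ) :=
    ((memLp_two_iff_integrable_sq hmu').2 hu'2).integrable one_le_two
  have hnn : ∀ x ∈ Set.Ioo 0 ℓ, 0 ≤ u x := fun x hx => hunonneg x (hIoo hx)
  set A := ∫ x in Set.Ioo 0 ℓ, ((u' x) ^ 2 + (u x) ^ 2) with hA_def
  set D0 := ∫ x in Set.Ioo 0 ℓ, |u x| ^ p with hD0_def
  have hcontp : ContinuousOn (fun x => |u x| ^ p) (Set.Ioo 0 ℓ) :=
    ((hu_cont.mono hIoo).abs).rpow_const (fun x _ => Or.inr hp0.le)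
  have hintp : IntegrableOn (fun x => |u x| ^ p) (Set.Ioo 0 ℓ) := by
    refine my_integrableOn_of_bdd
      ((continuous_abs.rpow_const fun _ => Or.inr hp0.le).comp_aestronglyMeasurable hmu)
      (C := M ^ p) ?_
    intro x hx
    rw [abs_of_nonneg (rpow_nonneg (abs_nonneg _) _)]
    exact Real.rpow_le_rpow (abs_nonneg _) (hM' x hx) hp0.le
  have hD0pos : 0 < D0 :=
    my_integral_pos_aux hcontp (fun x _ => rpow_nonneg (abs_nonneg _) _) hx1
      (Real.rpow_pos_of_pos (abs_pos.2 hux1) p) hintp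
  have hApos : 0 < A := by
    have h2 : 0 < ∫ x in Set.Ioo 0 ℓ, (u x) ^ 2 :=
      my_integral_pos_aux ((hu_cont.mono hIoo).pow 2) (fun x _ => sq_nonneg _) hx1
        (by positivity) hu2
    have h3 : 0 ≤ ∫ x in Set.Ioo 0 ℓ, (u' x) ^ 2 := integral_nonneg fun x => sq_nonneg _
    have h4 : A = (∫ x in Set.Ioo 0 ℓ, (u' x) ^ 2) + ∫ x in Set.Ioo 0 ℓ, (u x) ^ 2 :=
      integral_add hu'2 hu2
    linarith
  have hD0p2 : (0:ℝ) < D0 ^ (2 / p) := Real.rpow_pos_of_pos hD0pos _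
  have hm_pos : 0 < A / D0 ^ (2 / p) := div_pos hApos hD0p2
  -- Key: Euler–Lagrange identity
  have key : ∀ φ : ℝ → ℝ, ContDiff ℝ (⊤ : ℕ∞) φ → HasCompactSupport φ →
      tsupport φ ⊆ Set.Ioo 0 ℓ →
      (∫ x in Set.Ioo 0 ℓ, (u' x * deriv φ x + u x * φ x)) =
        (A / D0) * ∫ x in Set.Ioo 0 ℓ, (|u x| ^ (p - 2) * u x * φ x) := by
    intro φ hφ hφc hφs
    have hφcont : Continuous φ := hφ.continuous
    have hφd : ∀ x, HasDerivAt φ (deriv φ x) x :=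
      fun x => ((hφ.differentiable (by simp)) x).hasDerivAt
    have hφ'cont : Continuous (deriv φ) := hφ.continuous_deriv (by exact_mod_cast le_top)
    obtain ⟨K, hK⟩ := hφcont.bounded_above_of_compact_support hφc
    obtain ⟨K', hK'⟩ := hφ'cont.bounded_above_of_compact_support hφc.deriv
    have hK0 : 0 ≤ K := le_trans (norm_nonneg _) (hK 0)
    have hφm : AEStronglyMeasurable φ (volume.restrict (Set.Ioo 0 ℓ)) :=
      hφcont.aestronglyMeasurable
    have hφ'm : AEStronglyMeasurable (deriv φ) (volume.restrict (Set.Ioo 0 ℓ)) :=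
      hφ'cont.aestronglyMeasurable
    -- integrability of all pieces
    have hint1 : Integrable (fun x => u' x * deriv φ x) (volume.restrict (Set.Ioo 0 ℓ)) := by
      have h := hu'int.bdd_mul hφ'm (Filter.Eventually.of_forall hK')
      exact h.congr (Filter.Eventually.of_forall fun x => mul_comm _ _)
    have hint2 : Integrable (fun x => u x * φ x) (volume.restrict (Set.Ioo 0 ℓ)) := by
      refine my_integrableOn_of_bdd (hmu.mul hφm) (C := M * K) ?_
      intro x hx
      rw [abs_mul]
      exact mul_le_mul (hM' x hx) (hK x) (abs_nonneg _) hM0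
    have hintB : Integrable (fun x => u' x * deriv φ x + u x * φ x)
        (volume.restrict (Set.Ioo 0 ℓ)) := hint1.add hint2
    have hintC : Integrable (fun x => (deriv φ x) ^ 2 + (φ x) ^ 2)
        (volume.restrict (Set.Ioo 0 ℓ)) := by
      refine my_integrableOn_of_bdd ((hφ'cont.pow 2).add (hφcont.pow 2)).aestronglyMeasurable
        (C := K' ^ 2 + K ^ 2) ?_
      intro x hx
      have h1 : (deriv φ x) ^ 2 ≤ K' ^ 2 := by
        rw [← sq_abs]; exact pow_le_pow_left₀ (abs_nonneg _) (hK' x) 2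
      have h2 : (φ x) ^ 2 ≤ K ^ 2 := by
        rw [← sq_abs]; exact pow_le_pow_left₀ (abs_nonneg _) (hK x) 2
      rw [abs_of_nonneg (by positivity)]
      linarith
    have hintI : Integrable (fun x => |u x| ^ (p - 2) * u x * φ x)
        (volume.restrict (Set.Ioo 0 ℓ)) := by
      refine my_integrableOn_of_bdd ?_ (C := M ^ (p - 2) * M * K) ?_
      · exact (((continuous_abs.rpow_const fun _ => Or.inr hp2.le).comp_aestronglyMeasurable
          hmu).mul hmu).mul hφm
      · intro x hx
        rw [abs_mul, abs_mul]
        have h1 : |(|u x| ^ (p - 2))| ≤ M ^ (p - 2) := by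
          rw [abs_of_nonneg (rpow_nonneg (abs_nonneg _) _)]
          exact Real.rpow_le_rpow (abs_nonneg _) (hM' x hx) hp2.le
        have h2 : |u x| ≤ M := hM' x hx
        have h3 : |φ x| ≤ K := hK x
        have := mul_le_mul (mul_le_mul h1 h2 (abs_nonneg _) (by positivity)) h3
          (abs_nonneg _) (by positivity)
        exact this
    set B := ∫ x in Set.Ioo 0 ℓ, (u' x * deriv φ x + u x * φ x) with hB_def
    set C2 := ∫ x in Set.Ioo 0 ℓ, ((deriv φ x) ^ 2 + (φ x) ^ 2) with hC2_def
    set I := ∫ x in Set.Ioo 0 ℓ, (|u x| ^ (p - 2) * u x * φ x) with hI_def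
    -- expansion of the numerator
    have hNt : ∀ t : ℝ, (∫ x in Set.Ioo 0 ℓ,
        ((u' x + t * deriv φ x) ^ 2 + (u x + t * φ x) ^ 2)) =
        A + (2 * t) * B + t ^ 2 * C2 := by
      intro t
      have he : (∫ x in Set.Ioo 0 ℓ, ((u' x + t * deriv φ x) ^ 2 + (u x + t * φ x) ^ 2)) =
          ∫ x in Set.Ioo 0 ℓ, (((u' x) ^ 2 + (u x) ^ 2) +
            ((2 * t) * (u' x * deriv φ x + u x * φ x) +
             t ^ 2 * ((deriv φ x) ^ 2 + (φ x) ^ 2))) :=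
        setIntegral_congr_fun measurableSet_Ioo fun x _ => by ring
      have hf1 : Integrable (fun x => (u' x) ^ 2 + (u x) ^ 2)
          (volume.restrict (Set.Ioo 0 ℓ)) := hu'2.add hu2
      have hf2a : Integrable (fun x => (2 * t) * (u' x * deriv φ x + u x * φ x))
          (volume.restrict (Set.Ioo 0 ℓ)) := hintB.const_mul _
      have hf2b : Integrable (fun x => t ^ 2 * ((deriv φ x) ^ 2 + (φ x) ^ 2))
          (volume.restrict (Set.Ioo 0 ℓ)) := hintC.const_mul _
      have hf2 : Integrable (fun x => (2 * t) * (u' x * deriv φ x + u x * φ x) +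
          t ^ 2 * ((deriv φ x) ^ 2 + (φ x) ^ 2))
          (volume.restrict (Set.Ioo 0 ℓ)) := hf2a.add hf2b
      rw [he, integral_add hf1 hf2, integral_add hf2a hf2b, integral_const_mul,
        integral_const_mul, hA_def, hB_def, hC2_def]
      ring
    have hNd : HasDerivAt (fun t : ℝ => ∫ x in Set.Ioo 0 ℓ,
        ((u' x + t * deriv φ x) ^ 2 + (u x + t * φ x) ^ 2)) (2 * B) 0 := by
      have h1 : HasDerivAt (fun t : ℝ => A + (2 * t) * B + t ^ 2 * C2) (2 * B) 0 := by
        have ha : HasDerivAt (fun t : ℝ => t * (2 * B)) (2 * B) 0 := hasDerivAt_mul_const _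
        have hb : HasDerivAt (fun t : ℝ => t ^ 2 * C2) 0 0 := by
          simpa using (hasDerivAt_pow 2 (0:ℝ)).mul_const C2
        have he : (fun t : ℝ => A + (2 * t) * B + t ^ 2 * C2) =
            fun t : ℝ => (A + t * (2 * B)) + t ^ 2 * C2 := funext fun t => by ring
        rw [he]
        have := (ha.const_add A).add hb; rw [add_zero] at this; exact this
      exact h1.congr_of_eventuallyEq (Filter.Eventually.of_forall fun t => (hNt t))
    -- derivative of the denominator integral
    have hDd : HasDerivAt (fun t : ℝ => ∫ x in Set.Ioo 0 ℓ, |u x + t * φ x| ^ p)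
        (p * I) 0 := by
      have main := hasDerivAt_integral_of_dominated_loc_of_deriv_le
        (μ := volume.restrict (Set.Ioo 0 ℓ)) (𝕜 := ℝ)
        (F := fun t x => |u x + t * φ x| ^ p)
        (F' := fun t x => p * |u x + t * φ x| ^ (p - 2) * (u x + t * φ x) * φ x)
        (x₀ := 0)
        (bound := fun _ => p * (M + K) ^ (p - 2) * (M + K) * K) (Metric.ball_mem_nhds (0:ℝ) one_pos)
        (Filter.Eventually.of_forall fun t =>
          (continuous_abs.rpow_const fun _ => Or.inr hp0.le).comp_aestronglyMeasurable
            (hmu.add (hφm.const_mul t)))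
        (by simpa using hintp.integrable)
        ((((continuous_abs.rpow_const fun _ => Or.inr hp2.le).comp_aestronglyMeasurable
            (hmu.add (hφm.const_mul 0))).const_mul p).mul
            (hmu.add (hφm.const_mul 0)) |>.mul hφm)
        (by
          filter_upwards [ae_restrict_mem measurableSet_Ioo] with x hx
          intro t ht
          have ht1 : |t| ≤ 1 := le_of_lt (by simpa [Real.dist_eq] using ht)
          have hy : |u x + t * φ x| ≤ M + K := by
            refine (abs_add_le _ _).trans (add_le_add (hM' x hx) ?_)
            rw [abs_mul]
            calc |t| * |φ x| ≤ 1 * K := mul_le_mul ht1 (hK x) (abs_nonneg _) one_pos.le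
              _ = K := one_mul K
          rw [Real.norm_eq_abs, abs_mul, abs_mul, abs_mul, abs_of_pos hp0,
            abs_of_nonneg (rpow_nonneg (abs_nonneg _) _)]
          have hMK : (0:ℝ) ≤ M + K := by linarith
          have h4 : |u x + t * φ x| ^ (p - 2) ≤ (M + K) ^ (p - 2) :=
            Real.rpow_le_rpow (abs_nonneg _) hy hp2.le
          have h5 : p * |u x + t * φ x| ^ (p - 2) * |u x + t * φ x| ≤
              p * (M + K) ^ (p - 2) * (M + K) :=
            mul_le_mul (mul_le_mul_of_nonneg_left h4 hp0.le) hy (abs_nonneg _)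
              (mul_nonneg hp0.le (rpow_nonneg hMK _))
          exact mul_le_mul h5 (hK x) (abs_nonneg _)
            (mul_nonneg (mul_nonneg hp0.le (rpow_nonneg hMK _)) hMK))
        (integrable_const _)
        (Filter.Eventually.of_forall fun x => by
          intro t _
          have hin : HasDerivAt (fun t : ℝ => u x + t * φ x) (φ x) t :=
            (hasDerivAt_mul_const (φ x)).const_add (u x)
          have hout := hasDerivAt_abs_rpow (u x + t * φ x) (p := p) (by linarith)
          exact hout.comp t hin)
      have hval : (∫ x in Set.Ioo 0 ℓ,
          (p * |u x + (0:ℝ) * φ x| ^ (p - 2) * (u x + (0:ℝ) * φ x) * φ x)) = p * I := by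
        have he : (∫ x in Set.Ioo 0 ℓ,
            (p * |u x + (0:ℝ) * φ x| ^ (p - 2) * (u x + (0:ℝ) * φ x) * φ x)) =
            ∫ x in Set.Ioo 0 ℓ, (p * (|u x| ^ (p - 2) * u x * φ x)) :=
          setIntegral_congr_fun measurableSet_Ioo fun x _ => by simp; ring
        rw [he, integral_const_mul]
      rw [← hval]
      exact main.2
    -- derivative of denominator ^ (2/p)
    have hD00 : (fun t : ℝ => ∫ x in Set.Ioo 0 ℓ, |u x + t * φ x| ^ p) 0 = D0 := by
      simp [hD0_def]
    have houter : HasDerivAt (fun z : ℝ => z ^ (2 / p)) ((2 / p) * D0 ^ (2 / p - 1))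
        ((fun t : ℝ => ∫ x in Set.Ioo 0 ℓ, |u x + t * φ x| ^ p) 0) := by
      rw [hD00]
      exact Real.hasDerivAt_rpow_const (Or.inl hD0pos.ne')
    have hpow : HasDerivAt (fun t : ℝ =>
        (∫ x in Set.Ioo 0 ℓ, |u x + t * φ x| ^ p) ^ (2 / p))
        ((2 / p) * D0 ^ (2 / p - 1) * (p * I)) 0 := by
      have := houter.comp 0 hDd; exact this
    -- the local min
    set m := A / D0 ^ (2 / p) with hm_def
    have hGd : HasDerivAt (fun t : ℝ =>
        (∫ x in Set.Ioo 0 ℓ, ((u' x + t * deriv φ x) ^ 2 + (u x + t * φ x) ^ 2)) -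
        m * (∫ x in Set.Ioo 0 ℓ, |u x + t * φ x| ^ p) ^ (2 / p))
        (2 * B - m * ((2 / p) * D0 ^ (2 / p - 1) * (p * I))) 0 := hNd.sub (hpow.const_mul m)
    have hδ : 0 < u x1 / (|φ x1| + 1) := div_pos hux1' (by positivity)
    have hloc : IsLocalMin (fun t : ℝ =>
        (∫ x in Set.Ioo 0 ℓ, ((u' x + t * deriv φ x) ^ 2 + (u x + t * φ x) ^ 2)) -
        m * (∫ x in Set.Ioo 0 ℓ, |u x + t * φ x| ^ p) ^ (2 / p)) 0 := by
      have hval0 : (∫ x in Set.Ioo 0 ℓ,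
          ((u' x + (0:ℝ) * deriv φ x) ^ 2 + (u x + (0:ℝ) * φ x) ^ 2)) -
          m * (∫ x in Set.Ioo 0 ℓ, |u x + (0:ℝ) * φ x| ^ p) ^ (2 / p) = 0 := by
        have h1 := hNt 0
        have h2 : (∫ x in Set.Ioo 0 ℓ, |u x + (0:ℝ) * φ x| ^ p) = D0 := by
          simp [hD0_def]
        rw [h1, h2, hm_def, div_mul_cancel₀ _ hD0p2.ne']
        ring
      filter_upwards [Metric.ball_mem_nhds (0:ℝ) hδ] with t ht
      beta_reduce
      rw [hval0]
      -- apply hmin to v = u + t φ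
      have htb : |t| < u x1 / (|φ x1| + 1) := by simpa [Real.dist_eq] using ht
      have hvcont : ContinuousOn (fun x => u x + t * φ x) (Set.Icc 0 ℓ) :=
        hu_cont.add ((hφcont.const_smul t).continuousOn)
      have hvderiv : ∀ x ∈ Set.Ioo 0 ℓ, HasDerivAt (fun x => u x + t * φ x)
          (u' x + t * deriv φ x) x :=
        fun x hx => (hu_deriv x hx).add ((hφd x).const_mul t)
      have hvm : AEStronglyMeasurable (fun x => u x + t * φ x)
          (volume.restrict (Set.Ioo 0 ℓ)) := hmu.add (hφm.const_mul t)
      have hv2 : IntegrableOn (fun x => (u x + t * φ x) ^ 2) (Set.Ioo 0 ℓ) := by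
        refine my_integrableOn_of_bdd ((hvm.mul hvm).congr
          (Filter.Eventually.of_forall fun x => (pow_two (u x + t * φ x)).symm))
          (C := (M + |t| * K) ^ 2) ?_
        intro x hx
        rw [abs_of_nonneg (sq_nonneg _), ← sq_abs]
        have : |u x + t * φ x| ≤ M + |t| * K := by
          refine (abs_add_le _ _).trans (add_le_add (hM' x hx) ?_)
          rw [abs_mul]
          exact mul_le_mul_of_nonneg_left (hK x) (abs_nonneg t)
        exact pow_le_pow_left₀ (abs_nonneg _) this 2
      have hv'2 : IntegrableOn (fun x => (u' x + t * deriv φ x) ^ 2) (Set.Ioo 0 ℓ) := by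
        have he : (fun x => (u' x + t * deriv φ x) ^ 2) = fun x =>
            (u' x) ^ 2 + ((2 * t) * (u' x * deriv φ x) + t ^ 2 * (deriv φ x) ^ 2) :=
          funext fun x => by ring
        rw [he]
        have hφ'2 : IntegrableOn (fun x => (deriv φ x) ^ 2) (Set.Ioo 0 ℓ) := by
          refine my_integrableOn_of_bdd (hφ'cont.pow 2).aestronglyMeasurable
            (C := K' ^ 2) ?_
          intro x hx
          rw [abs_of_nonneg (sq_nonneg _), ← sq_abs]
          exact pow_le_pow_left₀ (abs_nonneg _) (hK' x) 2
        exact hu'2.add ((hint1.const_mul _).add (hφ'2.const_mul _))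
      have hφ00 : φ 0 = 0 := image_eq_zero_of_notMem_tsupport fun h =>
        (lt_irrefl (0:ℝ)) (hφs h).1
      have hφℓ : φ ℓ = 0 := image_eq_zero_of_notMem_tsupport fun h =>
        (lt_irrefl ℓ) (hφs h).2
      have hv0 : u 0 + t * φ 0 = 0 := by rw [hu0, hφ00]; ring
      have hvℓ : u ℓ + t * φ ℓ = 0 := by rw [huℓ, hφℓ]; ring
      have hvne : ∃ x ∈ Set.Ioo 0 ℓ, u x + t * φ x ≠ 0 := by
        refine ⟨x1, hx1, ?_⟩
        have habs : |t * φ x1| < u x1 := by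
          rw [abs_mul]
          calc |t| * |φ x1| ≤ |t| * (|φ x1| + 1) :=
                mul_le_mul_of_nonneg_left (by linarith) (abs_nonneg t)
            _ < (u x1 / (|φ x1| + 1)) * (|φ x1| + 1) := by
                have : (0:ℝ) < |φ x1| + 1 := by positivity
                exact mul_lt_mul_of_pos_right htb this
            _ = u x1 := by field_simp
        intro heq
        have h2 : -(t * φ x1) = u x1 := by linarith
        have := neg_le_abs (t * φ x1)
        linarith
      have h := hmin (fun x => u x + t * φ x) (fun x => u' x + t * deriv φ x)
        hvcont hvderiv hv2 hv'2 hv0 hvℓ hvne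
      -- h : m ≤ N t / (D t)^(2/p)
      have hDt0 : (0:ℝ) ≤ ∫ x in Set.Ioo 0 ℓ, |u x + t * φ x| ^ p :=
        integral_nonneg fun x => rpow_nonneg (abs_nonneg _) _
      rcases eq_or_lt_of_le (rpow_nonneg hDt0 (2 / p)) with hzero | hposD
      · rw [← hzero, div_zero] at h
        linarith [hm_pos]
      · have := (le_div_iff₀ hposD).mp h
        linarith
    have hEL := hloc.hasDerivAt_eq_zero hGd
    -- derive B = (A / D0) * I
    have e1 : D0 ^ (2 / p - 1) = D0 ^ (2 / p) / D0 := by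
      rw [Real.rpow_sub hD0pos, Real.rpow_one]
    rw [hm_def, e1] at hEL
    have hX : D0 ^ (2 / p) ≠ 0 := hD0p2.ne'
    field_simp at hEL
    rw [div_mul_eq_mul_div, eq_div_iff hD0pos.ne']
    have h7 : (2 * p * D0 ^ (2 / p)) * (B * D0 - A * I) = 0 := by
      linear_combination (p * D0 ^ (2 / p)) * hEL
    have h8 : B * D0 - A * I = 0 := by
      rcases mul_eq_zero.mp h7 with h | h
      · exact absurd h (by positivity)
      · exact h
    linarith
  -- construct lam
  have hlam_pos : (0:ℝ) < (A / D0) ^ (p - 2)⁻¹ :=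
    Real.rpow_pos_of_pos (div_pos hApos hD0pos) _
  have hlam_pow : ((A / D0) ^ (p - 2)⁻¹) ^ (p - 2) = A / D0 :=
    Real.rpow_inv_rpow (div_pos hApos hD0pos).le (ne_of_gt hp2)
  set lam := (A / D0) ^ (p - 2)⁻¹ with hlam_def
  refine ⟨lam, hlam_pos, ?_, ?_⟩
  · -- weak equation
    intro φ hφ hφc hφs
    have hk := key φ hφ hφc hφs
    have hL : (∫ x in Set.Ioo 0 ℓ, (lam * u' x * deriv φ x + lam * u x * φ x)) =
        lam * ∫ x in Set.Ioo 0 ℓ, (u' x * deriv φ x + u x * φ x) := by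
      rw [← integral_const_mul]
      exact setIntegral_congr_fun measurableSet_Ioo fun x _ => by ring
    have hR : (∫ x in Set.Ioo 0 ℓ, |lam * u x| ^ (p - 2) * (lam * u x) * φ x) =
        (lam ^ (p - 2) * lam) * ∫ x in Set.Ioo 0 ℓ, (|u x| ^ (p - 2) * u x * φ x) := by
      rw [← integral_const_mul]
      refine setIntegral_congr_fun measurableSet_Ioo fun x _ => ?_
      rw [abs_mul, abs_of_pos hlam_pos, Real.mul_rpow hlam_pos.le (abs_nonneg _)]
      ring
    rw [hL, hR, hk, hlam_pow]
    ring
  · -- the infimum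
    have hmem : A / D0 ^ (2 / p) ∈ {c : ℝ | ∃ v v' : ℝ → ℝ,
        ContinuousOn v (Set.Icc 0 ℓ) ∧
        (∀ x ∈ Set.Ioo 0 ℓ, HasDerivAt v (v' x) x) ∧
        IntegrableOn (fun x => (v x) ^ 2) (Set.Ioo 0 ℓ) ∧
        IntegrableOn (fun x => (v' x) ^ 2) (Set.Ioo 0 ℓ) ∧
        v 0 = 0 ∧ v ℓ = 0 ∧ (∃ x ∈ Set.Ioo 0 ℓ, v x ≠ 0) ∧
        c = (∫ x in Set.Ioo 0 ℓ, ((v' x) ^ 2 + (v x) ^ 2)) /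
              (∫ x in Set.Ioo 0 ℓ, |v x| ^ p) ^ (2 / p)} :=
      ⟨u, u', hu_cont, hu_deriv, hu2, hu'2, hu0, huℓ, ⟨x1, hx1, hux1⟩, by
        rw [hA_def, hD0_def]⟩
    have hlb : ∀ c ∈ {c : ℝ | ∃ v v' : ℝ → ℝ,
        ContinuousOn v (Set.Icc 0 ℓ) ∧
        (∀ x ∈ Set.Ioo 0 ℓ, HasDerivAt v (v' x) x) ∧
        IntegrableOn (fun x => (v x) ^ 2) (Set.Ioo 0 ℓ) ∧
        IntegrableOn (fun x => (v' x) ^ 2) (Set.Ioo 0 ℓ) ∧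
        v 0 = 0 ∧ v ℓ = 0 ∧ (∃ x ∈ Set.Ioo 0 ℓ, v x ≠ 0) ∧
        c = (∫ x in Set.Ioo 0 ℓ, ((v' x) ^ 2 + (v x) ^ 2)) /
              (∫ x in Set.Ioo 0 ℓ, |v x| ^ p) ^ (2 / p)},
        A / D0 ^ (2 / p) ≤ c := by
      rintro c ⟨v, v', h1, h2, h3, h4, h5, h6, h7, rfl⟩
      exact hmin v v' h1 h2 h3 h4 h5 h6 h7
    have hsinf : sInf {c : ℝ | ∃ v v' : ℝ → ℝ,
        ContinuousOn v (Set.Icc 0 ℓ) ∧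
        (∀ x ∈ Set.Ioo 0 ℓ, HasDerivAt v (v' x) x) ∧
        IntegrableOn (fun x => (v x) ^ 2) (Set.Ioo 0 ℓ) ∧
        IntegrableOn (fun x => (v' x) ^ 2) (Set.Ioo 0 ℓ) ∧
        v 0 = 0 ∧ v ℓ = 0 ∧ (∃ x ∈ Set.Ioo 0 ℓ, v x ≠ 0) ∧
        c = (∫ x in Set.Ioo 0 ℓ, ((v' x) ^ 2 + (v x) ^ 2)) /
              (∫ x in Set.Ioo 0 ℓ, |v x| ^ p) ^ (2 / p)} = A / D0 ^ (2 / p) :=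
      le_antisymm (csInf_le ⟨_, hlb⟩ hmem) (le_csInf ⟨_, hmem⟩ hlb)
    rw [hsinf]
    have hJ : (∫ x in Set.Ioo 0 ℓ, |lam * u x| ^ p) = lam ^ p * D0 := by
      rw [hD0_def, ← integral_const_mul]
      refine setIntegral_congr_fun measurableSet_Ioo fun x _ => ?_
      rw [abs_mul, abs_of_pos hlam_pos, Real.mul_rpow hlam_pos.le (abs_nonneg _)]
    rw [hJ]
    have h1 : (lam ^ p * D0) ^ ((p - 2) / p) =
        (lam ^ p) ^ ((p - 2) / p) * D0 ^ ((p - 2) / p) :=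
      Real.mul_rpow (rpow_nonneg hlam_pos.le _) hD0pos.le
    have h2 : (lam ^ p) ^ ((p - 2) / p) = lam ^ (p - 2) := by
      rw [← Real.rpow_mul hlam_pos.le, mul_comm, div_mul_cancel₀ _ hp0.ne']
    have h3 : D0 ^ ((p - 2) / p) = D0 / D0 ^ (2 / p) := by
      rw [show (p - 2) / p = 1 - 2 / p by rw [sub_div, div_self hp0.ne'],
        Real.rpow_sub hD0pos, Real.rpow_one]
    rw [h1, h2, h3, hlam_pow]
    field_simp
end
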